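/- arXiv:1406.6047 — 9 statements merged into one kernel-verified Lean document; each statement's English description precedes it below -/
import Mathlib

section
/- In any biconnected (2-vertex-connected) undirected graph B with vertex set V_B and edge set E_B, for any two distinct vertices x, y ∈ V_B, there are at least |E_B| - |V_B| + 1 distinct simple paths from x to y. -/
namespace Stmt0Aux

open SimpleGraph

set_option linter.unusedSectionVars false

variable {V : Type} [DecidableEq V] {G : SimpleGraph V}

/-- weight of a walk -/
def wt (w : Sym2 V → ZMod 2) {a b : V} (p : G.Walk a b) : ZMod 2 :=
  (p.edges.map w).sum

@[simp] lemma wt_nil (w : Sym2 V → ZMod 2) {a : V} :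
    wt w (Walk.nil : G.Walk a a) = 0 := rfl

@[simp] lemma wt_cons (w : Sym2 V → ZMod 2) {a b c : V} (h : G.Adj a b) (p : G.Walk b c) :
    wt w (Walk.cons h p) = w s(a, b) + wt w p := rfl

@[simp] lemma wt_append (w : Sym2 V → ZMod 2) {a b c : V} (p : G.Walk a b) (q : G.Walk b c) :
    wt w (p.append q) = wt w p + wt w q := by
  simp [wt, Walk.edges_append]

@[simp] lemma wt_reverse (w : Sym2 V → ZMod 2) {a b : V} (p : G.Walk a b) :
    wt w p.reverse = wt w p := by
  simp [wt, Walk.edges_reverse, List.sum_reverse]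

lemma isPath_append {a b c : V} {p : G.Walk a b} {q : G.Walk b c}
    (hp : p.IsPath) (hq : q.IsPath) (h : ∀ t, t ∈ p.support → t ∈ q.support → t = b) :
    (p.append q).IsPath := by
  rw [Walk.isPath_def, Walk.support_append, List.nodup_append]
  refine ⟨hp.support_nodup, (List.tail_sublist _).nodup hq.support_nodup, ?_⟩
  intro t ht t' ht' htt'
  rw [← htt'] at ht'
  have htq : t ∈ q.support := List.mem_of_mem_tail ht'
  have : t = b := h t ht htq
  subst this
  have := hq.support_nodup
  rw [q.support_eq_cons] at this
  exact (List.nodup_cons.mp this).1 ht'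

lemma eq_of_mem_append_support {a b c : V} {p : G.Walk a b} {q : G.Walk b c}
    (h : (p.append q).IsPath) :
    ∀ t, t ∈ p.support → t ∈ q.support → t = b := by
  intro t ht htq
  have hnd := h.support_nodup
  rw [Walk.support_append, List.nodup_append] at hnd
  by_contra hne
  have : t ∈ q.support.tail := by
    rw [q.support_eq_cons, List.mem_cons] at htq
    exact htq.resolve_left hne
  exact hnd.2.2 t ht t this rfl

lemma exists_first_split {a b : V} (W : G.Walk a b) (S : V → Prop) [DecidablePred S]
    (hex : ∃ z ∈ W.support, S z) :
    ∃ (c : V) (W₁ : G.Walk a c) (W₂ : G.Walk c b),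
      W₁.append W₂ = W ∧ S c ∧ (∀ z ∈ W₁.support, S z → z = c) ∧ c ∉ W₁.support.dropLast := by
  induction W with
  | @nil u =>
    refine ⟨u, Walk.nil, Walk.nil, rfl, by simpa using hex, ?_, by simp⟩
    intro z hz _; simpa using hz
  | @cons u v b h W ih =>
    by_cases hSa : S u
    · exact ⟨u, Walk.nil, Walk.cons h W, rfl, hSa, by intro z hz _; simpa using hz, by simp⟩
    · have hex' : ∃ z ∈ W.support, S z := by
        obtain ⟨z, hz, hSz⟩ := hex
        rw [Walk.support_cons, List.mem_cons] at hz
        rcases hz with rfl | hz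
        · exact absurd hSz hSa
        · exact ⟨z, hz, hSz⟩
      obtain ⟨c, W₁, W₂, happ, hSc, hfirst, hnd⟩ := ih hex'
      refine ⟨c, Walk.cons h W₁, W₂, by rw [Walk.cons_append, happ], hSc, ?_, ?_⟩
      · intro z hz hSz
        rw [Walk.support_cons, List.mem_cons] at hz
        rcases hz with rfl | hz
        · exact absurd hSz hSa
        · exact hfirst z hz hSz
      · rw [Walk.support_cons, List.dropLast_cons_of_ne_nil W₁.support_ne_nil]
        rw [List.mem_cons]
        rintro (hc | hc)
        · exact hSa (hc ▸ hSc)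
        · exact hnd hc

/-- In a walk `W₁ : a → c` with `c ∉ dropLast`, `c` occurs exactly once (at the end). -/
lemma support_once {a c : V} (W₁ : G.Walk a c) (hnd : c ∉ W₁.support.dropLast) :
    W₁.support.count c = 1 := by
  have h1 : W₁.support = W₁.support.dropLast ++ [c] := by
    conv_lhs => rw [← List.dropLast_append_getLast W₁.support_ne_nil]
    rw [W₁.getLast_support]
  rw [h1, List.count_append]
  simp [List.count_eq_zero_of_not_mem hnd]


lemma edge_end {v u : V} (q : G.Walk v u) (hq : q.IsPath) (he : s(u, v) ∈ q.edges) :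
    q.length = 1 := by
  cases q with
  | nil => simp at he
  | @cons v w u h' q' =>
    rw [Walk.edges_cons, List.mem_cons] at he
    rcases he with he | he
    · -- s(u,v) = s(v,w)
      have hadj : G.Adj u v := by
        rw [← SimpleGraph.mem_edgeSet]
        exact (Walk.cons h' q').edges_subset_edgeSet (by rw [he]; simp [Walk.edges_cons])
      rw [Sym2.eq_iff] at he
      rcases he with ⟨rfl, rfl⟩ | ⟨rfl, -⟩
      · exact absurd rfl hadj.ne
      · -- u = w, q' : u → u is a path, hence nil
        cases q' with
        | nil => simp
        | @cons _ w' _ h'' q'' =>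
          exfalso
          have hnd := hq.support_nodup
          rw [Walk.support_cons, List.nodup_cons] at hnd
          have hnd2 := hnd.2
          rw [Walk.support_cons, List.nodup_cons] at hnd2
          exact hnd2.1 (Walk.end_mem_support q'')
    · exfalso
      have hv : v ∈ q'.support := Walk.snd_mem_support_of_mem_edges q' he
      have hnd := hq.support_nodup
      rw [Walk.support_cons, List.nodup_cons] at hnd
      exact hnd.1 hv

lemma closed_walk_even (w : Sym2 V → ZMod 2)
    (hcyc : ∀ (c : V) (p : G.Walk c c), p.IsCycle → wt w p = 0) :
    ∀ (n : ℕ) (u : V) (p : G.Walk u u), p.length ≤ n → wt w p = 0 := by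
  intro n
  induction n with
  | zero =>
    intro u p hp
    cases p with
    | nil => simp
    | cons h q => simp [Walk.length_cons] at hp
  | succ n ih =>
    intro u p hp
    cases p with
    | nil => simp
    | @cons u v _ h q =>
      by_cases hnd : q.support.Nodup
      · have hqp : q.IsPath := (Walk.isPath_def q).mpr hnd
        by_cases he : s(u, v) ∈ q.edges
        · have hlen : q.length = 1 := edge_end q hqp he
          cases q with
          | nil => simp at hlen
          | @cons _ w' _ h₂ q₂ =>
            cases q₂ with
            | nil =>
              rw [wt_cons, wt_cons, wt_nil, add_zero, Sym2.eq_swap (a := v)]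
              exact CharTwo.add_self_eq_zero _
            | cons h₃ q₃ => simp [Walk.length_cons] at hlen
        · exact hcyc _ _ ((Walk.cons_isCycle_iff q h).mpr ⟨hqp, he⟩)
      · -- there is a duplicated vertex a in q.support
        have : ∃ a, 2 ≤ q.support.count a := by
          by_contra hc
          push_neg at hc
          exact hnd (List.nodup_iff_count_le_one.mpr fun a => by
            have := hc a; omega)
        obtain ⟨a, ha2⟩ := this
        have hamem : a ∈ q.support := List.count_pos_iff.mp (by omega)
        obtain ⟨c, r, s, happ, hc, -, hnd1⟩ :=
          exists_first_split q (· = a) ⟨a, hamem, rfl⟩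
        rw [← hc] at ha2
        have hcount : q.support.count c = 1 + s.support.tail.count c := by
          rw [← happ, Walk.support_append, List.count_append, support_once r hnd1]
        have has : c ∈ s.support.tail := by
          rw [hcount] at ha2
          exact List.count_pos_iff.mp (by omega)
        cases s with
        | nil => simp at has
        | @cons _ w₃ _ h₃ s₁ =>
          rw [Walk.support_cons, List.tail_cons] at has
          obtain ⟨c', e, f, happ₂, hc', -, -⟩ :=
            exists_first_split s₁ (· = c) ⟨c, has, rfl⟩
          subst hc'
          subst happ₂
          -- p = cons h (r ++ cons h₃ (e ++ f))
          have hlen : q.length = r.length + (1 + (e.length + f.length)) := by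
            rw [← happ]
            simp [Walk.length_append, Walk.length_cons]
            omega
          have hwc₁ : wt w (Walk.cons h₃ e) = 0 := by
            apply ih
            rw [Walk.length_cons]
            rw [Walk.length_cons] at hp
            omega
          have hwc₂ : wt w (Walk.cons h (r.append f)) = 0 := by
            apply ih
            rw [Walk.length_cons, Walk.length_append]
            rw [Walk.length_cons] at hp
            omega
          have hq : wt w q = wt w r + (w s(c', w₃) + (wt w e + wt w f)) := by
            rw [← happ]
            simp
          rw [wt_cons, hq]
          rw [wt_cons] at hwc₁ hwc₂
          rw [wt_append] at hwc₂
          linear_combination hwc₁ + hwc₂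

/-! ### Avoid-form connectivity and a Menger-type lemma -/

/-- 2-connectivity in "avoid" form. -/
def Avoid (G : SimpleGraph V) : Prop :=
  ∀ (v a b : V), a ≠ v → b ≠ v → ∃ p : G.Walk a b, v ∉ p.support

section Menger

variable [Fintype V]

lemma exists_third (hcard : 3 ≤ Fintype.card V) (a b : V) : ∃ c : V, c ≠ a ∧ c ≠ b := by
  by_contra hcon
  push_neg at hcon
  have hsub : (Finset.univ : Finset V) ⊆ {a, b} := by
    intro c _
    rcases eq_or_ne c a with rfl | hca
    · simp
    · simp [hcon c hca]
  have := Finset.card_le_card hsub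
  have h2 : ({a, b} : Finset V).card ≤ 2 := Finset.card_insert_le _ _ |>.trans (by simp)
  rw [Finset.card_univ] at this
  omega

lemma avoid_reachable (hA : Avoid G) (hcard : 3 ≤ Fintype.card V) (a b : V) :
    Nonempty (G.Walk a b) := by
  rcases eq_or_ne a b with rfl | hab
  · exact ⟨Walk.nil⟩
  · obtain ⟨c, hca, hcb⟩ := exists_third hcard a b
    obtain ⟨p, -⟩ := hA c a b (Ne.symm hca) (Ne.symm hcb)
    exact ⟨p⟩

/-- Helper for menger2: the case where `b` lies on one of the two paths. -/
lemma menger2_on_path {a c b : V} {P₁ P₂ : G.Walk a c}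
    (hP₁ : P₁.IsPath) (hP₂ : P₂.IsPath)
    (hdisj : ∀ t, t ∈ P₁.support → t ∈ P₂.support → t = a ∨ t = c)
    (hb₁ : b ∈ P₁.support) (hb₂ : b ∉ P₂.support) (hbc : b ≠ c) (hadj : G.Adj c b) :
    ∃ (P Q : G.Walk a b), P.IsPath ∧ Q.IsPath ∧
      ∀ t, t ∈ P.support → t ∈ Q.support → t = a ∨ t = b := by
  obtain ⟨b', A₁, A₂, happ, hb', hfirst, -⟩ := exists_first_split P₁ (· = b) ⟨b, hb₁, rfl⟩
  subst hb'
  rw [← happ] at hP₁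
  have hA₁ : A₁.IsPath := hP₁.of_append_left
  have hcA₁ : c ∉ A₁.support := by
    intro hc
    have hcA₂ : c ∈ A₂.support.tail := by
      have : c ∈ A₂.support := Walk.end_mem_support _
      rw [A₂.support_eq_cons, List.mem_cons] at this
      exact this.resolve_left (Ne.symm hbc)
    have hnd := hP₁.support_nodup
    rw [Walk.support_append, List.nodup_append] at hnd
    exact hnd.2.2 c hc c hcA₂ rfl
  refine ⟨A₁, P₂.append (Walk.cons hadj Walk.nil), hA₁, ?_, ?_⟩
  · apply isPath_append hP₂ (by simp [Walk.isPath_def, hbc.symm])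
    intro t ht ht'
    simp only [Walk.support_cons, Walk.support_nil, List.mem_cons, List.mem_singleton] at ht'
    rcases ht' with rfl | rfl | h'
    · rfl
    · exact absurd ht hb₂
    · simp at h'
  · intro t ht ht'
    rw [Walk.mem_support_append_iff] at ht'
    have htP₁ : t ∈ P₁.support := by
      rw [← happ, Walk.mem_support_append_iff]; exact Or.inl ht
    rcases ht' with ht' | ht'
    · rcases hdisj t htP₁ ht' with rfl | rfl
      · exact Or.inl rfl
      · exact absurd ht hcA₁
    · simp only [Walk.support_cons, Walk.support_nil, List.mem_cons, List.mem_singleton] at ht'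
      rcases ht' with rfl | rfl | h'
      · exact absurd ht hcA₁
      · exact Or.inr rfl
      · simp at h'

/-- Helper for menger2: the rerouting case. -/
lemma menger2_reroute {a c b z : V} {P₁ P₂ : G.Walk a c} {W₁ : G.Walk b z}
    (hP₁ : P₁.IsPath) (hP₂ : P₂.IsPath)
    (hdisj : ∀ t, t ∈ P₁.support → t ∈ P₂.support → t = a ∨ t = c)
    (hb₁ : b ∉ P₁.support) (hb₂ : b ∉ P₂.support) (hadj : G.Adj c b)
    (hW₁ : W₁.IsPath) (hcW₁ : c ∉ W₁.support)
    (hz : z ∈ P₁.support)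
    (hW : ∀ t ∈ W₁.support, (t ∈ P₁.support ∨ t ∈ P₂.support) → t = z) :
    ∃ (P Q : G.Walk a b), P.IsPath ∧ Q.IsPath ∧
      ∀ t, t ∈ P.support → t ∈ Q.support → t = a ∨ t = b := by
  have hzc : z ≠ c := fun h => hcW₁ (h ▸ Walk.end_mem_support W₁)
  obtain ⟨z', A₁, A₂, happ, hz', hfirst, -⟩ := exists_first_split P₁ (· = z) ⟨z, hz, rfl⟩
  subst hz'
  rw [← happ] at hP₁
  have hA₁ : A₁.IsPath := hP₁.of_append_left
  have hsubA₁ : ∀ t, t ∈ A₁.support → t ∈ P₁.support := by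
    intro t ht; rw [← happ, Walk.mem_support_append_iff]; exact Or.inl ht
  have hcA₁ : c ∉ A₁.support := by
    intro hc
    have hcA₂ : c ∈ A₂.support.tail := by
      have : c ∈ A₂.support := Walk.end_mem_support _
      rw [A₂.support_eq_cons, List.mem_cons] at this
      exact this.resolve_left (Ne.symm hzc)
    have hnd := hP₁.support_nodup
    rw [Walk.support_append, List.nodup_append] at hnd
    exact hnd.2.2 c hc c hcA₂ rfl
  refine ⟨A₁.append W₁.reverse, P₂.append (Walk.cons hadj Walk.nil), ?_, ?_, ?_⟩
  · apply isPath_append hA₁ hW₁.reverse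
    intro t ht ht'
    rw [Walk.support_reverse, List.mem_reverse] at ht'
    exact hW t ht' (Or.inl (hsubA₁ t ht))
  · apply isPath_append hP₂ (by simp [Walk.isPath_def, hadj.ne])
    intro t ht ht'
    simp only [Walk.support_cons, Walk.support_nil, List.mem_cons, List.mem_singleton] at ht'
    rcases ht' with rfl | rfl | h'
    · rfl
    · exact absurd ht hb₂
    · simp at h'
  · intro t ht ht'
    rw [Walk.mem_support_append_iff] at ht ht'
    have ht'' : t ∈ P₂.support ∨ t = b := by
      rcases ht' with h' | h'
      · exact Or.inl h'
      · simp only [Walk.support_cons, Walk.support_nil, List.mem_cons, List.mem_singleton] at h'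
        rcases h' with rfl | rfl | h'
        · exact Or.inl (Walk.end_mem_support _)
        · exact Or.inr rfl
        · simp at h'
    rcases ht with ht | ht
    · rcases ht'' with h' | rfl
      · rcases hdisj t (hsubA₁ t ht) h' with rfl | rfl
        · exact Or.inl rfl
        · exact absurd ht hcA₁
      · exact absurd (hsubA₁ t ht) hb₁
    · rw [Walk.support_reverse, List.mem_reverse] at ht
      rcases ht'' with h' | rfl
      · have htz : t = z' := hW t ht (Or.inr h')
        subst htz
        rcases hdisj t hz h' with rfl | rfl
        · exact Or.inl rfl
        · exact absurd rfl hzc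
      · exact Or.inr rfl

lemma menger2 (hA : Avoid G) (hcard : 3 ≤ Fintype.card V) :
    ∀ (n : ℕ) (a b : V), a ≠ b → G.dist a b = n →
      ∃ (P Q : G.Walk a b), P.IsPath ∧ Q.IsPath ∧
        ∀ t, t ∈ P.support → t ∈ Q.support → t = a ∨ t = b := by
  intro n
  induction n using Nat.strong_induction_on with
  | _ n ih =>
    intro a b hab hdist
    have hreach : G.Reachable a b := (avoid_reachable hA hcard a b).map id
    have hn0 : n ≠ 0 := by
      intro h
      rw [h] at hdist
      exact hab (hreach.dist_eq_zero_iff.mp hdist)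
    obtain ⟨p, hp⟩ := hreach.exists_walk_length_eq_dist
    rw [hdist] at hp
    rcases eq_or_ne n 1 with rfl | hn1
    · -- adjacent case
      cases p with
      | nil => simp at hp
      | cons h q =>
        cases q with
        | nil =>
          refine ⟨Walk.cons h Walk.nil, Walk.cons h Walk.nil, ?_, ?_, ?_⟩
          · simp [Walk.isPath_def, hab]
          · simp [Walk.isPath_def, hab]
          · intro t ht _
            simp only [Walk.support_cons, Walk.support_nil, List.mem_cons, List.mem_singleton] at ht
            rcases ht with rfl | rfl | h'
            · exact Or.inl rfl
            · exact Or.inr rfl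
            · simp at h'
        | cons h' q' => simp [Walk.length_cons] at hp
    · -- n ≥ 2
      have hn2 : 2 ≤ n := by omega
      -- decompose from the b-side
      obtain ⟨c, hbc, q, hqlen⟩ : ∃ (c : V) (_ : G.Adj b c) (q : G.Walk c a), q.length = n - 1 := by
        cases hrev : p.reverse with
        | nil =>
          exfalso
          have := congrArg Walk.length hrev
          rw [Walk.length_reverse, hp] at this
          simp at this
          omega
        | cons hbc q =>
          refine ⟨_, hbc, q, ?_⟩
          have := congrArg Walk.length hrev
          rw [Walk.length_reverse, hp, Walk.length_cons] at this
          omega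
      have hdac_le : G.dist a c ≤ n - 1 := by
        have := SimpleGraph.dist_le q.reverse
        rwa [Walk.length_reverse, hqlen] at this
      have hreachac : G.Reachable a c := ⟨q.reverse⟩
      have hdac_ge : n ≤ G.dist a c + 1 := by
        obtain ⟨W, hW⟩ := hreachac.exists_walk_length_eq_dist
        have := SimpleGraph.dist_le (W.concat hbc.symm)
        rw [Walk.length_concat, hW, hdist] at this
        exact this
      have hdac : G.dist a c = n - 1 := by omega
      have hac : a ≠ c := by
        intro h
        rw [← h, SimpleGraph.dist_self] at hdac
        omega
      obtain ⟨P₁, P₂, hP₁, hP₂, hdisj⟩ := ih (n - 1) (by omega) a c hac hdac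
      have hbc' : b ≠ c := hbc.ne
      by_cases hb₁ : b ∈ P₁.support
      · have hb₂ : b ∉ P₂.support := by
          intro hb₂
          rcases hdisj b hb₁ hb₂ with rfl | rfl
          · exact hab rfl
          · exact hbc' rfl
        exact menger2_on_path hP₁ hP₂ hdisj hb₁ hb₂ hbc' hbc.symm
      · by_cases hb₂ : b ∈ P₂.support
        · exact menger2_on_path hP₂ hP₁ (fun t h1 h2 => hdisj t h2 h1) hb₂ hb₁ hbc' hbc.symm
        · obtain ⟨W₀, hcW₀⟩ := hA c b a hbc' hac
          have hWpath : W₀.bypass.IsPath := W₀.bypass_isPath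
          have hcW : c ∉ W₀.bypass.support := fun h => hcW₀ (W₀.support_bypass_subset h)
          have hexT : ∃ z ∈ W₀.bypass.support, (z ∈ P₁.support ∨ z ∈ P₂.support) :=
            ⟨a, Walk.end_mem_support _, Or.inl (Walk.start_mem_support _)⟩
          obtain ⟨z, W₁, W₂, happW, hzT, hfirstW, -⟩ :=
            exists_first_split W₀.bypass (fun t => t ∈ P₁.support ∨ t ∈ P₂.support) hexT
          rw [← happW] at hWpath
          have hW₁ : W₁.IsPath := hWpath.of_append_left
          have hcW₁ : c ∉ W₁.support := fun h => hcW (by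
            rw [← happW, Walk.mem_support_append_iff]; exact Or.inl h)
          rcases hzT with hz | hz
          · exact menger2_reroute hP₁ hP₂ hdisj hb₁ hb₂ hbc.symm hW₁ hcW₁ hz
              (fun t ht hT => hfirstW t ht hT)
          · exact menger2_reroute hP₂ hP₁ (fun t h1 h2 => hdisj t h2 h1) hb₂ hb₁ hbc.symm hW₁ hcW₁ hz
              (fun t ht hT => hfirstW t ht hT.symm)

end Menger

lemma end_not_in_left {a m b : V} {A₁ : G.Walk a m} {A₂ : G.Walk m b}
    (h : (A₁.append A₂).IsPath) (hmb : m ≠ b) : b ∉ A₁.support := by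
  intro hb
  have hbA₂ : b ∈ A₂.support.tail := by
    have hbb : b ∈ A₂.support := Walk.end_mem_support _
    rw [A₂.support_eq_cons, List.mem_cons] at hbb
    exact hbb.resolve_left (Ne.symm hmb)
  have hnd := h.support_nodup
  rw [Walk.support_append, List.nodup_append] at hnd
  exact hnd.2.2 b hb b hbA₂ rfl

/-! ### The auxiliary graph on `Option V` -/

def GO (G : SimpleGraph V) (x y : V) : SimpleGraph (Option V) where
  Adj o₁ o₂ :=
    match o₁, o₂ with
    | some a, some b => G.Adj a b
    | none, some a => a = x ∨ a = y
    | some a, none => a = x ∨ a = y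
    | none, none => False
  symm := by
    refine ⟨?_⟩
    rintro (_ | a) (_ | b) h
    · exact h
    · exact h
    · exact h
    · exact h.symm
  loopless := by
    refine ⟨?_⟩
    rintro (_ | a) h
    · exact h
    · exact G.loopless.irrefl a h

variable {x y : V}

lemma GO_adj_some_some {a b : V} : (GO G x y).Adj (some a) (some b) ↔ G.Adj a b := Iff.rfl

lemma GO_adj_none_some {a : V} : (GO G x y).Adj none (some a) ↔ (a = x ∨ a = y) := Iff.rfl

/-- Map a `G`-walk into `GO G x y`. -/
def liftGO {a b : V} (p : G.Walk a b) : (GO G x y).Walk (some a) (some b) :=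
  p.map ⟨some, fun h => h⟩

lemma liftGO_support {a b : V} (p : G.Walk a b) :
    (liftGO (x := x) (y := y) p).support = p.support.map some := by
  simp only [liftGO, Walk.support_map]
  rfl

/-- Walks in `GO` avoiding `none` come from `G`. -/
lemma demapGO : ∀ {o₁ o₂ : Option V} (W : (GO G x y).Walk o₁ o₂) (a b : V),
    o₁ = some a → o₂ = some b → none ∉ W.support →
    ∃ W' : G.Walk a b, W'.support.map some = W.support := by
  intro o₁ o₂ W
  induction W with
  | @nil o =>
    intro a b h₁ h₂ _
    subst h₁
    obtain rfl : a = b := by injection h₂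
    exact ⟨Walk.nil, by simp⟩
  | @cons o₁ o₂ o₃ h W ih =>
    intro a b h₁ h₂ hn
    subst h₁
    rw [Walk.support_cons, List.mem_cons] at hn
    push_neg at hn
    obtain ⟨d, rfl⟩ : ∃ d, o₂ = some d := by
      cases o₂ with
      | none => exact absurd W.start_mem_support hn.2
      | some d => exact ⟨d, rfl⟩
    obtain ⟨W', hW'⟩ := ih d b rfl h₂ hn.2
    exact ⟨Walk.cons (GO_adj_some_some.mp h) W', by rw [Walk.support_cons, List.map_cons, hW', Walk.support_cons]⟩

lemma avoid_GO [Fintype V] (hA : Avoid G) (hcard : 3 ≤ Fintype.card V) (hxy : x ≠ y) :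
    Avoid (GO G x y) := by
  have hwalk : ∀ (v : V) (a b : V), a ≠ v → b ≠ v →
      ∃ p : (GO G x y).Walk (some a) (some b), (some v : Option V) ∉ p.support := by
    intro v a b ha hb
    rcases eq_or_ne a b with rfl | hab
    · exact ⟨Walk.nil, by simp [Ne.symm ha]⟩
    · obtain ⟨p, hp⟩ := hA v a b ha hb
      refine ⟨liftGO p, ?_⟩
      rw [liftGO_support, List.mem_map]
      rintro ⟨z, hz, hzv⟩
      exact hp ((Option.some_injective V hzv) ▸ hz)
  have hnone : ∀ (v b : V), b ≠ v →
      ∃ p : (GO G x y).Walk none (some b), (some v : Option V) ∉ p.support := by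
    intro v b hb
    set z := if v = x then y else x with hz
    have hzxy : z = x ∨ z = y := by
      rw [hz]; split <;> simp
    have hzv : z ≠ v := by
      rw [hz]; split
      · rename_i h; rw [h]; exact hxy.symm
      · rename_i h; exact fun hc => h hc.symm
    obtain ⟨p, hp⟩ := hwalk v z b hzv hb
    refine ⟨Walk.cons (GO_adj_none_some.mpr hzxy) p, ?_⟩
    rw [Walk.support_cons, List.mem_cons]
    rintro (h | h)
    · exact nomatch h
    · exact hp h
  intro v' a' b' ha' hb'
  cases v' with
  | none =>
    -- just need any walk avoiding `none`
    obtain ⟨a, rfl⟩ : ∃ a, a' = some a := Option.ne_none_iff_exists'.mp ha'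
    obtain ⟨b, rfl⟩ : ∃ b, b' = some b := Option.ne_none_iff_exists'.mp hb'
    rcases eq_or_ne a b with rfl | hab
    · exact ⟨Walk.nil, by simp⟩
    · obtain ⟨p⟩ := avoid_reachable hA hcard a b
      refine ⟨liftGO p, ?_⟩
      rw [liftGO_support, List.mem_map]
      rintro ⟨z, -, hzv⟩
      exact nomatch hzv
  | some v =>
    cases a' with
    | none =>
      cases b' with
      | none => exact ⟨Walk.nil, by simp⟩
      | some b =>
        have hb : b ≠ v := fun h => hb' (by rw [h])
        exact hnone v b hb
    | some a =>
      have ha : a ≠ v := fun h => ha' (by rw [h])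
      cases b' with
      | none =>
        have ⟨p, hp⟩ := hnone v a ha
        exact ⟨p.reverse, by rwa [Walk.support_reverse, List.mem_reverse]⟩
      | some b =>
        have hb : b ≠ v := fun h => hb' (by rw [h])
        exact hwalk v a b ha hb


/-! ### The fan lemma: some x-y path meets a "connected" set twice -/

section Fan

variable [Fintype V] {x y : V}

/-- Case: `x ∈ S`, `y ∉ S`. Produces a path `x → y` through two distinct vertices of S. -/
lemma fan2_one_end (hA : Avoid G) (S : V → Prop) [DecidablePred S]
    (hSconn : ∀ a b, S a → S b → ∃ W : G.Walk a b, ∀ t ∈ W.support, S t)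
    (hS2 : ∀ z : V, ∃ s, S s ∧ s ≠ z)
    (hx : S x) (hxy : x ≠ y) :
    ∃ R : G.Walk x y, R.IsPath ∧
      ∃ u v, u ∈ R.support ∧ v ∈ R.support ∧ S u ∧ S v ∧ u ≠ v := by
  obtain ⟨s₁, hs₁S, hs₁x⟩ := hS2 x
  obtain ⟨W₀, hxW₀⟩ := hA x y s₁ (Ne.symm hxy) hs₁x
  have hWpath : W₀.bypass.IsPath := W₀.bypass_isPath
  have hxW : x ∉ W₀.bypass.support := fun h => hxW₀ (W₀.support_bypass_subset h)
  obtain ⟨u, W₁, W₂, happ, hSu, hfirst, -⟩ := exists_first_split W₀.bypass S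
    ⟨s₁, Walk.end_mem_support _, hs₁S⟩
  rw [← happ] at hWpath
  have hW₁ : W₁.IsPath := hWpath.of_append_left
  have hxW₁ : x ∉ W₁.support := fun h => hxW (by
    rw [← happ, Walk.mem_support_append_iff]; exact Or.inl h)
  have hux : u ≠ x := fun h => hxW₁ (h ▸ Walk.end_mem_support _)
  obtain ⟨M₀, hM₀⟩ := hSconn x u hx hSu
  have hM : ∀ t ∈ M₀.bypass.support, S t := fun t ht => hM₀ t (M₀.support_bypass_subset ht)
  refine ⟨M₀.bypass.append W₁.reverse, ?_, x, u, ?_, ?_, hx, hSu, Ne.symm hux⟩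
  · apply isPath_append M₀.bypass_isPath hW₁.reverse
    intro t ht ht'
    rw [Walk.support_reverse, List.mem_reverse] at ht'
    exact hfirst t ht' (hM t ht)
  · rw [Walk.mem_support_append_iff]; exact Or.inl (Walk.start_mem_support _)
  · rw [Walk.mem_support_append_iff]; exact Or.inl (Walk.end_mem_support _)

/-- Case: path meets `S` exactly once, at an interior vertex `z`. -/
lemma fan2_once (hA : Avoid G) (S : V → Prop) [DecidablePred S]
    (hSconn : ∀ a b, S a → S b → ∃ W : G.Walk a b, ∀ t ∈ W.support, S t)
    (hS2 : ∀ z : V, ∃ s, S s ∧ s ≠ z)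
    (hx : ¬S x) (hy : ¬S y) {z : V} (hz : S z)
    {A : G.Walk x z} {B : G.Walk y z} (hApath : A.IsPath) (hBpath : B.IsPath)
    (hA1 : ∀ t ∈ A.support, S t → t = z) (hB1 : ∀ t ∈ B.support, S t → t = z)
    (hdisjAB : ∀ t, t ∈ A.support → t ∈ B.support → t = z) :
    ∃ R : G.Walk x y, R.IsPath ∧
      ∃ u v, u ∈ R.support ∧ v ∈ R.support ∧ S u ∧ S v ∧ u ≠ v := by
  have hzx : z ≠ x := fun h => hx (h ▸ hz)
  have hzy : z ≠ y := fun h => hy (h ▸ hz)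
  obtain ⟨s₁, hs₁S, hs₁z⟩ := hS2 z
  obtain ⟨N₀, hzN₀⟩ := hA z s₁ x hs₁z (Ne.symm hzx)
  have hNpath : N₀.bypass.IsPath := N₀.bypass_isPath
  have hzN : z ∉ N₀.bypass.support := fun h => hzN₀ (N₀.support_bypass_subset h)
  -- T := membership in A or B
  obtain ⟨t₀, N₁, N₂, happN, hT₀, hNfirst, -⟩ := exists_first_split N₀.bypass
    (fun t => t ∈ A.support ∨ t ∈ B.support)
    ⟨x, Walk.end_mem_support _, Or.inl (Walk.start_mem_support _)⟩
  rw [← happN] at hNpath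
  have hN₁ : N₁.IsPath := hNpath.of_append_left
  have hsubN₁ : ∀ t, t ∈ N₁.support → t ∈ N₀.bypass.support := fun t ht => by
    rw [← happN, Walk.mem_support_append_iff]; exact Or.inl ht
  have hzN₁ : z ∉ N₁.support := fun h => hzN (hsubN₁ z h)
  have ht₀z : t₀ ≠ z := fun h => hzN₁ (h ▸ Walk.end_mem_support _)
  have ht₀S : ¬S t₀ := fun h => ht₀z (by
    rcases hT₀ with h' | h'
    · exact hA1 t₀ h' h
    · exact hB1 t₀ h' h)
  -- last S-hit on N₁ : split N₁.reverse at first S-hit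
  obtain ⟨h', D₁, D₂, happD, hh'S, hDfirst, -⟩ := exists_first_split N₁.reverse S
    ⟨s₁, by rw [Walk.support_reverse, List.mem_reverse]; exact Walk.start_mem_support _, hs₁S⟩
  have hD₁path : D₁.IsPath := by
    have h2 := hN₁.reverse
    rw [← happD] at h2
    exact h2.of_append_left
  set N' := D₁.reverse with hN'def
  have hN'path : N'.IsPath := hD₁path.reverse
  have hN'sub : ∀ t, t ∈ N'.support → t ∈ N₁.support := by
    intro t ht
    rw [hN'def, Walk.support_reverse, List.mem_reverse] at ht
    have : t ∈ N₁.reverse.support := by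
      rw [← happD, Walk.mem_support_append_iff]; exact Or.inl ht
    rwa [Walk.support_reverse, List.mem_reverse] at this
  have hN'S : ∀ t ∈ N'.support, S t → t = h' := by
    intro t ht hSt
    rw [hN'def, Walk.support_reverse, List.mem_reverse] at ht
    exact hDfirst t ht hSt
  have hN'T : ∀ t ∈ N'.support, (t ∈ A.support ∨ t ∈ B.support) → t = t₀ :=
    fun t ht hT => hNfirst t (hN'sub t ht) hT
  have hzN' : z ∉ N'.support := fun h => hzN₁ (hN'sub z h)
  have hh'z : h' ≠ z := fun h => hzN' (h ▸ Walk.start_mem_support N')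
  obtain ⟨M₀, hM₀⟩ := hSconn h' z hh'S hz
  have hMpath : M₀.bypass.IsPath := M₀.bypass_isPath
  have hMS : ∀ t ∈ M₀.bypass.support, S t := fun t ht => hM₀ t (M₀.support_bypass_subset ht)
  rcases hT₀ with ht₀A | ht₀B
  · -- t₀ on the x-side A
    obtain ⟨t₀', A₁, A₂, happA, ht₀'eq, -, -⟩ := exists_first_split A (· = t₀) ⟨t₀, ht₀A, rfl⟩
    subst ht₀'eq
    rw [← happA] at hApath
    have hA₁ : A₁.IsPath := hApath.of_append_left
    have hsubA₁ : ∀ t, t ∈ A₁.support → t ∈ A.support := fun t ht => by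
      rw [← happA, Walk.mem_support_append_iff]; exact Or.inl ht
    have hzA₁ : z ∉ A₁.support := end_not_in_left hApath ht₀z
    -- F := A₁ ++ N'.reverse ++ M ++ B.reverse
    have hInner2 : (M₀.bypass.append B.reverse).IsPath := by
      apply isPath_append hMpath hBpath.reverse
      intro t ht ht'
      rw [Walk.support_reverse, List.mem_reverse] at ht'
      exact hB1 t ht' (hMS t ht)
    have hInner1 : (N'.reverse.append (M₀.bypass.append B.reverse)).IsPath := by
      apply isPath_append hN'path.reverse hInner2
      intro t ht ht'
      rw [Walk.support_reverse, List.mem_reverse] at ht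
      rw [Walk.mem_support_append_iff] at ht'
      rcases ht' with ht' | ht'
      · exact hN'S t ht (hMS t ht')
      · rw [Walk.support_reverse, List.mem_reverse] at ht'
        exfalso
        have := hN'T t ht (Or.inr ht')
        subst this
        exact ht₀z (hdisjAB t ht₀A ht')
    refine ⟨A₁.append (N'.reverse.append (M₀.bypass.append B.reverse)), ?_, h', z, ?_, ?_, hh'S, hz, hh'z⟩
    · apply isPath_append hA₁ hInner1
      intro t ht ht'
      rw [Walk.mem_support_append_iff] at ht'
      rcases ht' with ht' | ht'
      · rw [Walk.support_reverse, List.mem_reverse] at ht'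
        exact hN'T t ht' (Or.inl (hsubA₁ t ht))
      · rw [Walk.mem_support_append_iff] at ht'
        rcases ht' with ht' | ht'
        · exact absurd ((hA1 t (hsubA₁ t ht) (hMS t ht')) ▸ ht) hzA₁
        · rw [Walk.support_reverse, List.mem_reverse] at ht'
          exact absurd ((hdisjAB t (hsubA₁ t ht) ht') ▸ ht) hzA₁
    · rw [Walk.mem_support_append_iff]
      refine Or.inr ?_
      rw [Walk.mem_support_append_iff]
      refine Or.inl ?_
      rw [Walk.support_reverse, List.mem_reverse]
      exact Walk.start_mem_support _
    · rw [Walk.mem_support_append_iff]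
      refine Or.inr ?_
      rw [Walk.mem_support_append_iff]
      refine Or.inr ?_
      rw [Walk.mem_support_append_iff]
      exact Or.inl (Walk.end_mem_support _)
  · -- t₀ on the y-side B
    obtain ⟨t₀', B₁, B₂, happB, ht₀'eq, -, -⟩ := exists_first_split B (· = t₀) ⟨t₀, ht₀B, rfl⟩
    subst ht₀'eq
    rw [← happB] at hBpath
    have hB₁ : B₁.IsPath := hBpath.of_append_left
    have hsubB₁ : ∀ t, t ∈ B₁.support → t ∈ B.support := fun t ht => by
      rw [← happB, Walk.mem_support_append_iff]; exact Or.inl ht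
    have hzB₁ : z ∉ B₁.support := end_not_in_left hBpath ht₀z
    -- F := A ++ M.reverse ++ N' ++ B₁.reverse
    have hInner2 : (N'.append B₁.reverse).IsPath := by
      apply isPath_append hN'path hB₁.reverse
      intro t ht ht'
      rw [Walk.support_reverse, List.mem_reverse] at ht'
      exact hN'T t ht (Or.inr (hsubB₁ t ht'))
    have hInner1 : (M₀.bypass.reverse.append (N'.append B₁.reverse)).IsPath := by
      apply isPath_append hMpath.reverse hInner2
      intro t ht ht'
      rw [Walk.support_reverse, List.mem_reverse] at ht
      rw [Walk.mem_support_append_iff] at ht'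
      rcases ht' with ht' | ht'
      · exact hN'S t ht' (hMS t ht)
      · rw [Walk.support_reverse, List.mem_reverse] at ht'
        exact absurd ((hB1 t (hsubB₁ t ht') (hMS t ht)) ▸ ht') hzB₁
    refine ⟨A.append (M₀.bypass.reverse.append (N'.append B₁.reverse)), ?_, h', z, ?_, ?_, hh'S, hz, hh'z⟩
    · apply isPath_append hApath hInner1
      intro t ht ht'
      rw [Walk.mem_support_append_iff] at ht'
      rcases ht' with ht' | ht'
      · rw [Walk.support_reverse, List.mem_reverse] at ht'
        exact hA1 t ht (hMS t ht')
      · rw [Walk.mem_support_append_iff] at ht'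
        rcases ht' with ht' | ht'
        · exfalso
          have := hN'T t ht' (Or.inl ht)
          subst this
          exact ht₀z (hdisjAB t ht (hsubB₁ t (Walk.end_mem_support B₁)))
        · rw [Walk.support_reverse, List.mem_reverse] at ht'
          exact absurd ((hdisjAB t ht (hsubB₁ t ht')) ▸ ht') hzB₁
    · rw [Walk.mem_support_append_iff]
      refine Or.inr ?_
      rw [Walk.mem_support_append_iff]
      refine Or.inr ?_
      rw [Walk.mem_support_append_iff]
      exact Or.inl (Walk.start_mem_support _)
    · rw [Walk.mem_support_append_iff]
      exact Or.inl (Walk.end_mem_support _)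

end Fan

section Fan2Main

variable [Fintype V] {x y : V}

lemma peelGO {c₀ : V} (P : (GO G x y).Walk none (some c₀)) (hP : P.IsPath) :
    ∃ (w₁ : V) (P' : G.Walk w₁ c₀), (w₁ = x ∨ w₁ = y) ∧ P'.IsPath ∧
      (∀ t ∈ P'.support, (some t : Option V) ∈ P.support) := by
  cases P with
  | @cons _ o₂ _ h P₁ =>
    cases o₂ with
    | none => exact absurd h ((GO G x y).loopless.irrefl none)
    | some w₁ =>
      have hw₁ : w₁ = x ∨ w₁ = y := GO_adj_none_some.mp h
      have hP₁ : P₁.IsPath := hP.of_cons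
      have hnone : (none : Option V) ∉ P₁.support := by
        have := hP.support_nodup
        rw [Walk.support_cons, List.nodup_cons] at this
        exact this.1
      obtain ⟨P', hsup⟩ := demapGO P₁ w₁ c₀ rfl rfl hnone
      refine ⟨w₁, P', hw₁, ?_, ?_⟩
      · rw [Walk.isPath_def]
        have : (P'.support.map some).Nodup := hsup ▸ hP₁.support_nodup
        exact this.of_map
      · intro t ht
        rw [Walk.support_cons, List.mem_cons]
        right
        rw [← hsup]
        exact List.mem_map_of_mem ht

lemma fan2_core (hA : Avoid G) (S : V → Prop) [DecidablePred S]
    (hSconn : ∀ a b, S a → S b → ∃ W : G.Walk a b, ∀ t ∈ W.support, S t)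
    (hS2 : ∀ z : V, ∃ s, S s ∧ s ≠ z)
    (hx : ¬S x) (hy : ¬S y) {c₀ : V} (hc₀S : S c₀)
    {Px : G.Walk x c₀} {Py : G.Walk y c₀} (hPx : Px.IsPath) (hPy : Py.IsPath)
    (hdisj : ∀ t, t ∈ Px.support → t ∈ Py.support → t = c₀) :
    ∃ R : G.Walk x y, R.IsPath ∧
      ∃ u v, u ∈ R.support ∧ v ∈ R.support ∧ S u ∧ S v ∧ u ≠ v := by
  obtain ⟨u, A, A₂, happA, hSu, hAfirst, -⟩ := exists_first_split Px S
    ⟨c₀, Walk.end_mem_support _, hc₀S⟩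
  rw [← happA] at hPx
  have hApath : A.IsPath := hPx.of_append_left
  have hsubA : ∀ t, t ∈ A.support → t ∈ Px.support := fun t ht => by
    rw [← happA, Walk.mem_support_append_iff]; exact Or.inl ht
  obtain ⟨v, B, B₂, happB, hSv, hBfirst, -⟩ := exists_first_split Py S
    ⟨c₀, Walk.end_mem_support _, hc₀S⟩
  rw [← happB] at hPy
  have hBpath : B.IsPath := hPy.of_append_left
  have hsubB : ∀ t, t ∈ B.support → t ∈ Py.support := fun t ht => by
    rw [← happB, Walk.mem_support_append_iff]; exact Or.inl ht
  by_cases huv : u = v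
  · subst huv
    exact fan2_once hA S hSconn hS2 hx hy hSu hApath hBpath hAfirst hBfirst
      (fun t ht ht' => hAfirst t ht (((hdisj t (hsubA t ht) (hsubB t ht')) ▸ hc₀S)))
  · obtain ⟨M₀, hM₀⟩ := hSconn u v hSu hSv
    have hMpath : M₀.bypass.IsPath := M₀.bypass_isPath
    have hMS : ∀ t ∈ M₀.bypass.support, S t := fun t ht => hM₀ t (M₀.support_bypass_subset ht)
    have hInner : (M₀.bypass.append B.reverse).IsPath := by
      apply isPath_append hMpath hBpath.reverse
      intro t ht ht'
      rw [Walk.support_reverse, List.mem_reverse] at ht'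
      exact hBfirst t ht' (hMS t ht)
    refine ⟨A.append (M₀.bypass.append B.reverse), ?_, u, v, ?_, ?_, hSu, hSv, huv⟩
    · apply isPath_append hApath hInner
      intro t ht ht'
      rw [Walk.mem_support_append_iff] at ht'
      rcases ht' with ht' | ht'
      · exact hAfirst t ht (hMS t ht')
      · rw [Walk.support_reverse, List.mem_reverse] at ht'
        exact hAfirst t ht ((hdisj t (hsubA t ht) (hsubB t ht')) ▸ hc₀S)
    · rw [Walk.mem_support_append_iff]
      exact Or.inl (Walk.end_mem_support _)
    · rw [Walk.mem_support_append_iff]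
      refine Or.inr ?_
      rw [Walk.mem_support_append_iff]
      exact Or.inl (Walk.end_mem_support _)

lemma fan2 (hA : Avoid G) (hcard : 3 ≤ Fintype.card V) (hxy : x ≠ y)
    (S : V → Prop) [DecidablePred S]
    (hSconn : ∀ a b, S a → S b → ∃ W : G.Walk a b, ∀ t ∈ W.support, S t)
    (hS2 : ∀ z : V, ∃ s, S s ∧ s ≠ z) :
    ∃ R : G.Walk x y, R.IsPath ∧
      ∃ u v, u ∈ R.support ∧ v ∈ R.support ∧ S u ∧ S v ∧ u ≠ v := by
  by_cases hx : S x
  · by_cases hy : S y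
    · obtain ⟨R₀⟩ := avoid_reachable hA hcard x y
      exact ⟨R₀.bypass, R₀.bypass_isPath, x, y, Walk.start_mem_support _,
        Walk.end_mem_support _, hx, hy, hxy⟩
    · exact fan2_one_end hA S hSconn hS2 hx hxy
  · by_cases hy : S y
    · obtain ⟨R, hRp, u, v, hu, hv, hSu, hSv, huv⟩ :=
        fan2_one_end (x := y) (y := x) hA S hSconn hS2 hy (Ne.symm hxy)
      exact ⟨R.reverse, hRp.reverse, u, v,
        by rwa [Walk.support_reverse, List.mem_reverse],
        by rwa [Walk.support_reverse, List.mem_reverse], hSu, hSv, huv⟩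
    · -- main case: x, y ∉ S
      obtain ⟨c₀, hc₀S, -⟩ := hS2 x
      have hc₀x : c₀ ≠ x := fun h => hx (h ▸ hc₀S)
      have hc₀y : c₀ ≠ y := fun h => hy (h ▸ hc₀S)
      have hAGO := avoid_GO hA hcard hxy
      have hcardO : 3 ≤ Fintype.card (Option V) := by
        rw [Fintype.card_option]; omega
      obtain ⟨P, Q, hPp, hQp, hdisjPQ⟩ := menger2 hAGO hcardO
        ((GO G x y).dist none (some c₀)) none (some c₀) (by simp) rfl
      obtain ⟨w₁, P', hw₁, hP'p, hP'mem⟩ := peelGO P hPp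
      obtain ⟨w₂, Q', hw₂, hQ'p, hQ'mem⟩ := peelGO Q hQp
      have hkey : ∀ t, t ∈ P'.support → t ∈ Q'.support → t = c₀ := by
        intro t ht ht'
        rcases hdisjPQ (some t) (hP'mem t ht) (hQ'mem t ht') with h | h
        · exact nomatch h
        · injection h
      have hw₁₂ : w₁ ≠ w₂ := by
        intro h
        have h1 : (some w₁ : Option V) ∈ P.support := hP'mem w₁ (Walk.start_mem_support _)
        have h2 : (some w₁ : Option V) ∈ Q.support := by
          rw [h]; exact hQ'mem w₂ (Walk.start_mem_support _)
        rcases hdisjPQ (some w₁) h1 h2 with h' | h'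
        · exact nomatch h'
        · have : w₁ = c₀ := by injection h'
          rcases hw₁ with rfl | rfl
          · exact hc₀x this.symm
          · exact hc₀y this.symm
      rcases hw₁ with rfl | rfl
      · rcases hw₂ with rfl | rfl
        · exact absurd rfl hw₁₂
        · exact fan2_core hA S hSconn hS2 hx hy hc₀S hP'p hQ'p hkey
      · rcases hw₂ with rfl | rfl
        · exact fan2_core hA S hSconn hS2 hx hy hc₀S hQ'p hP'p
            (fun t h1 h2 => hkey t h2 h1)
        · exact absurd rfl hw₁₂

end Fan2Main

/-! ### Every cycle has even weight -/

lemma walk_within {c : V} (p : G.Walk c c) {a b : V} (ha : a ∈ p.support)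
    (hb : b ∈ p.support) : ∃ W : G.Walk a b, ∀ t ∈ W.support, t ∈ p.support := by
  obtain ⟨a', W₁, W₂, happ, ha', -, -⟩ := exists_first_split p (· = a) ⟨a, ha, rfl⟩
  subst ha'
  have hmemq : ∀ t, t ∈ (W₂.append W₁).support ↔ t ∈ p.support := by
    intro t
    rw [Walk.mem_support_append_iff, ← happ, Walk.mem_support_append_iff, or_comm]
  have hbq : b ∈ (W₂.append W₁).support := (hmemq b).mpr hb
  obtain ⟨b', U₁, U₂, happU, hb', -, -⟩ := exists_first_split (W₂.append W₁) (· = b) ⟨b, hbq, rfl⟩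
  subst hb'
  refine ⟨U₁, fun t ht => ?_⟩
  rw [← hmemq t, ← happU, Walk.mem_support_append_iff]
  exact Or.inl ht

lemma loop_rotate (w : Sym2 V → ZMod 2) {c u' : V} (p : G.Walk c c) (hu : u' ∈ p.support) :
    ∃ q : G.Walk u' u', wt w q = wt w p ∧ (p.support.tail.Nodup → q.support.tail.Nodup) ∧
      (∀ t, t ∈ q.support ↔ t ∈ p.support) := by
  obtain ⟨u'', W₁, W₂, happ, hu'', -, -⟩ := exists_first_split p (· = u') ⟨u', hu, rfl⟩
  subst hu''
  refine ⟨W₂.append W₁, ?_, ?_, ?_⟩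
  · rw [wt_append, ← happ, wt_append, add_comm]
  · intro hnd
    have h1 : p.support.tail = W₁.support.tail ++ W₂.support.tail := by
      rw [← happ, Walk.support_append, W₁.support_eq_cons]
      simp
    have h2 : (W₂.append W₁).support.tail = W₂.support.tail ++ W₁.support.tail := by
      rw [Walk.support_append, W₂.support_eq_cons]
      simp
    rw [h1] at hnd
    rw [h2]
    rwa [List.nodup_append_comm]
  · intro t
    rw [Walk.mem_support_append_iff, ← happ, Walk.mem_support_append_iff, or_comm]

lemma loop_arcs {u' v' : V} {q : G.Walk u' u'} (hnd : q.support.tail.Nodup)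
    (hne : u' ≠ v') {E₁ : G.Walk u' v'} {E₂ : G.Walk v' u'} (happ : E₁.append E₂ = q) :
    E₁.IsPath ∧ E₂.IsPath := by
  have h1 : q.support.tail = E₁.support.tail ++ E₂.support.tail := by
    rw [← happ, Walk.support_append, E₁.support_eq_cons]
    simp
  rw [h1, List.nodup_append] at hnd
  obtain ⟨hn₁, hn₂, hdisj⟩ := hnd
  have hv'E₁ : v' ∈ E₁.support.tail := by
    have : v' ∈ E₁.support := Walk.end_mem_support _
    rw [E₁.support_eq_cons, List.mem_cons] at this
    exact this.resolve_left (Ne.symm hne)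
  have hu'E₂ : u' ∈ E₂.support.tail := by
    have : u' ∈ E₂.support := Walk.end_mem_support _
    rw [E₂.support_eq_cons, List.mem_cons] at this
    exact this.resolve_left hne
  constructor
  · rw [Walk.isPath_def, E₁.support_eq_cons, List.nodup_cons]
    exact ⟨fun h => hdisj _ h _ hu'E₂ rfl, hn₁⟩
  · rw [Walk.isPath_def, E₂.support_eq_cons, List.nodup_cons]
    exact ⟨fun h => hdisj _ hv'E₁ _ h rfl, hn₂⟩

lemma cycle_two_vertices {c : V} {p : G.Walk c c} (hp : p.IsCycle) :
    ∀ z : V, ∃ s, s ∈ p.support ∧ s ≠ z := by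
  intro z
  cases p with
  | nil => exact absurd rfl hp.ne_nil
  | @cons _ d _ h q =>
    have hcd : c ≠ d := h.ne
    by_cases hcz : c = z
    · exact ⟨d, by rw [Walk.support_cons, List.mem_cons]; exact Or.inr (Walk.start_mem_support _),
        fun hdz => hcd (hcz.trans hdz.symm)⟩
    · exact ⟨c, Walk.start_mem_support _, hcz⟩

lemma cycle_even [Fintype V] (hA : Avoid G) (hcard : 3 ≤ Fintype.card V)
    {x y : V} (hxy : x ≠ y) (w : Sym2 V → ZMod 2)
    (hw : ∀ (P Q : G.Walk x y), P.IsPath → Q.IsPath → wt w P = wt w Q)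
    {c : V} (p : G.Walk c c) (hp : p.IsCycle) : wt w p = 0 := by
  classical
  set S : V → Prop := fun t => t ∈ p.support with hSdef
  have hSconn : ∀ a b, S a → S b → ∃ W : G.Walk a b, ∀ t ∈ W.support, S t :=
    fun a b ha hb => walk_within p ha hb
  have hS2 : ∀ z : V, ∃ s, S s ∧ s ≠ z := cycle_two_vertices hp
  obtain ⟨R, hRpath, u, v, huR, hvR, hSu, hSv, huv⟩ := fan2 hA hcard hxy S hSconn hS2
  obtain ⟨u', A, A₂, happA, hSu', hAfirst, -⟩ := exists_first_split R S ⟨u, huR, hSu⟩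
  rw [← happA] at hRpath
  have hApath : A.IsPath := hRpath.of_append_left
  have hA₂path : A₂.IsPath := hRpath.of_append_right
  -- a second S-hit, lying in A₂
  obtain ⟨b', hSb', hb'u', hb'A₂⟩ : ∃ b', S b' ∧ b' ≠ u' ∧ b' ∈ A₂.support := by
    have hmem : ∀ t, t ∈ R.support ↔ (t ∈ A.support ∨ t ∈ A₂.support) := fun t => by
      rw [← happA, Walk.mem_support_append_iff]
    by_cases hu : u = u'
    · have hvu' : v ≠ u' := fun h => huv (hu.trans h.symm)
      refine ⟨v, hSv, hvu', ?_⟩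
      rcases (hmem v).mp hvR with h | h
      · exact absurd (hAfirst v h hSv) hvu'
      · exact h
    · refine ⟨u, hSu, hu, ?_⟩
      rcases (hmem u).mp huR with h | h
      · exact absurd (hAfirst u h hSu) hu
      · exact h
  obtain ⟨v', C₁, C₂, happC, hSv', hCfirst, -⟩ := exists_first_split A₂.reverse S
    ⟨b', by rw [Walk.support_reverse, List.mem_reverse]; exact hb'A₂, hSb'⟩
  have hC₁path : C₁.IsPath := by
    have h2 := hA₂path.reverse
    rw [← happC] at h2
    exact h2.of_append_left
  have hv'u' : v' ≠ u' := by
    intro h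
    subst h
    -- C₂ : v' → u' is a closed path, hence nil, so C₁ = A₂.reverse
    have hC₂path : C₂.IsPath := by
      have h2 := hA₂path.reverse
      rw [← happC] at h2
      exact h2.of_append_right
    have hC₂nil : C₁.append C₂ = C₁.append Walk.nil := by
      cases C₂ with
      | nil => rfl
      | cons h' C₂' =>
        exfalso
        have hnd := hC₂path.support_nodup
        rw [Walk.support_cons, List.nodup_cons] at hnd
        exact hnd.1 (Walk.end_mem_support C₂')
    rw [hC₂nil, Walk.append_nil] at happC
    have hb'C₁ : b' ∈ C₁.support := by
      rw [happC, Walk.support_reverse, List.mem_reverse]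
      exact hb'A₂
    exact hb'u' (hCfirst b' hb'C₁ hSb')
  -- B := C₁.reverse : v' → y
  have hBfirst : ∀ t ∈ C₁.reverse.support, S t → t = v' := by
    intro t ht hSt
    rw [Walk.support_reverse, List.mem_reverse] at ht
    exact hCfirst t ht hSt
  have hBsubA₂ : ∀ t, t ∈ C₁.reverse.support → t ∈ A₂.support := by
    intro t ht
    rw [Walk.support_reverse, List.mem_reverse] at ht
    have : t ∈ A₂.reverse.support := by
      rw [← happC, Walk.mem_support_append_iff]; exact Or.inl ht
    rwa [Walk.support_reverse, List.mem_reverse] at this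
  have hdisjAB : ∀ t, t ∈ A.support → t ∈ C₁.reverse.support → False := by
    intro t ht ht'
    have htu' : t = u' := eq_of_mem_append_support hRpath t ht (hBsubA₂ t ht')
    subst htu'
    exact hv'u' (hBfirst t ht' hSu').symm
  -- arcs of the cycle between u' and v'
  obtain ⟨q, hwtq, hndq, hmemq⟩ := loop_rotate w p hSu'
  have hndq' : q.support.tail.Nodup := hndq hp.2
  have hv'q : v' ∈ q.support := (hmemq v').mpr hSv'
  obtain ⟨v'', E₁, E₂, happE, hv''eq, -, -⟩ := exists_first_split q (· = v') ⟨v', hv'q, rfl⟩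
  subst hv''eq
  obtain ⟨hE₁path, hE₂path⟩ := loop_arcs hndq' (Ne.symm hv'u') happE
  have hE₁S : ∀ t ∈ E₁.support, S t := by
    intro t ht
    show t ∈ p.support
    rw [← hmemq t, ← happE, Walk.mem_support_append_iff]
    exact Or.inl ht
  have hE₂S : ∀ t ∈ E₂.support, S t := by
    intro t ht
    show t ∈ p.support
    rw [← hmemq t, ← happE, Walk.mem_support_append_iff]
    exact Or.inr ht
  -- the two rerouted paths
  have hInner1 : (E₁.append C₁.reverse).IsPath := by
    apply isPath_append hE₁path hC₁path.reverse
    intro t ht ht'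
    exact hBfirst t ht' (hE₁S t ht)
  have hR₁path : (A.append (E₁.append C₁.reverse)).IsPath := by
    apply isPath_append hApath hInner1
    intro t ht ht'
    rw [Walk.mem_support_append_iff] at ht'
    rcases ht' with ht' | ht'
    · exact hAfirst t ht (hE₁S t ht')
    · exact absurd (hdisjAB t ht ht') not_false
  have hInner2 : (E₂.reverse.append C₁.reverse).IsPath := by
    apply isPath_append hE₂path.reverse hC₁path.reverse
    intro t ht ht'
    rw [Walk.support_reverse, List.mem_reverse] at ht
    exact hBfirst t ht' (hE₂S t ht)
  have hR₂path : (A.append (E₂.reverse.append C₁.reverse)).IsPath := by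
    apply isPath_append hApath hInner2
    intro t ht ht'
    rw [Walk.mem_support_append_iff] at ht'
    rcases ht' with ht' | ht'
    · rw [Walk.support_reverse, List.mem_reverse] at ht'
      exact hAfirst t ht (hE₂S t ht')
    · exact absurd (hdisjAB t ht ht') not_false
  have heq := hw _ _ hR₁path hR₂path
  simp only [wt_append, wt_reverse] at heq
  have hE12 : wt w E₁ = wt w E₂ := by linear_combination heq
  rw [← hwtq, ← happE, wt_append, hE12]
  exact CharTwo.add_self_eq_zero _

/-- All x-y paths having equal weight forces the weight to be a potential difference. -/
lemma exists_potential [Fintype V] (hA : Avoid G) (hcard : 3 ≤ Fintype.card V)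
    {x y : V} (hxy : x ≠ y) (w : Sym2 V → ZMod 2)
    (hw : ∀ (P Q : G.Walk x y), P.IsPath → Q.IsPath → wt w P = wt w Q) :
    ∃ g : V → ZMod 2, ∀ u v, G.Adj u v → w s(u, v) = g u + g v := by
  classical
  have hcyc : ∀ (c : V) (p : G.Walk c c), p.IsCycle → wt w p = 0 :=
    fun c p hp => cycle_even hA hcard hxy w hw p hp
  have hclosed : ∀ (u : V) (p : G.Walk u u), wt w p = 0 :=
    fun u p => closed_walk_even w hcyc p.length u p le_rfl
  have hreach : ∀ v : V, Nonempty (G.Walk x v) := fun v => avoid_reachable hA hcard x v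
  refine ⟨fun v => wt w (hreach v).some, ?_⟩
  intro u v huv
  have h := hclosed x ((hreach u).some.append (Walk.cons huv (hreach v).some.reverse))
  rw [wt_append, wt_cons, wt_reverse] at h
  have h' : w s(u, v) = -(wt w (hreach u).some + wt w (hreach v).some) := by
    linear_combination h
  rw [CharTwo.neg_eq] at h'
  exact h'

/-! ### Linear algebra: the final counting argument -/

section LA

variable [Fintype V] (G) [DecidableRel G.Adj] {x y : V}

/-- Edge-sum of a function on vertices. -/
def esum (g : V → ZMod 2) : Sym2 V → ZMod 2 :=
  Sym2.lift ⟨fun a b => g a + g b, fun a b => add_comm _ _⟩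

omit [Fintype V] [DecidableRel G.Adj] in
lemma esum_mk (g : V → ZMod 2) (a b : V) : esum g s(a, b) = g a + g b := rfl

/-- The linear map sending a vertex-potential to the corresponding linear functional on
edge-space. -/
noncomputable def Psi : (V → ZMod 2) →ₗ[ZMod 2]
    Module.Dual (ZMod 2) (↥G.edgeFinset → ZMod 2) where
  toFun g := ∑ e : ↥G.edgeFinset, esum g (e : Sym2 V) • LinearMap.proj e
  map_add' g₁ g₂ := by
    rw [← Finset.sum_add_distrib]
    refine Finset.sum_congr rfl fun e _ => ?_
    have : esum (g₁ + g₂) (e : Sym2 V) = esum g₁ (e : Sym2 V) + esum g₂ (e : Sym2 V) := by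
      induction (e : Sym2 V) using Sym2.ind with
      | _ a b => simp only [esum_mk, Pi.add_apply]; ring
    rw [this, add_smul]
  map_smul' c g := by
    rw [RingHom.id_apply, Finset.smul_sum]
    refine Finset.sum_congr rfl fun e _ => ?_
    have : esum (c • g) (e : Sym2 V) = c * esum g (e : Sym2 V) := by
      induction (e : Sym2 V) using Sym2.ind with
      | _ a b => simp only [esum_mk, Pi.smul_apply, smul_eq_mul]; ring
    rw [this, mul_smul]

lemma psi_ker_nontrivial (hcard : 3 ≤ Fintype.card V) :
    (1 : V → ZMod 2) ∈ LinearMap.ker (Psi G) ∧ (1 : V → ZMod 2) ≠ 0 := by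
  constructor
  · rw [LinearMap.mem_ker]
    show (∑ e : ↥G.edgeFinset, esum (1 : V → ZMod 2) (e : Sym2 V) • LinearMap.proj e) = 0
    have h0 : ∀ e : ↥G.edgeFinset, esum (1 : V → ZMod 2) (e : Sym2 V) = 0 := by
      intro e
      induction (e : Sym2 V) using Sym2.ind with
      | _ a b =>
        rw [esum_mk]
        show (1 : ZMod 2) + 1 = 0
        decide
    rw [Finset.sum_congr rfl fun e _ => by rw [h0 e, zero_smul]]
    simp
  · have : Nonempty V := Fintype.card_pos_iff.mp (by omega)
    obtain ⟨v₀⟩ := this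
    intro h
    have := congrFun h v₀
    simp at this

end LA


section LA2

variable [Fintype V] (G) [DecidableRel G.Adj] (x y : V)

/-- Indicator vector of a path's edge set. -/
def chi (P : G.Path x y) : ↥G.edgeFinset → ZMod 2 :=
  fun e => if (e : Sym2 V) ∈ (P : G.Walk x y).edges then 1 else 0

variable {G x y}

lemma xi_eq_sum (ξ : Module.Dual (ZMod 2) (↥G.edgeFinset → ZMod 2))
    (wE : Sym2 V → ZMod 2)
    (hwE : ∀ e : ↥G.edgeFinset, wE (e : Sym2 V) = ξ (Pi.single e 1)) :
    ∀ f : ↥G.edgeFinset → ZMod 2, ξ f = ∑ e : ↥G.edgeFinset, f e * wE (e : Sym2 V) := by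
  intro f
  conv_lhs => rw [← Finset.univ_sum_single f]
  rw [map_sum]
  refine Finset.sum_congr rfl fun e _ => ?_
  have hs : (Pi.single e (f e) : ↥G.edgeFinset → ZMod 2) = f e • Pi.single e (1 : ZMod 2) := by
    funext z
    rcases eq_or_ne z e with rfl | hz
    · simp
    · simp [Pi.single_eq_of_ne hz]
  rw [hs, map_smul, smul_eq_mul, hwE e]

lemma xi_chi (ξ : Module.Dual (ZMod 2) (↥G.edgeFinset → ZMod 2))
    (wE : Sym2 V → ZMod 2)
    (hwE : ∀ e : ↥G.edgeFinset, wE (e : Sym2 V) = ξ (Pi.single e 1))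
    (P : G.Path x y) : ξ (chi G x y P) = wt wE (P : G.Walk x y) := by
  rw [xi_eq_sum ξ wE hwE]
  have hnd : (P : G.Walk x y).edges.Nodup := P.2.isTrail.edges_nodup
  rw [wt, ← List.sum_toFinset wE hnd]
  have hstep1 : ∀ e : ↥G.edgeFinset, chi G x y P e * wE (e : Sym2 V) =
      (fun s => if s ∈ (P : G.Walk x y).edges then wE s else 0) (e : Sym2 V) := by
    intro e
    by_cases h : (e : Sym2 V) ∈ (P : G.Walk x y).edges <;> simp [chi, h]
  rw [Finset.sum_congr rfl fun e _ => hstep1 e,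
    Finset.sum_coe_sort G.edgeFinset (fun s => if s ∈ (P : G.Walk x y).edges then wE s else 0),
    ← Finset.sum_filter (fun s => s ∈ (P : G.Walk x y).edges) wE]
  congr 1
  ext s
  simp only [Finset.mem_filter, List.mem_toFinset]
  constructor
  · exact fun h => h.2
  · intro h
    refine ⟨?_, h⟩
    rw [mem_edgeFinset]
    exact (P : G.Walk x y).edges_subset_edgeSet h

lemma ann_le (hA : Avoid G) (hcard : 3 ≤ Fintype.card V) (hxy : x ≠ y) (P₀ : G.Path x y) :
    (Submodule.span (ZMod 2)
        (Set.range fun P : G.Path x y => chi G x y P - chi G x y P₀)).dualAnnihilator ≤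
      LinearMap.range (Psi G) := by
  intro ξ hξ
  rw [Submodule.mem_dualAnnihilator] at hξ
  have hmemD : ∀ P : G.Path x y, ξ (chi G x y P - chi G x y P₀) = 0 :=
    fun P => hξ _ (Submodule.subset_span ⟨P, rfl⟩)
  classical
  set wE : Sym2 V → ZMod 2 :=
    fun s => if h : s ∈ G.edgeFinset then ξ (Pi.single (⟨s, h⟩ : ↥G.edgeFinset) 1) else 0
    with hwEdef
  have hwE : ∀ e : ↥G.edgeFinset, wE (e : Sym2 V) = ξ (Pi.single e 1) := by
    intro e
    rw [hwEdef]
    simp only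
    rw [dif_pos e.2]
  have hwconst : ∀ (P Q : G.Walk x y), P.IsPath → Q.IsPath → wt wE P = wt wE Q := by
    intro P Q hP hQ
    have h1 := hmemD ⟨P, hP⟩
    have h2 := hmemD ⟨Q, hQ⟩
    rw [map_sub, sub_eq_zero] at h1 h2
    have h3 := h1.trans h2.symm
    rw [xi_chi ξ wE hwE ⟨P, hP⟩, xi_chi ξ wE hwE ⟨Q, hQ⟩] at h3
    exact h3
  obtain ⟨g, hg⟩ := exists_potential hA hcard hxy wE hwconst
  have hwg : ∀ s, s ∈ G.edgeFinset → wE s = esum g s := by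
    intro s
    induction s using Sym2.ind with
    | _ a b =>
      intro hs
      rw [esum_mk]
      exact hg a b (by rwa [mem_edgeFinset, mem_edgeSet] at hs)
  refine ⟨g, ?_⟩
  apply LinearMap.ext
  intro f
  show (∑ e : ↥G.edgeFinset, esum g (e : Sym2 V) • LinearMap.proj e) f = ξ f
  rw [xi_eq_sum ξ wE hwE f, LinearMap.sum_apply]
  refine Finset.sum_congr rfl fun e _ => ?_
  rw [LinearMap.smul_apply, LinearMap.proj_apply, smul_eq_mul, mul_comm,
    hwg (e : Sym2 V) e.2]

end LA2
end Stmt0Aux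

open Stmt0Aux SimpleGraph Module

/-- In any biconnected (2-vertex-connected) undirected graph, for any two
distinct vertices `x, y`, there are at least `|E| - |V| + 1` distinct simple paths
from `x` to `y`. -/
theorem stmt0 {V : Type} [Fintype V] [DecidableEq V] (G : SimpleGraph V)
    [DecidableRel G.Adj]
    (hcard : 3 ≤ Fintype.card V)
    (hbicon : ∀ v : V, (G.induce ({v}ᶜ : Set V)).Connected)
    (x y : V) (hxy : x ≠ y) :
    (G.edgeFinset.card : ℤ) - (Fintype.card V : ℤ) + 1 ≤
      (Fintype.card (G.Path x y) : ℤ) := by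
  classical
  -- 2-connectivity in "avoid" form
  have hA : Avoid G := by
    intro v a b ha hb
    have ha' : a ∈ ({v}ᶜ : Set V) := by simp [ha]
    have hb' : b ∈ ({v}ᶜ : Set V) := by simp [hb]
    obtain ⟨W⟩ := (hbicon v).preconnected ⟨a, ha'⟩ ⟨b, hb'⟩
    refine ⟨W.map ⟨Subtype.val, fun h => h⟩, ?_⟩
    rw [Walk.support_map, List.mem_map]
    rintro ⟨z, -, hzv⟩
    have hz2 := z.2
    simp only [Set.mem_compl_iff, Set.mem_singleton_iff] at hz2
    exact hz2 hzv
  obtain ⟨P₀W⟩ := avoid_reachable hA hcard x y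
  have hDle : finrank (ZMod 2)
      (Submodule.span (ZMod 2)
        (Set.range fun P : G.Path x y => chi G x y P - chi G x y P₀W.toPath)) ≤
      Fintype.card (G.Path x y) := by
    refine (finrank_span_le_card _).trans ?_
    rw [Set.toFinset_range]
    exact Finset.card_image_le.trans (le_of_eq (Finset.card_univ))
  have hann := ann_le hA hcard hxy P₀W.toPath
  have e1 : finrank (ZMod 2) (↥G.edgeFinset → ZMod 2) = G.edgeFinset.card := by
    rw [Module.finrank_pi]
    exact Fintype.card_coe _
  set D := Submodule.span (ZMod 2)
    (Set.range fun P : G.Path x y => chi G x y P - chi G x y P₀W.toPath) with hDdef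
  have e2 := Submodule.finrank_quotient_add_finrank D
  have e3 : finrank (ZMod 2) ((↥G.edgeFinset → ZMod 2) ⧸ D) =
      finrank (ZMod 2) D.dualAnnihilator :=
    (Subspace.quotEquivAnnihilator D).finrank_eq
  have e4 : finrank (ZMod 2) D.dualAnnihilator ≤
      finrank (ZMod 2) (LinearMap.range (Psi G)) := Submodule.finrank_mono hann
  have e5 := LinearMap.finrank_range_add_finrank_ker (Psi G)
  have e6 : finrank (ZMod 2) (V → ZMod 2) = Fintype.card V := by
    rw [Module.finrank_pi]
  have e7 : 1 ≤ finrank (ZMod 2) (LinearMap.ker (Psi G)) := by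
    obtain ⟨hmem, hne⟩ := psi_ker_nontrivial G hcard
    rw [Nat.one_le_iff_ne_zero]
    intro h0
    rw [Submodule.finrank_eq_zero] at h0
    rw [h0] at hmem
    exact hne hmem
  rw [e1] at e2
  rw [e6] at e5
  have hD2 : (G.edgeFinset.card : ℤ) + 1 ≤ (Fintype.card V : ℤ) + finrank (ZMod 2) D := by
    push_cast
    omega
  have hfin : (finrank (ZMod 2) D : ℤ) ≤ (Fintype.card (G.Path x y) : ℤ) := by
    exact_mod_cast hDle
  omega
end

section
/- Let G be an undirected graph and define a relation on edges: two edges are equivalent if and only if they are equal or lie on a common simple cycle. Then this relation is an equivalence relation on the edge set of G. -/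
open SimpleGraph Walk

variable {V : Type} {G : SimpleGraph V}

/-- First hit of a set along a walk. -/
lemma firstHit {a b : V} (W : G.Walk a b) (S : Set V)
    (hS : ∃ z ∈ W.support, z ∈ S) :
    ∃ (c : V) (W1 : G.Walk a c) (W2 : G.Walk c b),
      W = W1.append W2 ∧ c ∈ S ∧ ∀ z ∈ W1.support, z ≠ c → z ∉ S := by
  classical
  induction W with
  | nil =>
    rename_i u
    obtain ⟨z, hz, hzS⟩ := hS
    simp only [Walk.support_nil, List.mem_singleton] at hz
    exact ⟨u, Walk.nil, Walk.nil, rfl, hz ▸ hzS, by simp⟩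
  | @cons a a' b' h q ih =>
    by_cases haS : a ∈ S
    · exact ⟨a, Walk.nil, Walk.cons h q, rfl, haS, by simp⟩
    · have hS' : ∃ z ∈ q.support, z ∈ S := by
        obtain ⟨z, hz, hzS⟩ := hS
        simp only [Walk.support_cons, List.mem_cons] at hz
        rcases hz with rfl | hz
        · exact absurd hzS haS
        · exact ⟨z, hz, hzS⟩
      obtain ⟨c, W1, W2, heq, hcS, hW1⟩ := ih hS'
      refine ⟨c, Walk.cons h W1, W2, by rw [Walk.cons_append, heq], hcS, ?_⟩
      intro z hz hzc
      simp only [Walk.support_cons, List.mem_cons] at hz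
      rcases hz with rfl | hz
      · exact haS
      · exact hW1 z hz hzc

/-- A path from u to u is nil (restatement). -/
lemma path_loop_nil {u : V} {p : G.Walk u u} (hp : p.IsPath) : p = Walk.nil :=
  Walk.isPath_iff_eq_nil.mp hp

/-- If a path ends at b and contains the edge s(c,b), it is a concat. -/
lemma lastEdge {a b c : V} (p : G.Walk a b) (hp : p.IsPath) (he : s(c, b) ∈ p.edges) :
    ∃ (q : G.Walk a c) (h : G.Adj c b), p = q.concat h := by
  induction p with
  | nil => simp at he
  | @cons a a' b' h q ih =>
    simp only [Walk.edges_cons, List.mem_cons] at he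
    rcases he with he | he
    · rw [Sym2.eq_iff] at he
      rcases he with ⟨rfl, rfl⟩ | ⟨hc, hb⟩
      · -- c = a, b = a' ; then q : Walk b b is a path, so nil
        have hq : q.IsPath := hp.of_cons
        rw [path_loop_nil hq]
        exact ⟨Walk.nil, h, rfl⟩
      · -- b = a : contradiction with path (cons from a to b=a)
        exfalso
        subst hb
        have := hp.support_nodup
        simp only [Walk.support_cons, List.nodup_cons] at this
        exact this.1 q.end_mem_support
    · obtain ⟨q', h', rfl⟩ := ih hp.of_cons he
      exact ⟨Walk.cons h q', h', by rw [Walk.concat_cons]⟩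

/-- In a nonnil closed walk, every support vertex is in the support tail. -/
lemma mem_support_tail_of_closed {w : V} (p : G.Walk w w) (hp : ¬p.Nil) :
    ∀ z ∈ p.support, z ∈ p.support.tail := by
  obtain ⟨u, h, q, rfl⟩ := Walk.not_nil_iff.mp hp
  intro z hz
  simp only [Walk.support_cons, List.mem_cons] at hz
  simp only [Walk.support_cons, List.tail_cons]
  rcases hz with rfl | hz
  · exact q.end_mem_support
  · exact hz

lemma mem_support_rotate_iff [DecidableEq V] {w u z : V} (c : G.Walk w w) (hc : c.IsCycle)
    (h : u ∈ c.support) : z ∈ (c.rotate u h).support ↔ z ∈ c.support := by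
  classical
  have h1 := Walk.support_rotate c u h
  have hnil : ¬c.Nil := hc.not_nil
  have hnil' : ¬(c.rotate u h).Nil := (hc.rotate h).not_nil
  constructor
  · intro hz
    have := mem_support_tail_of_closed _ hnil' z hz
    have := h1.perm.mem_iff.mp this
    exact List.mem_of_mem_tail this
  · intro hz
    have := mem_support_tail_of_closed _ hnil z hz
    have := h1.perm.mem_iff.mpr this
    exact List.mem_of_mem_tail this

/-- Decompose a cycle at one of its edges. -/
lemma cycle_decomp_at_edge {w : V} (c : G.Walk w w) (hc : c.IsCycle) {e : Sym2 V}
    (he : e ∈ c.edges) :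
    ∃ (x y : V) (h : G.Adj x y) (p : G.Walk y x),
      e = s(x, y) ∧ (Walk.cons h p).IsCycle ∧
      (∀ f, f ∈ (Walk.cons h p).edges ↔ f ∈ c.edges) ∧
      (∀ z, z ∈ (Walk.cons h p).support ↔ z ∈ c.support) := by
  classical
  obtain ⟨d, hd, rfl⟩ := List.mem_map.mp he
  obtain ⟨⟨x, y⟩, hxy⟩ := d
  have hedge : (SimpleGraph.Dart.mk (x, y) hxy).edge = s(x, y) := rfl
  have hx : x ∈ c.support := Walk.dart_fst_mem_support_of_mem_darts _ hd
  set c1 := c.rotate x hx with hc1def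
  have hc1 : c1.IsCycle := hc.rotate hx
  have hperm : List.Perm c1.edges c.edges := (Walk.rotate_edges c x hx).perm
  have hsupp : ∀ z, z ∈ c1.support ↔ z ∈ c.support := fun z =>
    mem_support_rotate_iff c hc hx
  have he1 : s(x, y) ∈ c1.edges := hperm.mem_iff.mpr (hedge ▸ he)
  clear_value c1
  obtain ⟨z, h, q, rfl⟩ := Walk.not_nil_iff.mp hc1.not_nil
  obtain ⟨hqpath, hfe⟩ := (Walk.cons_isCycle_iff _ _).mp hc1
  simp only [Walk.edges_cons, List.mem_cons] at he1
  by_cases hcase : s(x, y) = s(x, z)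
  · exact ⟨x, z, h, q, hedge.trans hcase, hc1, fun f => hperm.mem_iff, hsupp⟩
  · have heq : s(x, y) ∈ q.edges := he1.resolve_left hcase
    -- q : Walk z x, path ending at x, contains s(y,x)
    obtain ⟨q2, h2, rfl⟩ := lastEdge q hqpath (by rwa [Sym2.eq_swap] at heq)
    -- new cycle at y : cons h2 (cons h q2) with q2 : Walk z y
    have hq2supp : q2.support.Nodup ∧ x ∉ q2.support := by
      have := hqpath.support_nodup
      rw [Walk.support_concat, List.nodup_append] at this
      exact ⟨this.1, fun hx' => this.2.2 x hx' x (List.mem_singleton.mpr rfl) rfl⟩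
    have hpath2 : (Walk.cons h q2).IsPath := by
      rw [Walk.isPath_def, Walk.support_cons, List.nodup_cons]
      exact ⟨hq2supp.2, hq2supp.1⟩
    have hq2edges : s(y, x) ∉ q2.edges := by
      have := hc1.isTrail.edges_nodup
      rw [Walk.edges_cons, Walk.edges_concat, List.concat_eq_append,
        List.nodup_cons, List.nodup_append] at this
      exact fun hmem => this.2.2.2 _ hmem _ (List.mem_singleton.mpr rfl) rfl
    have hcyc2 : (Walk.cons h2 (Walk.cons h q2)).IsCycle := by
      rw [Walk.cons_isCycle_iff]
      refine ⟨hpath2, ?_⟩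
      rw [Walk.edges_cons]
      intro hmem
      rcases List.mem_cons.mp hmem with hmem | hmem
      · rw [Sym2.eq_swap] at hmem; exact hcase hmem
      · exact hq2edges hmem
    refine ⟨y, x, h2, Walk.cons h q2, Sym2.eq_swap, hcyc2, ?_, ?_⟩
    · intro f
      rw [← hperm.mem_iff]
      simp only [Walk.edges_cons, Walk.edges_concat, List.concat_eq_append,
        List.mem_cons, List.mem_append, List.mem_singleton]
      tauto
    · intro zz
      have hy : y ∈ q2.support := q2.end_mem_support
      rw [← hsupp zz]
      simp only [Walk.support_cons, Walk.support_concat, List.concat_eq_append,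
        List.mem_cons, List.mem_append, List.mem_singleton]
      aesop

/-- Given a cycle, an edge on it, and two distinct vertices on it, there is an
arc (path) of the cycle from v to u containing the edge. -/
lemma arc_of_cycle {w u v : V} (C : G.Walk w w) (hC : C.IsCycle) {e : Sym2 V}
    (he : e ∈ C.edges) (hu : u ∈ C.support) (hv : v ∈ C.support) (huv : u ≠ v) :
    ∃ (A : G.Walk v u), A.IsPath ∧ e ∈ A.edges ∧
      (∀ z ∈ A.support, z ∈ C.support) ∧ (∀ f ∈ A.edges, f ∈ C.edges) := by
  classical
  set C1 := C.rotate u hu with hC1def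
  have hC1 : C1.IsCycle := hC.rotate hu
  have hperm : List.Perm C1.edges C.edges := (Walk.rotate_edges C u hu).perm
  have hsupp : ∀ z, z ∈ C1.support ↔ z ∈ C.support := fun z =>
    mem_support_rotate_iff C hC hu
  have he1 : e ∈ C1.edges := hperm.mem_iff.mpr he
  have hv1 : v ∈ C1.support := (hsupp v).mpr hv
  clear_value C1
  obtain ⟨z, h, q, rfl⟩ := Walk.not_nil_iff.mp hC1.not_nil
  obtain ⟨hqpath, hfe⟩ := (Walk.cons_isCycle_iff _ _).mp hC1
  have hvq : v ∈ q.support := by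
    rcases List.mem_cons.mp ((Walk.support_cons h q) ▸ hv1) with rfl | hvq
    · exact absurd rfl huv
    · exact hvq
  -- split q at v
  have hspec := q.take_spec hvq
  set B1 := q.takeUntil v hvq with hB1def
  set B2 := q.dropUntil v hvq with hB2def
  have hB1path : B1.IsPath := hqpath.takeUntil hvq
  have hB2path : B2.IsPath := hqpath.dropUntil hvq
  have hB1supp : ∀ x ∈ B1.support, x ∈ q.support := fun x hx =>
    Walk.support_takeUntil_subset q hvq hx
  have hB2supp : ∀ x ∈ B2.support, x ∈ q.support := fun x hx =>
    Walk.support_dropUntil_subset q hvq hx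
  have hB1edges : ∀ f ∈ B1.edges, f ∈ q.edges := fun f hf =>
    Walk.edges_takeUntil_subset q hvq hf
  have hB2edges : ∀ f ∈ B2.edges, f ∈ q.edges := fun f hf =>
    Walk.edges_dropUntil_subset q hvq hf
  have hqC : ∀ x ∈ q.support, x ∈ C.support := by
    intro x hx
    exact (hsupp x).mp (by simp [Walk.support_cons, hx])
  have hqCe : ∀ f ∈ q.edges, f ∈ C.edges := by
    intro f hf
    exact hperm.mem_iff.mp (by simp [Walk.edges_cons, hf])
  have hfirstC : s(u, z) ∈ C.edges := hperm.mem_iff.mp (by simp [Walk.edges_cons])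
  -- where is e?
  rw [Walk.edges_cons, List.mem_cons] at he1
  have hqsplit : e ∈ B1.edges ∨ e ∈ B2.edges ∨ e = s(u, z) := by
    rcases he1 with he1 | he1
    · exact Or.inr (Or.inr he1)
    · rw [← hspec, Walk.edges_append, List.mem_append] at he1
      tauto
  rcases hqsplit with hcase | hcase | hcase
  · -- e in first part: Arc := (cons h B1).reverse
    have hux : u ∉ B1.support := by
      intro hux
      -- u appears in B1.support and in B2.support.tail, contradicting q path
      have hnd := hqpath.support_nodup
      rw [← hspec, Walk.support_append, List.nodup_append] at hnd
      have huB2 : u ∈ B2.support.tail := by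
        have : u ∈ B2.support := B2.end_mem_support
        rw [B2.support_eq_cons, List.mem_cons] at this
        exact this.resolve_left huv
      exact hnd.2.2 u hux u huB2 rfl
    have hpath : (Walk.cons h B1).IsPath := by
      rw [Walk.isPath_def, Walk.support_cons, List.nodup_cons]
      exact ⟨fun hc => hux hc, hB1path.support_nodup⟩
    refine ⟨(Walk.cons h B1).reverse, hpath.reverse, ?_, ?_, ?_⟩
    · rw [Walk.edges_reverse, List.mem_reverse, Walk.edges_cons]
      exact List.mem_cons_of_mem _ hcase
    · intro x hx
      rw [Walk.support_reverse, List.mem_reverse, Walk.support_cons, List.mem_cons] at hx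
      rcases hx with rfl | hx
      · exact hu
      · exact hqC x (hB1supp x hx)
    · intro f hf
      rw [Walk.edges_reverse, List.mem_reverse, Walk.edges_cons, List.mem_cons] at hf
      rcases hf with rfl | hf
      · exact hfirstC
      · exact hqCe f (hB1edges f hf)
  · -- e in second part: Arc := B2
    exact ⟨B2, hB2path, hcase, fun x hx => hqC x (hB2supp x hx),
      fun f hf => hqCe f (hB2edges f hf)⟩
  · -- e is the first edge: Arc := (cons h B1).reverse again
    have hux : u ∉ B1.support := by
      intro hux
      have hnd := hqpath.support_nodup
      rw [← hspec, Walk.support_append, List.nodup_append] at hnd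
      have huB2 : u ∈ B2.support.tail := by
        have : u ∈ B2.support := B2.end_mem_support
        rw [B2.support_eq_cons, List.mem_cons] at this
        exact this.resolve_left huv
      exact hnd.2.2 u hux u huB2 rfl
    have hpath : (Walk.cons h B1).IsPath := by
      rw [Walk.isPath_def, Walk.support_cons, List.nodup_cons]
      exact ⟨fun hc => hux hc, hB1path.support_nodup⟩
    refine ⟨(Walk.cons h B1).reverse, hpath.reverse, ?_, ?_, ?_⟩
    · rw [Walk.edges_reverse, List.mem_reverse, Walk.edges_cons]
      exact hcase ▸ List.mem_cons_self
    · intro x hx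
      rw [Walk.support_reverse, List.mem_reverse, Walk.support_cons, List.mem_cons] at hx
      rcases hx with rfl | hx
      · exact hu
      · exact hqC x (hB1supp x hx)
    · intro f hf
      rw [Walk.edges_reverse, List.mem_reverse, Walk.edges_cons, List.mem_cons] at hf
      rcases hf with rfl | hf
      · exact hfirstC
      · exact hqCe f (hB1edges f hf)

/-- If a walk meets the support of another walk only in `u`, then none of its
edges is an edge of the other walk. -/
lemma edge_not_mem_of_support_cond {a b c d u : V} (W : G.Walk a b) (C' : G.Walk c d)
    (h : ∀ z ∈ W.support, z ∈ C'.support → z = u) :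
    ∀ f ∈ W.edges, f ∉ C'.edges := by
  intro f
  induction f using Sym2.ind with
  | _ x y =>
    intro hf hfC
    have hadj : G.Adj x y := W.adj_of_mem_edges hf
    have hx := h x (W.fst_mem_support_of_mem_edges hf) (C'.fst_mem_support_of_mem_edges hfC)
    have hy := h y (W.snd_mem_support_of_mem_edges hf) (C'.snd_mem_support_of_mem_edges hfC)
    exact hadj.ne (hx.trans hy.symm)

lemma trans_core {w₁ w₂ : V} (C : G.Walk w₁ w₁) (hC : C.IsCycle)
    (D : G.Walk w₂ w₂) (hD : D.IsCycle) {e₁ e₂ e₃ : Sym2 V}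
    (h1 : e₁ ∈ C.edges) (h2C : e₂ ∈ C.edges) (h2D : e₂ ∈ D.edges)
    (h3 : e₃ ∈ D.edges) (h3C : e₃ ∉ C.edges) :
    ∃ (r : V) (c : G.Walk r r), c.IsCycle ∧ e₁ ∈ c.edges ∧ e₃ ∈ c.edges := by
  classical
  obtain ⟨x, y, hxy, P, he3, hPcyc, hDe, hDs⟩ := cycle_decomp_at_edge D hD h3
  obtain ⟨hPpath, he3P⟩ := (Walk.cons_isCycle_iff _ _).mp hPcyc
  have h2P : e₂ ∈ P.edges := by
    have h' := (hDe e₂).mpr h2D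
    rw [Walk.edges_cons, List.mem_cons] at h'
    rcases h' with h' | h'
    · exact absurd (show e₃ ∈ C.edges by rw [he3, ← h']; exact h2C) h3C
    · exact h'
  -- endpoints of e₂
  obtain ⟨a, b, rfl⟩ : ∃ a b, e₂ = s(a, b) := by
    induction e₂ using Sym2.ind with | _ a b => exact ⟨a, b, rfl⟩
  have hadj_ab : G.Adj a b := P.adj_of_mem_edges h2P
  have haP : a ∈ P.support := P.fst_mem_support_of_mem_edges h2P
  have hbP : b ∈ P.support := P.snd_mem_support_of_mem_edges h2P
  have haC : a ∈ C.support := C.fst_mem_support_of_mem_edges h2C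
  have hbC : b ∈ C.support := C.snd_mem_support_of_mem_edges h2C
  -- first hit from the y side
  obtain ⟨u, Q1, R, hPeq, huC, hQ1⟩ :=
    firstHit P {t | t ∈ C.support} ⟨a, haP, haC⟩
  have huC : u ∈ C.support := huC
  -- first hit from the x side
  obtain ⟨v, Q2, R2, hReq, hvC, hQ2⟩ :=
    firstHit R.reverse {t | t ∈ C.support}
      ⟨u, by rw [Walk.support_reverse, List.mem_reverse]; exact R.start_mem_support, huC⟩
  have hvC : v ∈ C.support := hvC
  -- basic path facts
  have hQ1path : Q1.IsPath := Walk.IsPath.of_append_left (hPeq ▸ hPpath)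
  have hRpath : R.IsPath := Walk.IsPath.of_append_right (hPeq ▸ hPpath)
  have hQ2path : Q2.IsPath := Walk.IsPath.of_append_left (hReq ▸ hRpath.reverse)
  have hR2path : R2.IsPath := Walk.IsPath.of_append_right (hReq ▸ hRpath.reverse)
  have hQ1S : ∀ z ∈ Q1.support, z ∈ C.support → z = u := fun z hz hzC =>
    by_contra fun hne => hQ1 z hz hne hzC
  have hQ2S : ∀ z ∈ Q2.support, z ∈ C.support → z = v := fun z hz hzC =>
    by_contra fun hne => hQ2 z hz hne hzC
  have hQ2subR : ∀ z ∈ Q2.support, z ∈ R.support := by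
    intro z hz
    have : z ∈ R.reverse.support := by
      rw [hReq]; exact Walk.subset_support_append_left _ _ hz
    rwa [Walk.support_reverse, List.mem_reverse] at this
  have hQ1R : ∀ z, z ∈ Q1.support → z ∈ R.support → z = u := by
    intro z hz1 hzR
    have hnd := hPpath.support_nodup
    rw [hPeq, Walk.support_append, List.nodup_append] at hnd
    rcases List.mem_cons.mp ((R.support_eq_cons) ▸ hzR) with rfl | hzR'
    · rfl
    · exact absurd hzR' (fun h => hnd.2.2 z hz1 z h rfl)
  -- u ≠ v
  have huv : u ≠ v := by
    intro h'
    subst h'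
    have hR2nil : R2 = Walk.nil := path_loop_nil hR2path
    have hRS : ∀ z ∈ R.support, z ∈ C.support → z = u := by
      intro z hz hzC
      have hz' : z ∈ R.reverse.support := by
        rw [Walk.support_reverse, List.mem_reverse]; exact hz
      rw [hReq] at hz'
      rcases (Walk.mem_support_append_iff _ _).mp hz' with hz' | hz'
      · exact hQ2S z hz' hzC
      · rw [hR2nil] at hz'
        simpa using hz'
    have ha' : a = u := by
      rcases (Walk.mem_support_append_iff _ _).mp (hPeq ▸ haP) with h'' | h''
      · exact hQ1S a h'' haC
      · exact hRS a h'' haC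
    have hb' : b = u := by
      rcases (Walk.mem_support_append_iff _ _).mp (hPeq ▸ hbP) with h'' | h''
      · exact hQ1S b h'' hbC
      · exact hRS b h'' hbC
    exact hadj_ab.ne (ha'.trans hb'.symm)
  have hdisj12 : ∀ z, z ∈ Q1.support → z ∈ Q2.support → False := by
    intro z hz1 hz2
    have hzu := hQ1R z hz1 (hQ2subR z hz2)
    subst hzu
    exact huv (hQ2S z hz2 huC)
  -- edges facts
  have hQ1E : ∀ f ∈ Q1.edges, f ∉ C.edges := edge_not_mem_of_support_cond Q1 C hQ1S
  have hQ2E : ∀ f ∈ Q2.edges, f ∉ C.edges := edge_not_mem_of_support_cond Q2 C hQ2S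
  have hQ1edgesP : ∀ f ∈ Q1.edges, f ∈ P.edges := by
    intro f hf; rw [hPeq, Walk.edges_append]; exact List.mem_append_left _ hf
  have hQ2edgesR : ∀ f ∈ Q2.edges, f ∈ R.edges := by
    intro f hf
    have : f ∈ R.reverse.edges := by
      rw [hReq, Walk.edges_append]; exact List.mem_append_left _ hf
    rwa [Walk.edges_reverse, List.mem_reverse] at this
  have hRedgesP : ∀ f ∈ R.edges, f ∈ P.edges := by
    intro f hf; rw [hPeq, Walk.edges_append]; exact List.mem_append_right _ hf
  have hQ1Q2E : ∀ f, f ∈ Q1.edges → f ∈ Q2.edges → False := by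
    intro f hf1 hf2
    have hnd := hPpath.isTrail.edges_nodup
    rw [hPeq, Walk.edges_append, List.nodup_append] at hnd
    exact hnd.2.2 f hf1 f (hQ2edgesR f hf2) rfl
  have he3yx : e₃ = s(y, x) := he3.trans (Sym2.eq_swap)
  have he3Q1 : s(y, x) ∉ Q1.edges := fun hf =>
    he3P (by rw [Sym2.eq_swap] at hf; exact hQ1edgesP _ hf)
  have he3Q2 : s(y, x) ∉ Q2.edges := fun hf =>
    he3P (by rw [Sym2.eq_swap] at hf; exact hRedgesP _ (hQ2edgesR _ hf))
  -- the arc on C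
  obtain ⟨A, hApath, heA, hAsupp, hAedges⟩ := arc_of_cycle C hC h1 huC hvC huv
  -- the new cycle
  set B : G.Walk u v := Q1.reverse.append (Walk.cons hxy.symm Q2) with hBdef
  set W : G.Walk v v := A.append B with hWdef
  have hWedges : W.edges = A.edges ++ (Q1.edges.reverse ++ (s(y, x) :: Q2.edges)) := by
    rw [hWdef, hBdef, Walk.edges_append, Walk.edges_append, Walk.edges_cons,
      Walk.edges_reverse]
  have he1W : e₁ ∈ W.edges := by
    rw [hWedges]; exact List.mem_append_left _ heA
  have he3W : e₃ ∈ W.edges := by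
    rw [hWedges, he3yx]
    exact List.mem_append_right _ (List.mem_append_right _ List.mem_cons_self)
  -- supports of pieces
  have hT2 : ∀ z ∈ Q1.reverse.support.tail, z ∈ Q1.support ∧ z ≠ u := by
    intro z hz
    have hnd := hQ1path.reverse.support_nodup
    rw [Q1.reverse.support_eq_cons, List.nodup_cons] at hnd
    constructor
    · have : z ∈ Q1.reverse.support := List.mem_of_mem_tail hz
      rwa [Walk.support_reverse, List.mem_reverse] at this
    · rintro rfl; exact hnd.1 hz
  have hvA : v ∉ A.support.tail := by
    have hnd := hApath.support_nodup
    rw [A.support_eq_cons, List.nodup_cons] at hnd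
    exact hnd.1
  have hAtailC : ∀ z ∈ A.support.tail, z ∈ C.support := fun z hz =>
    hAsupp z (List.mem_of_mem_tail hz)
  -- trail
  have hWtrail : W.IsTrail := by
    rw [Walk.isTrail_def, hWedges]
    rw [List.nodup_append, List.nodup_append, List.nodup_cons]
    refine ⟨hApath.isTrail.edges_nodup,
      ⟨List.nodup_reverse.mpr hQ1path.isTrail.edges_nodup,
       ⟨he3Q2, hQ2path.isTrail.edges_nodup⟩, ?_⟩, ?_⟩
    · -- Q1.edges.reverse disjoint from s(y,x) :: Q2.edges
      intro f hf g hf' hfg; subst hfg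
      rw [List.mem_reverse] at hf
      rcases List.mem_cons.mp hf' with rfl | hf'
      · exact he3Q1 hf
      · exact hQ1Q2E f hf hf'
    · -- A.edges disjoint from the rest
      intro f hf g hf' hfg; subst hfg
      have hfC : f ∈ C.edges := hAedges f hf
      rcases List.mem_append.mp hf' with hf' | hf'
      · exact hQ1E f (List.mem_reverse.mp hf') hfC
      · rcases List.mem_cons.mp hf' with rfl | hf'
        · exact h3C (he3yx ▸ hfC)
        · exact hQ2E f hf' hfC
  -- support tail nodup
  have hWtail : W.support.tail = A.support.tail ++ (Q1.reverse.support.tail ++ Q2.support) := by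
    rw [hWdef, hBdef, Walk.tail_support_append, Walk.tail_support_append,
      Walk.support_cons, List.tail_cons]
  have hWnodup : W.support.tail.Nodup := by
    rw [hWtail, List.nodup_append, List.nodup_append]
    refine ⟨hApath.support_nodup.tail,
      ⟨hQ1path.reverse.support_nodup.tail, hQ2path.support_nodup, ?_⟩, ?_⟩
    · -- Q1 tail part disjoint from Q2.support
      intro z hz z' hz' hzz; subst hzz
      exact hdisj12 z (hT2 z hz).1 hz'
    · -- A.support.tail disjoint from the rest
      intro z hz z' hz' hzz; subst hzz
      have hzC : z ∈ C.support := hAtailC z hz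
      rcases List.mem_append.mp hz' with hz' | hz'
      · exact (hT2 z hz').2 (hQ1S z (hT2 z hz').1 hzC)
      · exact hvA ((hQ2S z hz' hzC) ▸ hz)
  have hWcyc : W.IsCycle := by
    rw [Walk.isCycle_def]
    refine ⟨hWtrail, ?_, hWnodup⟩
    intro h'
    rw [h'] at he3W
    simp at he3W
  exact ⟨v, W, hWcyc, he1W, he3W⟩

/-- Two edges of an undirected graph are equivalent iff they are equal or
lie on a common simple cycle; this is an equivalence relation on the edge set. -/
theorem stmt1 {V : Type} [Fintype V] (G : SimpleGraph V) :
    Equivalence (fun e₁ e₂ : G.edgeSet =>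
      e₁ = e₂ ∨ ∃ (v : V) (c : G.Walk v v), c.IsCycle ∧
        (e₁ : Sym2 V) ∈ c.edges ∧ (e₂ : Sym2 V) ∈ c.edges) := by
  constructor
  · intro e
    exact Or.inl rfl
  · rintro e₁ e₂ (rfl | ⟨v, c, hc, h1, h2⟩)
    · exact Or.inl rfl
    · exact Or.inr ⟨v, c, hc, h2, h1⟩
  · rintro e₁ e₂ e₃ h12 h23
    rcases h12 with rfl | ⟨v, c, hc, h1, h2⟩
    · exact h23
    rcases h23 with rfl | ⟨w, d, hd, h2', h3'⟩
    · exact Or.inr ⟨v, c, hc, h1, h2⟩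
    by_cases h13 : e₁ = e₃
    · exact Or.inl h13
    by_cases h3c : (e₃ : Sym2 V) ∈ c.edges
    · exact Or.inr ⟨v, c, hc, h1, h3c⟩
    · obtain ⟨r, W, hW, hW1, hW3⟩ := trans_core c hc d hd h1 h2 h2' h3' h3c
      exact Or.inr ⟨r, W, hW, hW1, hW3⟩
end

section
/- If G is a 2-vertex-connected undirected graph and x, y, z are three distinct vertices of G, then there exists a simple path from x to y passing through z. -/
open SimpleGraph Walk

section Aux
variable {V : Type} {G : SimpleGraph V}

/-- Appending two paths whose supports meet only at the junction gives a path. -/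
lemma aux_isPath_append {a b c : V} {p : G.Walk a b} {q : G.Walk b c}
    (hp : p.IsPath) (hq : q.IsPath)
    (h : ∀ v, v ∈ p.support → v ∈ q.support → v = b) :
    (p.append q).IsPath := by
  induction p with
  | nil => simpa using hq
  | cons hadj p ih =>
    rw [Walk.cons_append, Walk.cons_isPath_iff]
    rw [Walk.cons_isPath_iff] at hp
    constructor
    · exact ih hp.1 hq fun v hv hv' => h v (by simp [hv]) hv'
    · rw [Walk.mem_support_append_iff]
      rintro (h1 | h2)
      · exact hp.2 h1
      · have := h _ (by simp [p.end_mem_support]) h2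
        subst this
        exact hp.2 p.end_mem_support
/-- The two halves of a path split at `b` meet only at `b`. -/
lemma aux_split [DecidableEq V] {a c b : V} {p : G.Walk a c} (hp : p.IsPath)
    (hb : b ∈ p.support) :
    ∀ v, v ∈ (p.takeUntil b hb).support → v ∈ (p.dropUntil b hb).support → v = b := by
  intro v h1 h2
  have hnd := hp.support_nodup
  rw [← p.take_spec hb, Walk.support_append, List.nodup_append] at hnd
  rw [(p.dropUntil b hb).support_eq_cons, List.mem_cons] at h2
  rcases h2 with h2 | h2
  · exact h2
  · exact absurd h1 (fun h1 => hnd.2.2 _ h1 _ h2 rfl)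

/-- First vertex of a walk lying in a set `S`. -/
lemma aux_first_hit {a b : V} (p : G.Walk a b) (S : Set V) (hb : b ∈ S) :
    ∃ (c : V) (q : G.Walk a c), c ∈ S ∧ (∀ v ∈ q.support, v ∈ S → v = c) ∧
      (∀ v ∈ q.support, v ∈ p.support) ∧ (p.IsPath → q.IsPath) := by
  induction p with
  | nil =>
    exact ⟨_, Walk.nil, hb, fun v hv _ => by simpa using hv, fun v hv => hv,
      fun _ => Walk.IsPath.nil⟩
  | cons hadj p ih =>
    rename_i u w x
    by_cases hA : u ∈ S
    · refine ⟨u, Walk.nil, hA, fun v hv _ => by simpa using hv, fun v hv => ?_,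
        fun _ => Walk.IsPath.nil⟩
      simp only [Walk.support_nil, List.mem_singleton] at hv
      subst hv
      exact Walk.start_mem_support _
    · obtain ⟨c, q, hc, hmin, hsub, hpath⟩ := ih hb
      refine ⟨c, Walk.cons hadj q, hc, ?_, ?_, ?_⟩
      · intro v hv hvS
        rw [Walk.support_cons, List.mem_cons] at hv
        rcases hv with rfl | hv
        · exact absurd hvS hA
        · exact hmin v hv hvS
      · intro v hv
        rw [Walk.support_cons, List.mem_cons] at hv ⊢
        rcases hv with rfl | hv
        · exact Or.inl rfl
        · exact Or.inr (hsub v hv)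
      · intro hcons
        rw [Walk.cons_isPath_iff] at hcons ⊢
        exact ⟨hpath hcons.1, fun h => hcons.2 (hsub u h)⟩

/-- In a 2-connected graph, any two vertices distinct from `v` are joined
by a path avoiding `v`. -/
lemma aux_avoid (hbicon : ∀ v : V, (G.induce ({v}ᶜ : Set V)).Connected)
    (v a b : V) (ha : a ≠ v) (hb : b ≠ v) :
    ∃ p : G.Walk a b, p.IsPath ∧ v ∉ p.support := by
  haveI := Classical.decEq V
  obtain ⟨w⟩ := (hbicon v) ⟨a, ha⟩ ⟨b, hb⟩
  refine ⟨(w.map (Embedding.induce ({v}ᶜ : Set V)).toHom).bypass,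
    Walk.bypass_isPath _, fun hv => ?_⟩
  have h2 : v ∈ (w.map (Embedding.induce ({v}ᶜ : Set V)).toHom).support :=
    Walk.support_bypass_subset _ hv
  rw [Walk.support_map, List.mem_map] at h2
  obtain ⟨x, _, hx⟩ := h2
  exact x.2 hx

lemma aux_conn [Fintype V] (hcard : 3 ≤ Fintype.card V)
    (hbicon : ∀ v : V, (G.induce ({v}ᶜ : Set V)).Connected) : G.Connected := by
  haveI := Classical.decEq V
  have hne : Nonempty V := Fintype.card_pos_iff.mp (by omega)
  refine ⟨fun u w => ?_⟩
  rcases eq_or_ne u w with rfl | huw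
  · rfl
  have hs : ∃ s : V, s ≠ u ∧ s ≠ w := by
    by_contra h
    push_neg at h
    have : (Finset.univ : Finset V) ⊆ {u, w} := by
      intro s _
      rcases Classical.em (s = u) with rfl | hsu
      · simp
      · simp [h s hsu]
    have := Finset.card_le_card this
    have h2 : ({u, w} : Finset V).card ≤ 2 := Finset.card_insert_le _ _ |>.trans (by simp)
    simp only [Finset.card_univ] at this
    omega
  obtain ⟨s, hsu, hsw⟩ := hs
  obtain ⟨p, _, _⟩ := aux_avoid hbicon s u w (Ne.symm hsu) (Ne.symm hsw)
  exact ⟨p⟩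

lemma aux_key [Fintype V] [DecidableEq V] (hcard : 3 ≤ Fintype.card V)
    (hbicon : ∀ v : V, (G.induce ({v}ᶜ : Set V)).Connected) :
    ∀ n : ℕ, ∀ x y z : V, x ≠ y → x ≠ z → y ≠ z → G.dist z y = n →
      ∃ p : G.Walk x y, p.IsPath ∧ z ∈ p.support := by
  intro n
  induction n using Nat.strong_induction_on with
  | _ n ih =>
  intro x y z hxy hxz hyz hdist
  have hconn := aux_conn hcard hbicon
  have hr : G.Reachable z y := hconn.preconnected z y
  have hnpos : 0 < n := by
    rw [← hdist]; exact hr.pos_dist_of_ne (Ne.symm hyz)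
  obtain ⟨p, hp⟩ := hr.exists_walk_length_eq_dist
  obtain ⟨w, hadj, q, hq⟩ := Walk.exists_eq_cons_of_ne hyz p.reverse
  have hlen : q.length + 1 = n := by
    have h := congrArg Walk.length hq
    rw [Walk.length_reverse, hp, hdist, Walk.length_cons] at h
    omega
  have hwy : w ≠ y := hadj.ne'
  rcases eq_or_ne w z with rfl | hwz
  · -- base case : z is adjacent to y
    obtain ⟨N, hN, hyN⟩ := aux_avoid hbicon y x w hxy hwy
    refine ⟨N.append (Walk.cons hadj.symm Walk.nil), ?_, ?_⟩
    · refine aux_isPath_append hN ?_ ?_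
      · rw [Walk.cons_isPath_iff]
        exact ⟨Walk.IsPath.nil, by simpa using hwy⟩
      · intro v hv hv'
        simp only [Walk.support_cons, Walk.support_nil, List.mem_cons,
          List.mem_singleton, List.mem_nil_iff, or_false] at hv'
        rcases hv' with rfl | rfl
        · rfl
        · exact absurd hv hyN
    · rw [Walk.mem_support_append_iff]
      exact Or.inl N.end_mem_support
  · -- inductive step
    have hdzw : G.dist z w = q.length := by
      have h1 : G.dist z w ≤ q.length := by
        have h := SimpleGraph.dist_le q.reverse
        rwa [Walk.length_reverse] at h
      have h2 : G.dist z y ≤ G.dist z w + G.dist w y := hconn.dist_triangle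
      have h3 : G.dist w y = 1 := SimpleGraph.dist_eq_one_iff_adj.mpr hadj.symm
      omega
    have hm : q.length < n := by omega
    rcases eq_or_ne w x with rfl | hwx
    · obtain ⟨Q, hQ, hzQ⟩ := ih q.length hm y w z (Ne.symm hxy) hyz hxz hdzw
      exact ⟨Q.reverse, hQ.reverse, by rwa [Walk.support_reverse, List.mem_reverse]⟩
    · obtain ⟨P, hP, hzP⟩ := ih q.length hm x w z (Ne.symm hwx) hxz hwz hdzw
      by_cases hyP : y ∈ P.support
      · have hzTD : z ∈ (P.takeUntil y hyP).support ∨ z ∈ (P.dropUntil y hyP).support := by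
          have h := hzP
          rw [← P.take_spec hyP, Walk.mem_support_append_iff] at h
          exact h
        rcases hzTD with hzT | hzD
        · exact ⟨P.takeUntil y hyP, hP.takeUntil hyP, hzT⟩
        · set D := P.dropUntil y hyP with hDdef
          have hDpath : D.IsPath := hP.dropUntil hyP
          obtain ⟨N, hNpath, hyN⟩ := aux_avoid hbicon y x z hxy (Ne.symm hyz)
          obtain ⟨u, N1, huD, hfirst, hsub, hN1p⟩ :=
            aux_first_hit N {v | v ∈ D.support} hzD
          have hN1 : N1.IsPath := hN1p hNpath
          have huy : u ≠ y := fun h => hyN (h ▸ hsub u N1.end_mem_support)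
          have huD' : u ∈ D.support := huD
          have hDsplit := aux_split hDpath huD'
          have hzD12 : z ∈ (D.takeUntil u huD').support ∨ z ∈ (D.dropUntil u huD').support := by
            have h := hzD
            rw [← D.take_spec huD', Walk.mem_support_append_iff] at h
            exact h
          rcases hzD12 with hz1 | hz2
          · refine ⟨N1.append (D.takeUntil u huD').reverse, ?_, ?_⟩
            · refine aux_isPath_append hN1 (hDpath.takeUntil huD').reverse ?_
              intro v hv hv'
              rw [Walk.support_reverse, List.mem_reverse] at hv'
              exact hfirst v hv (Walk.support_takeUntil_subset _ huD' hv')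
            · rw [Walk.mem_support_append_iff]
              right
              rwa [Walk.support_reverse, List.mem_reverse]
          · have hyD2 : y ∉ (D.dropUntil u huD').support := by
              intro h
              exact huy (hDsplit y (Walk.start_mem_support _) h).symm
            have hRpath : ((D.dropUntil u huD').append (Walk.cons hadj.symm Walk.nil)).IsPath := by
              refine aux_isPath_append (hDpath.dropUntil huD') ?_ ?_
              · rw [Walk.cons_isPath_iff]
                exact ⟨Walk.IsPath.nil, by simpa using hwy⟩
              · intro v hv hv'
                simp only [Walk.support_cons, Walk.support_nil, List.mem_cons,
          List.mem_singleton, List.mem_nil_iff, or_false] at hv'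
                rcases hv' with rfl | rfl
                · rfl
                · exact absurd hv hyD2
            refine ⟨N1.append ((D.dropUntil u huD').append (Walk.cons hadj.symm Walk.nil)), ?_, ?_⟩
            · refine aux_isPath_append hN1 hRpath ?_
              intro v hv hv'
              rw [Walk.mem_support_append_iff] at hv'
              rcases hv' with hv' | hv'
              · exact hfirst v hv (Walk.support_dropUntil_subset _ huD' hv')
              · simp only [Walk.support_cons, Walk.support_nil, List.mem_cons,
          List.mem_singleton, List.mem_nil_iff, or_false] at hv'
                rcases hv' with rfl | rfl
                · exact hfirst v hv D.end_mem_support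
                · exact absurd (hsub _ hv) hyN
            · rw [Walk.mem_support_append_iff]
              right
              rw [Walk.mem_support_append_iff]
              exact Or.inl hz2
      · refine ⟨P.append (Walk.cons hadj.symm Walk.nil), ?_, ?_⟩
        · refine aux_isPath_append hP ?_ ?_
          · rw [Walk.cons_isPath_iff]
            exact ⟨Walk.IsPath.nil, by simpa using hwy⟩
          · intro v hv hv'
            simp only [Walk.support_cons, Walk.support_nil, List.mem_cons,
          List.mem_singleton, List.mem_nil_iff, or_false] at hv'
            rcases hv' with rfl | rfl
            · rfl
            · exact absurd hv hyP
        · rw [Walk.mem_support_append_iff]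
          exact Or.inl hzP

end Aux

/-- If `G` is a 2-vertex-connected undirected graph and `x, y, z` are three
distinct vertices, then there is a simple path from `x` to `y` passing through `z`. -/
theorem stmt3 {V : Type} [Fintype V] (G : SimpleGraph V)
    (hcard : 3 ≤ Fintype.card V)
    (hbicon : ∀ v : V, (G.induce ({v}ᶜ : Set V)).Connected)
    (x y z : V) (hxy : x ≠ y) (hxz : x ≠ z) (hyz : y ≠ z) :
    ∃ p : G.Walk x y, p.IsPath ∧ z ∈ p.support := by
  haveI := Classical.decEq V
  exact aux_key hcard hbicon (G.dist z y) x y z hxy hxz hyz rfl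
end

section
/- If G is a 2-vertex-connected undirected graph, x and y are distinct vertices, and e is an edge of G, then there exists a simple path from x to y that traverses the edge e. -/
open SimpleGraph Walk Sum
set_option linter.unusedSectionVars false

namespace Stmt4Aux

variable {V : Type} [DecidableEq V] {G : SimpleGraph V}

lemma append_isPath {u v w : V} {p : G.Walk u v} {q : G.Walk v w}
    (hp : p.IsPath) (hq : q.IsPath)
    (h : ∀ t, t ∈ p.support → t ∈ q.support → t = v) : (p.append q).IsPath := by
  rw [Walk.isPath_def, Walk.support_append]
  refine List.Nodup.append hp.support_nodup ?_ ?_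
  · have := hq.support_nodup
    rw [Walk.support_eq_cons] at this
    exact this.of_cons
  · intro t ht ht'
    have htq : t ∈ q.support := by
      rw [Walk.support_eq_cons]; exact List.mem_cons_of_mem _ ht'
    have : t = v := h t ht htq
    subst this
    have := hq.support_nodup
    rw [Walk.support_eq_cons] at this
    exact List.Nodup.notMem this ht'

/-- if a vertex is in both takeUntil and dropUntil of a path, it's the split vertex -/
lemma eq_of_mem_take_drop {u v w z : V} {p : G.Walk v w} (hp : p.IsPath)
    (h : u ∈ p.support) (hz1 : z ∈ (p.takeUntil u h).support)
    (hz2 : z ∈ (p.dropUntil u h).support) : z = u := by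
  by_contra hne
  have hspec := Walk.take_spec p h
  have hnodup : ((p.takeUntil u h).append (p.dropUntil u h)).IsPath := by rwa [hspec]
  rw [Walk.isPath_def, Walk.support_append] at hnodup
  have hdisj := List.disjoint_of_nodup_append hnodup
  have hz2' : z ∈ (p.dropUntil u h).support.tail := by
    have heq := Walk.support_eq_cons (p.dropUntil u h)
    rw [heq, List.mem_cons] at hz2
    rcases hz2 with h' | h'
    · exact absurd h' hne
    · exact h'
  exact hdisj hz1 hz2'

/-- first vertex of a walk belonging to a set `S` -/
lemma firstHit {a b : V} (S : Set V) (p : G.Walk a b) (hb : b ∈ S) :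
    ∃ z, ∃ (q : G.Walk a z) (r : G.Walk z b), z ∈ S ∧ q.append r = p ∧
      ∀ t ∈ q.support, t ∈ S → t = z := by
  induction p with
  | nil =>
    exact ⟨_, Walk.nil, Walk.nil, hb, rfl, by intro t ht _; simpa using ht⟩
  | @cons c d b h p ih =>
    by_cases hc : c ∈ S
    · refine ⟨c, Walk.nil, Walk.cons h p, hc, rfl, ?_⟩
      intro t ht _; simpa using ht
    · obtain ⟨z, q, r, hz, heq, hmem⟩ := ih hb
      refine ⟨z, Walk.cons h q, r, hz, by rw [Walk.cons_append, heq], ?_⟩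
      intro t ht htS
      simp only [Walk.support_cons, List.mem_cons] at ht
      rcases ht with rfl | ht
      · exact absurd htS hc
      · exact hmem t ht htS

lemma reachable_induce_of_walk {s : Set V} :
    ∀ {a b : V} (p : G.Walk a b), (∀ c ∈ p.support, c ∈ s) →
    ∀ (ha : a ∈ s) (hb : b ∈ s), (G.induce s).Reachable ⟨a, ha⟩ ⟨b, hb⟩ := by
  intro a b p
  induction p with
  | nil => intro _ ha hb; rfl
  | @cons c d b h p ih =>
    intro hsupp ha hb
    have hd : d ∈ s := hsupp d (by simp)
    have hadj : (G.induce s).Adj ⟨c, ha⟩ ⟨d, hd⟩ := by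
      simp only [comap_adj, Function.Embedding.coe_subtype]
      exact h
    exact hadj.reachable.trans (ih (fun t ht => hsupp t (by simp [ht])) hd hb)

lemma exists_walk_avoiding {s : Set V} {a b : V} (ha : a ∈ s) (hb : b ∈ s)
    (h : (G.induce s).Reachable ⟨a, ha⟩ ⟨b, hb⟩) :
    ∃ p : G.Walk a b, p.IsPath ∧ ∀ c ∈ p.support, c ∈ s := by
  obtain ⟨w⟩ := h
  let p := w.map (SimpleGraph.Embedding.induce s).toHom
  have hsupp : ∀ c ∈ p.support, c ∈ s := by
    intro c hc
    rw [Walk.support_map] at hc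
    obtain ⟨d, _, rfl⟩ := List.mem_map.mp hc
    exact d.2
  exact ⟨p.bypass, Walk.bypass_isPath p, fun c hc => hsupp c (Walk.support_bypass_subset p hc)⟩

lemma exists_third {a b : V} [Fintype V] (hcard : 3 ≤ Fintype.card V) :
    ∃ c : V, c ≠ a ∧ c ≠ b := by
  by_contra hcon
  push_neg at hcon
  have hsub : (Finset.univ : Finset V) ⊆ {a, b} := by
    intro c _
    by_cases h : c = a
    · simp [h]
    · simp [hcon c h]
  have h1 := Finset.card_le_card hsub
  have h2 : ({a, b} : Finset V).card ≤ 2 := (Finset.card_insert_le _ _).trans (by simp)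
  rw [Finset.card_univ] at h1
  omega

lemma conn_of_bicon [Fintype V] (hcard : 3 ≤ Fintype.card V)
    (hbicon : ∀ v : V, (G.induce ({v}ᶜ : Set V)).Connected) : G.Connected := by
  have hne : Nonempty V := Fintype.card_pos_iff.mp (by omega)
  rw [connected_iff]
  refine ⟨fun a b => ?_, hne⟩
  rcases em (a = b) with rfl | hab
  · rfl
  obtain ⟨c, hca, hcb⟩ := exists_third (a := a) (b := b) hcard
  have ha : a ∈ ({c}ᶜ : Set V) := by simp [Ne.symm hca]
  have hb : b ∈ ({c}ᶜ : Set V) := by simp [Ne.symm hcb]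
  have hr := (hbicon c).preconnected ⟨a, ha⟩ ⟨b, hb⟩
  obtain ⟨p, _, _⟩ := exists_walk_avoiding ha hb hr
  exact ⟨p⟩

lemma exists_other_neighbor [Fintype V] (hcard : 3 ≤ Fintype.card V)
    (hbicon : ∀ v : V, (G.induce ({v}ᶜ : Set V)).Connected) {u v : V} (huv : u ≠ v) :
    ∃ t, G.Adj u t ∧ t ≠ v := by
  obtain ⟨c, hcu, hcv⟩ := exists_third (a := u) (b := v) hcard
  have hu : u ∈ ({v}ᶜ : Set V) := by simp [huv]
  have hc : c ∈ ({v}ᶜ : Set V) := by simp [hcv]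
  obtain ⟨p⟩ := (hbicon v).preconnected ⟨u, hu⟩ ⟨c, hc⟩
  have hne : (⟨u, hu⟩ : ({v}ᶜ : Set V)) ≠ ⟨c, hc⟩ := by
    simp [Subtype.ext_iff]; exact Ne.symm hcu
  obtain ⟨d, h, q, rfl⟩ := Walk.exists_eq_cons_of_ne hne p
  have hd := d.2
  simp only [Set.mem_compl_iff, Set.mem_singleton_iff] at hd
  exact ⟨↑d, by simpa using h, hd⟩

lemma whitney [Fintype V] (hcard : 3 ≤ Fintype.card V)
    (hbicon : ∀ v : V, (G.induce ({v}ᶜ : Set V)).Connected) :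
    ∀ n : ℕ, ∀ u v : V, u ≠ v → G.dist u v = n →
    ∃ (p q : G.Walk u v), p.IsPath ∧ q.IsPath ∧
      ∀ z, z ∈ p.support → z ∈ q.support → z = u ∨ z = v := by
  have hconn := conn_of_bicon hcard hbicon
  intro n
  induction n using Nat.strong_induction_on with
  | _ n ih =>
  intro u v huv hdist
  match n, hdist with
  | 0, hdist => exact absurd (hconn.dist_eq_zero_iff.mp hdist) huv
  | 1, hdist =>
    obtain ⟨p, hp⟩ := (hconn.preconnected u v).exists_walk_length_eq_dist
    rw [hdist] at hp
    have hadj : G.Adj u v := by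
      cases p with
      | nil => simp at hp
      | cons h q =>
        cases q with
        | nil => exact h
        | cons h' q' => simp [Walk.length_cons] at hp
    refine ⟨Walk.cons hadj Walk.nil, Walk.cons hadj Walk.nil, ?_, ?_, ?_⟩
    · simp [Walk.isPath_def, hadj.ne]
    · simp [Walk.isPath_def, hadj.ne]
    · intro z hz _; simpa using hz
  | (n + 2), hdist =>
    obtain ⟨p, hp⟩ := (hconn.preconnected u v).exists_walk_length_eq_dist
    rw [hdist] at hp
    have hpne : ¬ p.reverse.Nil := by
      rw [Walk.nil_iff_length_eq, Walk.length_reverse, hp]; omega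
    obtain ⟨w, hvw, r, hr⟩ := Walk.not_nil_iff.mp hpne
    have hrlen : r.length = n + 1 := by
      have := congrArg Walk.length hr
      rw [Walk.length_reverse, hp, Walk.length_cons] at this
      omega
    have hdw : G.dist u w = n + 1 := by
      have h1 : G.dist u w ≤ n + 1 := by
        have := SimpleGraph.dist_le r.reverse
        rwa [Walk.length_reverse, hrlen] at this
      have h2 : G.dist u v ≤ G.dist u w + G.dist w v := hconn.dist_triangle
      have h3 : G.dist w v ≤ 1 := by
        have := SimpleGraph.dist_le (Walk.cons hvw.symm Walk.nil : G.Walk w v)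
        simpa using this
      omega
    have huw : u ≠ w := by
      intro h; subst h; rw [SimpleGraph.dist_self] at hdw; omega
    have hwv : w ≠ v := hvw.ne'
    obtain ⟨A1, A2, hA1, hA2, hdisj⟩ := ih (n + 1) (by omega) u w huw hdw
    have hadjwv : G.Adj w v := hvw.symm
    have case1 : ∀ (B1 B2 : G.Walk u w), B1.IsPath → B2.IsPath →
        (∀ t, t ∈ B1.support → t ∈ B2.support → t = u ∨ t = w) → v ∈ B1.support →
        ∃ (p q : G.Walk u v), p.IsPath ∧ q.IsPath ∧
          ∀ z, z ∈ p.support → z ∈ q.support → z = u ∨ z = v := by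
      intro B1 B2 hB1 hB2 hd hv
      have hvB2 : v ∉ B2.support := by
        intro hc
        rcases hd v hv hc with rfl | rfl
        · exact huv rfl
        · exact hwv rfl
      refine ⟨B1.takeUntil v hv, B2.concat hadjwv, hB1.takeUntil hv, ?_, ?_⟩
      · rw [Walk.concat_eq_append]
        refine append_isPath hB2 (by simp [Walk.isPath_def, hwv]) ?_
        intro t ht ht'
        simp only [Walk.support_cons, Walk.support_nil, List.mem_cons,
          List.mem_singleton] at ht'
        rcases ht' with rfl | rfl | h
        · rfl
        · exact absurd ht hvB2
        · simp at h
      · intro c hc1 hc2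
        rw [Walk.support_concat, List.mem_append] at hc2
        rcases hc2 with hc2 | hc2
        · rcases hd c (Walk.support_takeUntil_subset _ _ hc1) hc2 with rfl | rfl
          · exact Or.inl rfl
          · exact absurd (eq_of_mem_take_drop hB1 hv hc1 (Walk.end_mem_support _)) hwv
        · exact Or.inr (by simpa using hc2)
    by_cases hv1 : v ∈ A1.support
    · exact case1 A1 A2 hA1 hA2 hdisj hv1
    by_cases hv2 : v ∈ A2.support
    · exact case1 A2 A1 hA2 hA1 (fun t a b => hdisj t b a) hv2
    have hu' : u ∈ ({w}ᶜ : Set V) := by simp [huw]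
    have hv' : v ∈ ({w}ᶜ : Set V) := by simp [Ne.symm hwv]
    obtain ⟨Q, hQ, hQs⟩ := exists_walk_avoiding hu' hv' ((hbicon w).preconnected _ _)
    obtain ⟨z, q, r, hzS, heq, hqS⟩ :=
      firstHit {t | t ∈ A1.support ∨ t ∈ A2.support} Q.reverse
        (Or.inl A1.start_mem_support)
    have hq : q.IsPath := Walk.IsPath.of_append_left (by rw [heq]; exact hQ.reverse)
    have hqsub : ∀ t ∈ q.support, t ∈ Q.support := by
      intro t ht
      have : t ∈ Q.reverse.support := by
        rw [← heq]; exact Walk.subset_support_append_left _ _ ht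
      rwa [Walk.support_reverse, List.mem_reverse] at this
    have hwq : w ∉ q.support := by
      intro hc; have := hQs w (hqsub w hc); simp at this
    have hzw : z ≠ w := fun h => hwq (h ▸ q.end_mem_support)
    have case2 : ∀ (B1 B2 : G.Walk u w), B1.IsPath → B2.IsPath →
        (∀ t, t ∈ B1.support → t ∈ B2.support → t = u ∨ t = w) →
        v ∉ B2.support → z ∈ B1.support →
        (∀ t ∈ q.support, (t ∈ B1.support ∨ t ∈ B2.support) → t = z) →
        ∃ (p q : G.Walk u v), p.IsPath ∧ q.IsPath ∧
          ∀ z, z ∈ p.support → z ∈ q.support → z = u ∨ z = v := by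
      intro B1 B2 hB1 hB2 hd hvB2 hz hqB
      refine ⟨(B1.takeUntil z hz).append q.reverse, B2.concat hadjwv, ?_, ?_, ?_⟩
      · refine append_isPath (hB1.takeUntil hz) hq.reverse ?_
        intro t ht1 ht2
        rw [Walk.support_reverse, List.mem_reverse] at ht2
        exact hqB t ht2 (Or.inl (Walk.support_takeUntil_subset _ _ ht1))
      · rw [Walk.concat_eq_append]
        refine append_isPath hB2 (by simp [Walk.isPath_def, hwv]) ?_
        intro t ht ht'
        simp only [Walk.support_cons, Walk.support_nil, List.mem_cons,
          List.mem_singleton] at ht'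
        rcases ht' with rfl | rfl | h
        · rfl
        · exact absurd ht hvB2
        · simp at h
      · intro c hc1 hc2
        rw [Walk.support_concat, List.mem_append] at hc2
        rcases hc2 with hc2 | hc2
        · rw [Walk.mem_support_append_iff] at hc1
          rcases hc1 with hc1 | hc1
          · rcases hd c (Walk.support_takeUntil_subset _ _ hc1) hc2 with rfl | rfl
            · exact Or.inl rfl
            · exact absurd (eq_of_mem_take_drop hB1 hz hc1 (Walk.end_mem_support _)).symm hzw
          · rw [Walk.support_reverse, List.mem_reverse] at hc1
            have hcz := hqB c hc1 (Or.inr hc2)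
            subst hcz
            rcases hd c hz hc2 with rfl | rfl
            · exact Or.inl rfl
            · exact absurd rfl hzw
        · exact Or.inr (by simpa using hc2)
    rcases hzS with h | h
    · exact case2 A1 A2 hA1 hA2 hdisj hv2 h (fun t ht h' => hqS t ht h')
    · exact case2 A2 A1 hA2 hA1 (fun t a b => hdisj t b a) hv1 h
        (fun t ht h' => hqS t ht h'.symm)

lemma through_vertex [Fintype V] (hcard : 3 ≤ Fintype.card V)
    (hbicon : ∀ v : V, (G.induce ({v}ᶜ : Set V)).Connected)
    {x y w : V} (hxy : x ≠ y) (hwx : w ≠ x) (hwy : w ≠ y) :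
    ∃ p : G.Walk x y, p.IsPath ∧ w ∈ p.support := by
  obtain ⟨A1, A2, hA1, hA2, hdisj⟩ := whitney hcard hbicon (G.dist w x) w x hwx rfl
  have case1 : ∀ (B1 B2 : G.Walk w x), B1.IsPath → B2.IsPath →
      (∀ t, t ∈ B1.support → t ∈ B2.support → t = w ∨ t = x) → y ∈ B1.support →
      ∃ p : G.Walk x y, p.IsPath ∧ w ∈ p.support := by
    intro B1 B2 hB1 hB2 hd hy
    refine ⟨B2.reverse.append (B1.takeUntil y hy), ?_, ?_⟩
    · refine append_isPath hB2.reverse (hB1.takeUntil hy) ?_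
      intro t ht1 ht2
      rw [Walk.support_reverse, List.mem_reverse] at ht1
      rcases hd t (Walk.support_takeUntil_subset _ _ ht2) ht1 with rfl | rfl
      · rfl
      · exact absurd (eq_of_mem_take_drop hB1 hy ht2 (Walk.end_mem_support _)) hxy
    · rw [Walk.mem_support_append_iff]; left; exact Walk.end_mem_support _
  by_cases hy1 : y ∈ A1.support
  · exact case1 A1 A2 hA1 hA2 hdisj hy1
  by_cases hy2 : y ∈ A2.support
  · exact case1 A2 A1 hA2 hA1 (fun t a b => hdisj t b a) hy2
  have hy' : y ∈ ({x}ᶜ : Set V) := by simp [Ne.symm hxy]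
  have hw' : w ∈ ({x}ᶜ : Set V) := by simp [hwx]
  obtain ⟨Q, hQ, hQs⟩ := exists_walk_avoiding hy' hw' ((hbicon x).preconnected _ _)
  obtain ⟨z, q, r, hzS, heq, hqS⟩ :=
    firstHit {t | t ∈ A1.support ∨ t ∈ A2.support} Q (Or.inl A1.start_mem_support)
  have hq : q.IsPath := Walk.IsPath.of_append_left (by rw [heq]; exact hQ)
  have hqsub : ∀ t ∈ q.support, t ∈ Q.support := fun t ht => by
    rw [← heq]; exact Walk.subset_support_append_left _ _ ht
  have hxq : x ∉ q.support := by
    intro hc; have := hQs x (hqsub x hc); simp at this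
  have hzx : z ≠ x := fun h => hxq (h ▸ q.end_mem_support)
  have case2 : ∀ (B1 B2 : G.Walk w x), B1.IsPath → B2.IsPath →
      (∀ t, t ∈ B1.support → t ∈ B2.support → t = w ∨ t = x) →
      z ∈ B1.support →
      (∀ t ∈ q.support, (t ∈ B1.support ∨ t ∈ B2.support) → t = z) →
      ∃ p : G.Walk x y, p.IsPath ∧ w ∈ p.support := by
    intro B1 B2 hB1 hB2 hd hz hqB
    refine ⟨B2.reverse.append ((B1.takeUntil z hz).append q.reverse), ?_, ?_⟩
    · have hinner : ((B1.takeUntil z hz).append q.reverse).IsPath := by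
        refine append_isPath (hB1.takeUntil hz) hq.reverse ?_
        intro t ht1 ht2
        rw [Walk.support_reverse, List.mem_reverse] at ht2
        exact hqB t ht2 (Or.inl (Walk.support_takeUntil_subset _ _ ht1))
      refine append_isPath hB2.reverse hinner ?_
      intro t ht1 ht2
      rw [Walk.support_reverse, List.mem_reverse] at ht1
      rw [Walk.mem_support_append_iff] at ht2
      rcases ht2 with ht2 | ht2
      · rcases hd t (Walk.support_takeUntil_subset _ _ ht2) ht1 with rfl | rfl
        · rfl
        · exact absurd (eq_of_mem_take_drop hB1 hz ht2 (Walk.end_mem_support _)) hzx.symm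
      · rw [Walk.support_reverse, List.mem_reverse] at ht2
        have hcz := hqB t ht2 (Or.inr ht1)
        subst hcz
        rcases hd t hz ht1 with rfl | rfl
        · rfl
        · exact absurd rfl hzx
    · rw [Walk.mem_support_append_iff]; left; exact Walk.end_mem_support _
  rcases hzS with h | h
  · exact case2 A1 A2 hA1 hA2 hdisj h (fun t ht h' => hqS t ht h')
  · exact case2 A2 A1 hA2 hA1 (fun t a b => hdisj t b a) h
      (fun t ht h' => hqS t ht h'.symm)

/-- Subdivision of the edge `s(u,v)` of `G`: replace it by a path through a new vertex `inr ()`. -/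
def subdiv (G : SimpleGraph V) (u v : V) : SimpleGraph (V ⊕ Unit) where
  Adj a b :=
    (∃ a' b', a = inl a' ∧ b = inl b' ∧ G.Adj a' b' ∧ s(a', b') ≠ s(u, v)) ∨
    (a = inr () ∧ (b = inl u ∨ b = inl v)) ∨
    (b = inr () ∧ (a = inl u ∨ a = inl v))
  symm := by
    refine ⟨?_⟩
    rintro a b (⟨a', b', rfl, rfl, hab, hne⟩ | ⟨rfl, h⟩ | ⟨rfl, h⟩)
    · exact Or.inl ⟨b', a', rfl, rfl, hab.symm, by rwa [Sym2.eq_swap]⟩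
    · exact Or.inr (Or.inr ⟨rfl, h⟩)
    · exact Or.inr (Or.inl ⟨rfl, h⟩)
  loopless := by
    refine ⟨?_⟩
    rintro a (⟨a', b', rfl, heq, hab, _⟩ | ⟨rfl, h | h⟩ | ⟨rfl, h | h⟩) <;>
      first
      | (injection heq with heq; subst heq; exact hab.ne rfl)
      | simp at h

variable {u v : V}

lemma subdiv_adj_inl_inl {a b : V} :
    (subdiv G u v).Adj (inl a) (inl b) ↔ G.Adj a b ∧ s(a, b) ≠ s(u, v) := by
  constructor
  · rintro (⟨a', b', ha, hb, hab, hne⟩ | ⟨h, _⟩ | ⟨h, _⟩)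
    · injection ha with ha; injection hb with hb; subst ha; subst hb; exact ⟨hab, hne⟩
    · simp at h
    · simp at h
  · rintro ⟨h1, h2⟩; exact Or.inl ⟨a, b, rfl, rfl, h1, h2⟩

lemma subdiv_adj_inr_left {b : V ⊕ Unit} :
    (subdiv G u v).Adj (inr ()) b ↔ b = inl u ∨ b = inl v := by
  constructor
  · rintro (⟨a', b', ha, _, _, _⟩ | ⟨_, h⟩ | ⟨h, h'⟩)
    · simp at ha
    · exact h
    · rcases h' with h' | h' <;> simp at h'
  · intro h; exact Or.inr (Or.inl ⟨rfl, h⟩)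

lemma subdiv_walk_to_G (huv : G.Adj u v) :
    ∀ {c d : V ⊕ Unit} (p : (subdiv G u v).Walk c d), inr () ∉ p.support →
    ∀ {a b : V}, c = inl a → d = inl b →
    ∃ q : G.Walk a b, q.support.map inl = p.support := by
  intro c d p
  induction p with
  | nil =>
    intro _ a b hc hd
    subst hc
    injection hd with hd
    subst hd
    exact ⟨Walk.nil, by simp⟩
  | @cons c m d h p ih =>
    intro hsupp a b hc hd
    subst hc
    have hm : m ≠ inr () := by
      intro hh
      exact hsupp (by rw [Walk.support_cons]; exact List.mem_cons_of_mem _ (hh ▸ p.start_mem_support))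
    obtain ⟨m', rfl⟩ : ∃ m', m = inl m' := by
      cases m with
      | inl x => exact ⟨x, rfl⟩
      | inr x => cases x; exact absurd rfl hm
    have hadj : G.Adj a m' := (subdiv_adj_inl_inl.mp h).1
    have hsupp' : inr () ∉ p.support := fun hh =>
      hsupp (by rw [Walk.support_cons]; exact List.mem_cons_of_mem _ hh)
    obtain ⟨q, hq⟩ := ih hsupp' rfl hd
    exact ⟨Walk.cons hadj q, by simp [hq]⟩

lemma subdiv_walkReach {s : Set (V ⊕ Unit)} (hs : inr () ∈ s) :
    ∀ {c d : V} (W : G.Walk c d), (∀ t ∈ W.support, inl t ∈ s) →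
    ∀ (hc : inl c ∈ s) (hd : inl d ∈ s),
    ((subdiv G u v).induce s).Reachable ⟨inl c, hc⟩ ⟨inl d, hd⟩ := by
  intro c d W
  induction W with
  | nil => intro _ hc hd; rfl
  | @cons c m d h W ih =>
    intro hW hc hd
    have hm : inl m ∈ s := hW m (by simp)
    have step : ((subdiv G u v).induce s).Reachable ⟨inl c, hc⟩ ⟨inl m, hm⟩ := by
      by_cases he : s(c, m) = s(u, v)
      · rw [Sym2.eq_iff] at he
        have hadj1 : (subdiv G u v).Adj (inl c) (inr ()) := by
          refine Or.inr (Or.inr ⟨rfl, ?_⟩)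
          rcases he with ⟨rfl, _⟩ | ⟨rfl, _⟩
          · exact Or.inl rfl
          · exact Or.inr rfl
        have hadj2 : (subdiv G u v).Adj (inr ()) (inl m) := by
          refine Or.inr (Or.inl ⟨rfl, ?_⟩)
          rcases he with ⟨_, rfl⟩ | ⟨_, rfl⟩
          · exact Or.inr rfl
          · exact Or.inl rfl
        have s1 : ((subdiv G u v).induce s).Adj ⟨inl c, hc⟩ ⟨inr (), hs⟩ := by
          simpa using hadj1
        have s2 : ((subdiv G u v).induce s).Adj ⟨inr (), hs⟩ ⟨inl m, hm⟩ := by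
          simpa using hadj2
        exact s1.reachable.trans s2.reachable
      · have hadj : (subdiv G u v).Adj (inl c) (inl m) := subdiv_adj_inl_inl.mpr ⟨h, he⟩
        exact Adj.reachable (by simpa using hadj)
    exact step.trans (ih (fun t ht => hW t (by simp [ht])) hm hd)

lemma hbicon_subdiv [Fintype V] (hcard : 3 ≤ Fintype.card V)
    (hbicon : ∀ v : V, (G.induce ({v}ᶜ : Set V)).Connected) (huv : G.Adj u v) :
    ∀ z : V ⊕ Unit, ((subdiv G u v).induce ({z}ᶜ : Set (V ⊕ Unit))).Connected := by
  have hconn := conn_of_bicon hcard hbicon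
  intro z
  rw [connected_iff]
  cases z with
  | inr zz =>
    cases zz
    set s : Set (V ⊕ Unit) := {inr ()}ᶜ with hsdef
    have hmem : ∀ b : V, inl b ∈ s := by intro b; simp [hsdef]
    -- u and v are connected in the subdivision minus the subdivision vertex
    obtain ⟨t, hut, htv⟩ := exists_other_neighbor hcard hbicon huv.ne
    have havoid : ∀ (c d : V) (W : G.Walk c d), (∀ t' ∈ W.support, t' ≠ u) →
        ((subdiv G u v).induce s).Reachable ⟨inl c, hmem c⟩ ⟨inl d, hmem d⟩ := by
      intro c d W
      induction W with
      | nil => intro _; rfl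
      | @cons c m d h W ih =>
        intro hW
        have hcu : c ≠ u := hW c (by simp)
        have hmu : m ≠ u := hW m (by simp)
        have hne : s(c, m) ≠ s(u, v) := by
          intro hh
          rw [Sym2.eq_iff] at hh
          rcases hh with ⟨rfl, _⟩ | ⟨_, rfl⟩
          · exact hcu rfl
          · exact hmu rfl
        have hadj : (subdiv G u v).Adj (inl c) (inl m) := subdiv_adj_inl_inl.mpr ⟨h, hne⟩
        exact (Adj.reachable (by simpa using hadj)).trans (ih (fun t' ht' => hW t' (by simp [ht'])))
    have Ruv : ((subdiv G u v).induce s).Reachable ⟨inl u, hmem u⟩ ⟨inl v, hmem v⟩ := by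
      have hstep : (subdiv G u v).Adj (inl u) (inl t) := by
        refine subdiv_adj_inl_inl.mpr ⟨hut, fun hh => htv (Sym2.congr_right.mp hh)⟩
      have ht' : t ∈ ({u}ᶜ : Set V) := by simp [hut.ne']
      have hv' : v ∈ ({u}ᶜ : Set V) := by simp [huv.ne']
      obtain ⟨W, _, hWs⟩ := exists_walk_avoiding ht' hv' ((hbicon u).preconnected _ _)
      have := havoid t v W (fun t' ht'' => by have := hWs t' ht''; simpa using this)
      exact (Adj.reachable (by simpa using hstep)).trans this
    have hadjstep : ∀ (b c : V), G.Adj b c →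
        ((subdiv G u v).induce s).Reachable ⟨inl b, hmem b⟩ ⟨inl c, hmem c⟩ := by
      intro b c h
      by_cases he : s(b, c) = s(u, v)
      · rw [Sym2.eq_iff] at he
        rcases he with ⟨rfl, rfl⟩ | ⟨rfl, rfl⟩
        · exact Ruv
        · exact Ruv.symm
      · exact Adj.reachable (by simpa using subdiv_adj_inl_inl.mpr ⟨h, he⟩)
    have hwalk : ∀ (b c : V) (W : G.Walk b c),
        ((subdiv G u v).induce s).Reachable ⟨inl b, hmem b⟩ ⟨inl c, hmem c⟩ := by
      intro b c W
      induction W with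
      | nil => rfl
      | @cons b m c h W ih => exact (hadjstep b m h).trans ih
    refine ⟨?_, ⟨⟨inl u, hmem u⟩⟩⟩
    rintro ⟨P, hP⟩ ⟨Q, hQ⟩
    obtain ⟨b, rfl⟩ : ∃ b, P = inl b := by
      cases P with
      | inl b => exact ⟨b, rfl⟩
      | inr x => cases x; exact absurd hP (by simp [hsdef])
    obtain ⟨c, rfl⟩ : ∃ c, Q = inl c := by
      cases Q with
      | inl c => exact ⟨c, rfl⟩
      | inr x => cases x; exact absurd hQ (by simp [hsdef])
    obtain ⟨W⟩ := hconn.preconnected b c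
    exact hwalk b c W
  | inl a =>
    set s : Set (V ⊕ Unit) := {inl a}ᶜ with hsdef
    have hs : inr () ∈ s := by simp [hsdef]
    have hmem : ∀ b : V, b ≠ a → inl b ∈ s := by intro b hb; simp [hsdef, hb]
    have ht0 : ∃ t0 : V, t0 ≠ a ∧ (t0 = u ∨ t0 = v) := by
      by_cases h : u = a
      · exact ⟨v, fun hh => huv.ne (h ▸ hh ▸ rfl), Or.inr rfl⟩
      · exact ⟨u, h, Or.inl rfl⟩
    obtain ⟨t0, ht0a, ht0uv⟩ := ht0
    have hreach : ∀ (P : ↥s), ((subdiv G u v).induce s).Reachable P ⟨inl t0, hmem t0 ht0a⟩ := by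
      rintro ⟨P, hP⟩
      cases P with
      | inr x =>
        cases x
        have hadj : (subdiv G u v).Adj (inr ()) (inl t0) := by
          refine subdiv_adj_inr_left.mpr ?_
          rcases ht0uv with rfl | rfl
          · exact Or.inl rfl
          · exact Or.inr rfl
        exact Adj.reachable (by simpa using hadj)
      | inl b =>
        have hba : b ≠ a := by simpa [hsdef] using hP
        have hb' : b ∈ ({a}ᶜ : Set V) := by simp [hba]
        have ht0' : t0 ∈ ({a}ᶜ : Set V) := by simp [ht0a]
        obtain ⟨W, _, hWs⟩ := exists_walk_avoiding hb' ht0' ((hbicon a).preconnected _ _)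
        have hWmem : ∀ t ∈ W.support, inl t ∈ s := by
          intro t ht
          have := hWs t ht
          simp only [Set.mem_compl_iff, Set.mem_singleton_iff] at this
          simp [hsdef, this]
        exact subdiv_walkReach hs W hWmem (hP) (hmem t0 ht0a)
    refine ⟨fun P Q => (hreach P).trans (hreach Q).symm, ⟨⟨inr (), hs⟩⟩⟩

lemma splice {u v x y : V} (huv : G.Adj u v) (g1 : G.Walk u x) (g2 : G.Walk v y)
    (h1 : g1.IsPath) (h2 : g2.IsPath) (hd : ∀ t, t ∈ g1.support → t ∈ g2.support → False)
    (hu2 : u ∉ g2.support) :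
    ∃ p : G.Walk x y, p.IsPath ∧ s(u, v) ∈ p.edges := by
  refine ⟨g1.reverse.append (Walk.cons huv g2), ?_, ?_⟩
  · refine append_isPath h1.reverse ((Walk.cons_isPath_iff _ _).mpr ⟨h2, hu2⟩) ?_
    intro t ht1 ht2
    rw [Walk.support_reverse, List.mem_reverse] at ht1
    rw [Walk.support_cons, List.mem_cons] at ht2
    rcases ht2 with rfl | ht2
    · rfl
    · exact absurd ht2 (fun hh => hd t ht1 hh)
  · simp [Walk.edges_append]

end Stmt4Aux

open Stmt4Aux Sum

/-- If `G` is a 2-vertex-connected undirected graph, `x ≠ y` are vertices,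
and `e` is an edge of `G`, then there is a simple path from `x` to `y` traversing `e`. -/
theorem stmt4 {V : Type} [Fintype V] (G : SimpleGraph V)
    (hcard : 3 ≤ Fintype.card V)
    (hbicon : ∀ v : V, (G.induce ({v}ᶜ : Set V)).Connected)
    (x y : V) (hxy : x ≠ y) (e : Sym2 V) (he : e ∈ G.edgeSet) :
    ∃ p : G.Walk x y, p.IsPath ∧ e ∈ p.edges := by
  classical
  induction e using Sym2.ind with
  | _ u v =>
  rw [SimpleGraph.mem_edgeSet] at he
  have hcard' : 3 ≤ Fintype.card (V ⊕ Unit) := by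
    rw [Fintype.card_sum]
    simp only [Fintype.card_unit]
    omega
  have hbicon' := hbicon_subdiv hcard hbicon he
  obtain ⟨P, hP, hw⟩ := through_vertex (G := subdiv G u v) hcard' hbicon'
    (x := inl x) (y := inl y) (w := inr ())
    (by simp [hxy]) (by simp) (by simp)
  have hP1 : (P.takeUntil (inr ()) hw).IsPath := hP.takeUntil hw
  have hP2 : (P.dropUntil (inr ()) hw).IsPath := hP.dropUntil hw
  have key : ∀ t, t ∈ (P.takeUntil (inr ()) hw).support →
      t ∈ (P.dropUntil (inr ()) hw).support → t = inr () :=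
    fun t a b => eq_of_mem_take_drop hP hw a b
  obtain ⟨m1, h1, r1, hr1⟩ := Walk.not_nil_iff.mp
    (Walk.not_nil_of_ne (p := (P.takeUntil (inr ()) hw).reverse) (by simp))
  obtain ⟨m2, h2, r2, hr2⟩ := Walk.not_nil_iff.mp
    (Walk.not_nil_of_ne (p := P.dropUntil (inr ()) hw) (by simp))
  have hr1path : r1.IsPath ∧ inr () ∉ r1.support := by
    have := hP1.reverse
    rw [hr1, Walk.cons_isPath_iff] at this
    exact ⟨this.1, this.2⟩
  have hr2path : r2.IsPath ∧ inr () ∉ r2.support := by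
    have := hP2
    rw [hr2, Walk.cons_isPath_iff] at this
    exact ⟨this.1, this.2⟩
  have hr1sub : ∀ t ∈ r1.support, t ∈ (P.takeUntil (inr ()) hw).support := by
    intro t ht
    have : t ∈ (P.takeUntil (inr ()) hw).reverse.support := by
      rw [hr1, Walk.support_cons]; exact List.mem_cons_of_mem _ ht
    rwa [Walk.support_reverse, List.mem_reverse] at this
  have hr2sub : ∀ t ∈ r2.support, t ∈ (P.dropUntil (inr ()) hw).support := by
    intro t ht
    rw [hr2, Walk.support_cons]
    exact List.mem_cons_of_mem _ ht
  have hm1 := subdiv_adj_inr_left.mp h1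
  have hm2 := subdiv_adj_inr_left.mp h2
  have hm1m2 : m1 ≠ m2 := by
    intro hh
    have ha : m1 ∈ (P.takeUntil (inr ()) hw).support := hr1sub m1 r1.start_mem_support
    have hb : m1 ∈ (P.dropUntil (inr ()) hw).support := hr2sub m1 (hh ▸ r2.start_mem_support)
    have := key m1 ha hb
    rcases hm1 with rfl | rfl <;> simp at this
  have hdisjr : ∀ t, t ∈ r1.support → t ∈ r2.support → False := by
    intro t ht1 ht2
    have := key t (hr1sub t ht1) (hr2sub t ht2)
    subst this
    exact hr1path.2 ht1
  rcases hm1 with rfl | rfl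
  · have hm2v : m2 = inl v := by
      rcases hm2 with rfl | rfl
      · exact absurd rfl hm1m2
      · rfl
    subst hm2v
    obtain ⟨g1, hg1⟩ := subdiv_walk_to_G he r1 hr1path.2 rfl rfl
    obtain ⟨g2, hg2⟩ := subdiv_walk_to_G he r2 hr2path.2 rfl rfl
    have hg1path : g1.IsPath := by
      rw [Walk.isPath_def]
      have h' : (g1.support.map inl).Nodup := hg1 ▸ hr1path.1.support_nodup
      exact h'.of_map
    have hg2path : g2.IsPath := by
      rw [Walk.isPath_def]
      have h' : (g2.support.map inl).Nodup := hg2 ▸ hr2path.1.support_nodup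
      exact h'.of_map
    have hmem1 : ∀ t, t ∈ g1.support → (inl t : V ⊕ Unit) ∈ r1.support :=
      fun t ht => hg1 ▸ List.mem_map_of_mem (f := inl) ht
    have hmem2 : ∀ t, t ∈ g2.support → (inl t : V ⊕ Unit) ∈ r2.support :=
      fun t ht => hg2 ▸ List.mem_map_of_mem (f := inl) ht
    have hd : ∀ t, t ∈ g1.support → t ∈ g2.support → False :=
      fun t ht1 ht2 => hdisjr (inl t) (hmem1 t ht1) (hmem2 t ht2)
    have hu2 : u ∉ g2.support :=
      fun hc => hdisjr (inl u) r1.start_mem_support (hmem2 u hc)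
    exact splice he g1 g2 hg1path hg2path hd hu2
  · have hm2u : m2 = inl u := by
      rcases hm2 with rfl | rfl
      · rfl
      · exact absurd rfl hm1m2
    subst hm2u
    obtain ⟨g1, hg1⟩ := subdiv_walk_to_G he r1 hr1path.2 rfl rfl
    obtain ⟨g2, hg2⟩ := subdiv_walk_to_G he r2 hr2path.2 rfl rfl
    have hg1path : g1.IsPath := by
      rw [Walk.isPath_def]
      have h' : (g1.support.map inl).Nodup := hg1 ▸ hr1path.1.support_nodup
      exact h'.of_map
    have hg2path : g2.IsPath := by
      rw [Walk.isPath_def]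
      have h' : (g2.support.map inl).Nodup := hg2 ▸ hr2path.1.support_nodup
      exact h'.of_map
    have hmem1 : ∀ t, t ∈ g1.support → (inl t : V ⊕ Unit) ∈ r1.support :=
      fun t ht => hg1 ▸ List.mem_map_of_mem (f := inl) ht
    have hmem2 : ∀ t, t ∈ g2.support → (inl t : V ⊕ Unit) ∈ r2.support :=
      fun t ht => hg2 ▸ List.mem_map_of_mem (f := inl) ht
    have hd : ∀ t, t ∈ g1.support → t ∈ g2.support → False :=
      fun t ht1 ht2 => hdisjr (inl t) (hmem1 t ht1) (hmem2 t ht2)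
    have hv2 : v ∉ g2.support :=
      fun hc => hdisjr (inl v) r1.start_mem_support (hmem2 v hc)
    obtain ⟨p, hp, hep⟩ := splice he.symm g1 g2 hg1path hg2path hd hv2
    exact ⟨p, hp, by rwa [Sym2.eq_swap] at hep⟩
end

section
/- Let G = (V,E) be a directed graph with nonnegative edge weights, and let s1, s2, t be vertices with shortest-path distances d(s1,t) ≤ α1 and d(s2,t) ≤ α2. Then there exist a vertex t' and paths p1 from s1 to t' and p2 from s2 to t' that are internally vertex-disjoint (sharing only t', and possibly s1 = s2), with w(p1) ≤ α1 and w(p2) ≤ α2. -/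
/-- A walk in a directed graph `A`, represented by its (nonempty) list of vertices. -/
def IsDWalk {V : Type} (A : V → V → Prop) (l : List V) (u v : V) : Prop :=
  l.Chain' A ∧ l.head? = some u ∧ l.getLast? = some v

/-- The weight of a walk: the sum of the weights of its consecutive arcs. -/
def pathWeight {V : Type} (w : V → V → ℚ) (l : List V) : ℚ :=
  ((l.zip l.tail).map fun p => w p.1 p.2).sum

/-- The internal vertices of a walk: all vertices except the first and the last. -/
def internalVerts {V : Type} (l : List V) : List V := l.tail.dropLast

lemma pathWeight_cons_cons {V : Type} (w : V → V → ℚ) (a b : V) (l : List V) :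
    pathWeight w (a :: b :: l) = w a b + pathWeight w (b :: l) := by
  simp [pathWeight]

lemma pathWeight_nonneg {V : Type} {A : V → V → Prop} {w : V → V → ℚ}
    (hw : ∀ u v, A u v → 0 ≤ w u v) :
    ∀ l : List V, l.Chain' A → 0 ≤ pathWeight w l
  | [], _ => le_refl _
  | [a], _ => by simp [pathWeight]
  | a :: b :: l, h => by
    rw [pathWeight_cons_cons]
    have h1 := pathWeight_nonneg hw (b :: l) (List.isChain_cons_cons.1 h).2
    have h2 := hw a b (List.isChain_cons_cons.1 h).1
    linarith

lemma pathWeight_prefix_le {V : Type} {A : V → V → Prop} {w : V → V → ℚ}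
    (hw : ∀ u v, A u v → 0 ≤ w u v) :
    ∀ (l1 l2 : List V), (l1 ++ l2).Chain' A → pathWeight w l1 ≤ pathWeight w (l1 ++ l2)
  | [], l2, h => pathWeight_nonneg hw l2 h
  | [a], l2, h => by
    simpa [pathWeight] using pathWeight_nonneg hw (a :: l2) h
  | a :: b :: l, l2, h => by
    rw [List.cons_append, List.cons_append] at h ⊢
    rw [pathWeight_cons_cons, pathWeight_cons_cons]
    have := pathWeight_prefix_le hw (b :: l) l2 (List.isChain_cons_cons.1 h).2
    rw [List.cons_append] at this
    linarith

/-- If `x` lies on a walk from `s` to `t`, the prefix of the walk up to `x` is a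
walk from `s` to `x`. -/
lemma reach_mem {V : Type} {A : V → V → Prop} {t x : V} :
    ∀ (p : List V) (s : V), IsDWalk A p s t → x ∈ p → ∃ q, q <+: p ∧ IsDWalk A q s x
  | [], s, _, hx => absurd hx (by simp)
  | y :: rest, s, h, hx => by
    obtain ⟨hc, hh, hl⟩ := h
    have hsy : y = s := by simpa using hh
    by_cases hxy : x = y
    · exact ⟨[y], ⟨rest, rfl⟩, List.isChain_singleton y, by simp [hsy], by simp [hxy]⟩
    · have hxr : x ∈ rest := by
        rcases List.mem_cons.1 hx with h' | h'
        · exact absurd h' hxy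
        · exact h'
      have hne : rest ≠ [] := by rintro rfl; simp at hxr
      obtain ⟨b, rest', rfl⟩ := List.exists_cons_of_ne_nil hne
      have hwalk : IsDWalk A (b :: rest') b t :=
        ⟨(List.isChain_cons_cons.1 hc).2, rfl, by simpa using hl⟩
      obtain ⟨q, hqp, hqw⟩ := reach_mem (b :: rest') b hwalk hxr
      obtain ⟨hqc, hqh, hql⟩ := hqw
      have hqne : q ≠ [] := by rintro rfl; simp at hqh
      obtain ⟨c, q', rfl⟩ := List.exists_cons_of_ne_nil hqne
      have hcb : c = b := by simpa using hqh
      subst hcb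
      refine ⟨y :: c :: q', ?_, ?_, by simpa using hsy, ?_⟩
      · obtain ⟨r, hr⟩ := hqp
        exact ⟨r, by rw [List.cons_append, hr]⟩
      · exact List.isChain_cons_cons.2 ⟨(List.isChain_cons_cons.1 hc).1, hqc⟩
      · rw [List.getLast?_cons_cons]; exact hql

/-- Main induction: truncate `p1` at its first vertex lying on `p2`. -/
lemma main_lemma {V : Type} {A : V → V → Prop} {t s2 : V} {p2 : List V}
    (hp2 : IsDWalk A p2 s2 t) :
    ∀ (p1 : List V) (s1 : V), IsDWalk A p1 s1 t →
    ∃ t' q1 q2, q1 <+: p1 ∧ q2 <+: p2 ∧ IsDWalk A q1 s1 t' ∧ IsDWalk A q2 s2 t' ∧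
      (∀ x ∈ q1.dropLast, x ∉ p2)
  | [], s1, h => absurd h.2.1 (by simp)
  | x :: rest, s1, h => by
    classical
    have hsx : x = s1 := by simpa using h.2.1
    by_cases hx : x ∈ p2
    · obtain ⟨q2, hq2p, hq2w⟩ := reach_mem p2 s2 hp2 hx
      exact ⟨x, [x], q2, ⟨rest, rfl⟩, hq2p,
        ⟨List.isChain_singleton x, by simp [hsx], by simp⟩, hq2w, by simp⟩
    · have hne : rest ≠ [] := by
        rintro rfl
        have hxt : x = t := by simpa using h.2.2
        have htp2 : t ∈ p2 := by
          obtain ⟨hne2, heq⟩ := List.mem_getLast?_eq_getLast (l := p2) (x := t)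
            (by rw [hp2.2.2]; rfl)
          exact heq ▸ List.getLast_mem hne2
        exact hx (hxt ▸ htp2)
      obtain ⟨y, rest', rfl⟩ := List.exists_cons_of_ne_nil hne
      have hwalk : IsDWalk A (y :: rest') y t :=
        ⟨(List.isChain_cons_cons.1 h.1).2, rfl, by simpa using h.2.2⟩
      obtain ⟨t', q1', q2, hq1p, hq2p, hq1w, hq2w, hdisj⟩ :=
        main_lemma hp2 (y :: rest') y hwalk
      obtain ⟨hq1c, hq1h, hq1l⟩ := hq1w
      have hq1ne : q1' ≠ [] := by rintro rfl; simp at hq1h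
      obtain ⟨c, q'', rfl⟩ := List.exists_cons_of_ne_nil hq1ne
      have hcy : c = y := by simpa using hq1h
      subst hcy
      refine ⟨t', x :: c :: q'', q2, ?_, hq2p, ?_, hq2w, ?_⟩
      · obtain ⟨r, hr⟩ := hq1p
        exact ⟨r, by rw [List.cons_append, hr]⟩
      · refine ⟨List.isChain_cons_cons.2 ⟨(List.isChain_cons_cons.1 h.1).1, hq1c⟩,
          by simpa using hsx, ?_⟩
        rw [List.getLast?_cons_cons]; exact hq1l
      · intro z hz
        rw [List.dropLast_cons_of_ne_nil (by simp)] at hz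
        rcases List.mem_cons.1 hz with h' | h'
        · exact h' ▸ hx
        · exact hdisj z h'

lemma getLast_not_mem_dropLast {V : Type} {l : List V} (hnd : l.Nodup) (hne : l ≠ []) :
    l.getLast hne ∉ l.dropLast := by
  intro hmem
  have heq := List.dropLast_append_getLast hne
  rw [← heq] at hnd
  rcases List.nodup_append.1 hnd with ⟨_, _, hdisj⟩
  exact hdisj _ hmem _ (by simp) rfl

lemma mem_dropLast_of_mem_tail_dropLast {V : Type} {l : List V} {x : V}
    (h : x ∈ l.tail.dropLast) : x ∈ l.dropLast := by
  cases l with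
  | nil => simp at h
  | cons a l' =>
    simp only [List.tail_cons] at h
    have hne : l' ≠ [] := by rintro rfl; simp at h
    rw [List.dropLast_cons_of_ne_nil hne]
    exact List.mem_cons_of_mem _ h

/-- In a directed graph with nonnegative weights, if `d(s1,t) ≤ α1` and
`d(s2,t) ≤ α2` (i.e. there are paths from `s1` and `s2` to `t` of weights at most `α1`
and `α2`), then there are a vertex `t'` and internally vertex-disjoint paths
`p1 : s1 ⇝ t'` and `p2 : s2 ⇝ t'` with `w(p1) ≤ α1` and `w(p2) ≤ α2`. -/
theorem stmt5 {V : Type} [Fintype V] (A : V → V → Prop) (w : V → V → ℚ)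
    (hw : ∀ u v, A u v → 0 ≤ w u v) (s1 s2 t : V) (α1 α2 : ℚ)
    (p1 : List V) (hp1 : IsDWalk A p1 s1 t) (hp1' : p1.Nodup)
    (hw1 : pathWeight w p1 ≤ α1)
    (p2 : List V) (hp2 : IsDWalk A p2 s2 t) (hp2' : p2.Nodup)
    (hw2 : pathWeight w p2 ≤ α2) :
    ∃ (t' : V) (q1 q2 : List V),
      IsDWalk A q1 s1 t' ∧ q1.Nodup ∧ pathWeight w q1 ≤ α1 ∧
      IsDWalk A q2 s2 t' ∧ q2.Nodup ∧ pathWeight w q2 ≤ α2 ∧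
      (∀ x ∈ internalVerts q1, x ∉ q2) ∧ (∀ x ∈ internalVerts q2, x ∉ q1) := by
  obtain ⟨t', q1, q2, hq1p, hq2p, hq1w, hq2w, hdisj⟩ := main_lemma hp2 p1 s1 hp1
  have hq1nd : q1.Nodup := hq1p.sublist.nodup hp1'
  have hq2nd : q2.Nodup := hq2p.sublist.nodup hp2'
  have hwt1 : pathWeight w q1 ≤ α1 := by
    obtain ⟨r, hr⟩ := hq1p
    calc pathWeight w q1 ≤ pathWeight w (q1 ++ r) :=
          pathWeight_prefix_le hw q1 r (hr ▸ hp1.1)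
      _ = pathWeight w p1 := by rw [hr]
      _ ≤ α1 := hw1
  have hwt2 : pathWeight w q2 ≤ α2 := by
    obtain ⟨r, hr⟩ := hq2p
    calc pathWeight w q2 ≤ pathWeight w (q2 ++ r) :=
          pathWeight_prefix_le hw q2 r (hr ▸ hp2.1)
      _ = pathWeight w p2 := by rw [hr]
      _ ≤ α2 := hw2
  refine ⟨t', q1, q2, hq1w, hq1nd, hwt1, hq2w, hq2nd, hwt2, ?_, ?_⟩
  · intro x hx hxq2
    exact hdisj x (mem_dropLast_of_mem_tail_dropLast hx)
      ((hq2p.sublist.subset) hxq2)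
  · intro x hx hxq1
    have hq1ne : q1 ≠ [] := by rintro rfl; simp [IsDWalk] at hq1w
    have hsplit : x ∈ q1.dropLast ∨ x = q1.getLast hq1ne := by
      have heq := List.dropLast_append_getLast hq1ne
      rw [← heq] at hxq1
      rcases List.mem_append.1 hxq1 with h' | h'
      · exact Or.inl h'
      · exact Or.inr (by simpa using h')
    rcases hsplit with h' | h'
    · have hxp2 : x ∈ p2 := hq2p.sublist.subset
        (List.mem_of_mem_dropLast (mem_dropLast_of_mem_tail_dropLast hx))
      exact hdisj x h' hxp2
    · have hq2ne : q2 ≠ [] := by rintro rfl; simp [IsDWalk] at hq2w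
      have ht'2 : t' = q2.getLast hq2ne := by
        have := hq2w.2.2
        rw [List.getLast?_eq_getLast_of_ne_nil hq2ne] at this
        exact (Option.some_injective _ this).symm
      have ht'1 : t' = q1.getLast hq1ne := by
        have := hq1w.2.2
        rw [List.getLast?_eq_getLast_of_ne_nil hq1ne] at this
        exact (Option.some_injective _ this).symm
      have hxl : x = q2.getLast hq2ne := by rw [h', ← ht'1, ht'2]
      exact getLast_not_mem_dropLast hq2nd hq2ne
        (hxl ▸ mem_dropLast_of_mem_tail_dropLast hx)
end

section
/- Let T_s be a shortest-path tree of a nonnegatively weighted undirected graph G rooted at s, let t be a vertex, and let (u,v) be an edge on the tree path from s to t with v on the t-side. Then for every vertex z in the subtree of T_s rooted at v, the shortest-path distance from z to t in G - (u,v) equals the distance from z to t in G. -/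
/-- The weight of a list of edges. -/
def edgesWeight {V : Type} (w : Sym2 V → ℚ) (es : List (Sym2 V)) : ℚ :=
  (es.map w).sum

namespace Stmt6Aux

open SimpleGraph

variable {V : Type} {w : Sym2 V → ℚ}

lemma ew_append (l₁ l₂ : List (Sym2 V)) :
    edgesWeight w (l₁ ++ l₂) = edgesWeight w l₁ + edgesWeight w l₂ := by
  simp [edgesWeight]

lemma ew_reverse (l : List (Sym2 V)) :
    edgesWeight w l.reverse = edgesWeight w l := by
  simp [edgesWeight, List.map_reverse, List.sum_reverse]

lemma ew_nonneg {es : List (Sym2 V)} (h : ∀ e ∈ es, 0 ≤ w e) :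
    0 ≤ edgesWeight w es :=
  List.sum_nonneg (by
    intro x hx
    obtain ⟨e, he, rfl⟩ := List.mem_map.mp hx
    exact h e he)

lemma ew_le_of_nodup_subset {es₁ es₂ : List (Sym2 V)} (h1 : es₁.Nodup)
    (h2 : es₁ ⊆ es₂) (h : ∀ e ∈ es₂, 0 ≤ w e) :
    edgesWeight w es₁ ≤ edgesWeight w es₂ := by
  obtain ⟨l, hperm, hsub⟩ := List.subperm_of_subset h1 h2
  have h3 : edgesWeight w es₁ = edgesWeight w l := by
    simp [edgesWeight]
    exact (hperm.map w).sum_eq.symm ▸ rfl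
  rw [h3]
  exact List.Sublist.sum_le_sum (hsub.map w) (by
    intro x hx
    obtain ⟨e, he, rfl⟩ := List.mem_map.mp hx
    exact h e he)

lemma ew_walk_nonneg {G : SimpleGraph V} (hw : ∀ e ∈ G.edgeSet, 0 ≤ w e)
    {a b : V} (p : G.Walk a b) : 0 ≤ edgesWeight w p.edges :=
  ew_nonneg fun e he => hw e (p.edges_subset_edgeSet he)

lemma ew_bypass [DecidableEq V] {G : SimpleGraph V} (hw : ∀ e ∈ G.edgeSet, 0 ≤ w e)
    {a b : V} (p : G.Walk a b) :
    edgesWeight w p.bypass.edges ≤ edgesWeight w p.edges :=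
  ew_le_of_nodup_subset p.bypass_isPath.edges_nodup p.edges_bypass_subset
    (fun e he => hw e (p.edges_subset_edgeSet he))

lemma dart_snd_mem_support_tail {G : SimpleGraph V} {a b : V} (p : G.Walk a b) :
    ∀ d : G.Dart, d ∈ p.darts → d.snd ∈ p.support.tail := by
  induction p with
  | nil => simp
  | cons h' p ih =>
    intro d hd
    rw [SimpleGraph.Walk.darts_cons] at hd
    rw [SimpleGraph.Walk.support_cons]
    rcases List.mem_cons.mp hd with hd | hd
    · subst hd
      exact p.start_mem_support
    · exact List.tail_subset _ (ih d hd)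

end Stmt6Aux

open SimpleGraph Stmt6Aux

/-- Let `T` be a shortest-path tree of a nonnegatively weighted undirected
graph `G` rooted at `s`, `t` a vertex, and `(u,v)` an edge on the tree path from `s` to
`t` with `v` on the `t`-side. Then for every vertex `z` in the subtree of `T` rooted at
`v`, the shortest-path distance from `z` to `t` in `G - (u,v)` equals that in `G`. -/
theorem stmt6 {V : Type} [Fintype V] (G : SimpleGraph V) (w : Sym2 V → ℚ)
    (hw : ∀ e ∈ G.edgeSet, 0 ≤ w e)
    (s t : V) (T : SimpleGraph V) (hTG : T ≤ G) (hT : T.IsTree)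
    -- `T` is a shortest-path tree rooted at `s`: every tree path from `s` is a
    -- shortest path in `G`
    (hSPT : ∀ (x : V) (p : T.Walk s x), p.IsPath →
      ∀ q : G.Walk s x, q.IsPath → edgesWeight w p.edges ≤ edgesWeight w q.edges)
    (pt : T.Walk s t) (hpt : pt.IsPath)
    (u v : V) (d : T.Dart) (hd : d ∈ pt.darts) (hduv : d.toProd = (u, v))
    (z : V)
    -- `z` is in the subtree of `T` rooted at `v`: every tree path from `s` to `z`
    -- passes through `v`
    (hz : ∀ q : T.Walk s z, q.IsPath → v ∈ q.support)
    (δ : ℚ) :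
    ((∃ p : (G.deleteEdges {s(u, v)}).Walk z t, p.IsPath ∧ edgesWeight w p.edges = δ) ∧
      ∀ p : (G.deleteEdges {s(u, v)}).Walk z t, p.IsPath → δ ≤ edgesWeight w p.edges)
    ↔
    ((∃ p : G.Walk z t, p.IsPath ∧ edgesWeight w p.edges = δ) ∧
      ∀ p : G.Walk z t, p.IsPath → δ ≤ edgesWeight w p.edges) := by
  classical
  set G' := G.deleteEdges {s(u, v)} with hG'def
  -- basic adjacency facts
  have hadj : T.Adj u v := by
    have := d.adj
    rw [hduv] at this
    exact this
  have hGadj : G.Adj u v := hTG hadj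
  have hune : u ≠ v := hadj.ne
  have hwe : 0 ≤ w s(u, v) := hw _ (G.mem_edgeSet.2 hGadj)
  have hTsub : ∀ {a b : V} (p : T.Walk a b), ∀ e ∈ p.edges, e ∈ G.edgeSet :=
    fun p e he => SimpleGraph.edgeSet_mono hTG (p.edges_subset_edgeSet he)
  have hG'sub : ∀ {a b : V} (p : G'.Walk a b), ∀ e ∈ p.edges, e ∈ G.edgeSet :=
    fun p e he => SimpleGraph.edgeSet_mono (G.deleteEdges_le _) (p.edges_subset_edgeSet he)
  have hw' : ∀ e ∈ G'.edgeSet, 0 ≤ w e :=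
    fun e he => hw e (SimpleGraph.edgeSet_mono (G.deleteEdges_le _) he)
  have SPT : ∀ (x : V) (px : T.Walk s x), px.IsPath → ∀ Wk : G.Walk s x,
      edgesWeight w px.edges ≤ edgesWeight w Wk.edges :=
    fun x px hpx Wk => (hSPT x px hpx Wk.bypass Wk.bypass_isPath).trans (ew_bypass hw Wk)
  -- decompose pt at v
  have hdsnd : d.snd = v := by
    show d.toProd.2 = v
    rw [hduv]
  have hdfst : d.fst = u := by
    show d.toProd.1 = u
    rw [hduv]
  have hv : v ∈ pt.support := by
    have := pt.dart_snd_mem_support_of_mem_darts hd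
    rwa [hdsnd] at this
  set pv := pt.takeUntil v hv with hpvdef
  set α := pt.dropUntil v hv with hαdef
  have hpv : pv.IsPath := hpt.takeUntil hv
  have hα : α.IsPath := hpt.dropUntil hv
  have hdisj : ∀ x ∈ pv.support, x ∉ α.support.tail := by
    have hnd := hpt.support_nodup
    rw [← pt.take_spec hv, SimpleGraph.Walk.support_append] at hnd
    exact (List.nodup_append'.mp hnd).2.2
  have hdpv : d ∈ pv.darts := by
    have hd' := hd
    rw [← pt.take_spec hv, SimpleGraph.Walk.darts_append] at hd'
    rcases List.mem_append.mp hd' with h1 | h1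
    · exact h1
    · exfalso
      have hvt := dart_snd_mem_support_tail α d h1
      rw [hdsnd] at hvt
      exact hdisj v pv.end_mem_support hvt
  have hu_pv : u ∈ pv.support := by
    have := SimpleGraph.Walk.dart_fst_mem_support_of_mem_darts pv hdpv
    rwa [hdfst] at this
  have hu_nα : u ∉ α.support := by
    intro h
    rw [α.support_eq_cons] at h
    rcases List.mem_cons.mp h with h | h
    · exact hune h
    · exact hdisj u hu_pv h
  have he_nα : s(u, v) ∉ α.edges := fun h => hu_nα (α.fst_mem_support_of_mem_edges h)
  -- pv = pu ++ (u,v)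
  set pu := pv.takeUntil u hu_pv with hpudef
  have hpu : pu.IsPath := hpv.takeUntil hu_pv
  have hsing : (SimpleGraph.Walk.cons hadj SimpleGraph.Walk.nil : T.Walk u v).IsPath := by
    simp [hune]
  have hγ : pv.dropUntil u hu_pv = SimpleGraph.Walk.cons hadj SimpleGraph.Walk.nil := by
    obtain ⟨p0, -, hun⟩ := hT.existsUnique_path u v
    rw [hun _ (hpv.dropUntil hu_pv), hun _ hsing]
  have F1 : edgesWeight w pt.edges = edgesWeight w pv.edges + edgesWeight w α.edges := by
    conv_lhs => rw [← pt.take_spec hv]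
    rw [SimpleGraph.Walk.edges_append, ew_append]
  have F2 : edgesWeight w pv.edges = edgesWeight w pu.edges + w s(u, v) := by
    conv_lhs => rw [← pv.take_spec hu_pv]
    rw [SimpleGraph.Walk.edges_append, ew_append, hγ]
    simp [edgesWeight]
    rfl
  -- decompose pz at v
  obtain ⟨pz, hpz, hpzuniq⟩ := hT.existsUnique_path s z
  have hvz : v ∈ pz.support := hz pz hpz
  set β := pz.dropUntil v hvz with hβdef
  have hβ : β.IsPath := hpz.dropUntil hvz
  have hpv2 : pz.takeUntil v hvz = pv := by
    obtain ⟨p0, -, hun⟩ := hT.existsUnique_path s v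
    rw [hun _ (hpz.takeUntil hvz), hun _ hpv]
  have hdisjz : ∀ x ∈ pv.support, x ∉ β.support.tail := by
    have hnd := hpz.support_nodup
    rw [← pz.take_spec hvz, SimpleGraph.Walk.support_append, hpv2] at hnd
    exact (List.nodup_append'.mp hnd).2.2
  have hu_nβ : u ∉ β.support := by
    intro h
    rw [β.support_eq_cons] at h
    rcases List.mem_cons.mp h with h | h
    · exact hune h
    · exact hdisjz u hu_pv h
  have he_nβ : s(u, v) ∉ β.edges := fun h => hu_nβ (β.fst_mem_support_of_mem_edges h)
  have F3 : edgesWeight w pz.edges = edgesWeight w pv.edges + edgesWeight w β.edges := by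
    conv_lhs => rw [← pz.take_spec hvz]
    rw [SimpleGraph.Walk.edges_append, ew_append, hpv2]
  -- the candidate walk avoiding the edge
  set c : T.Walk z t := β.reverse.append α with hcdef
  have hce : ∀ e ∈ c.edges, e ∉ ({s(u, v)} : Set (Sym2 V)) := by
    intro e he hin
    rw [Set.mem_singleton_iff] at hin
    subst hin
    rw [hcdef, SimpleGraph.Walk.edges_append, List.mem_append,
      SimpleGraph.Walk.edges_reverse, List.mem_reverse] at he
    rcases he with he | he
    · exact he_nβ he
    · exact he_nα he
  have hc_w : edgesWeight w c.edges = edgesWeight w β.edges + edgesWeight w α.edges := by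
    rw [hcdef, SimpleGraph.Walk.edges_append, ew_append, SimpleGraph.Walk.edges_reverse,
      ew_reverse]
  set cG : G.Walk z t := c.transfer G (hTsub c) with hcGdef
  have hcGe : cG.edges = c.edges := c.edges_transfer (hTsub c)
  set cG' : G'.Walk z t := cG.toDeleteEdges {s(u, v)} (by rw [hcGe]; exact hce) with hcG'def
  have hcG'e : cG'.edges = c.edges := by
    rw [hcG'def]
    rw [SimpleGraph.Walk.edges_transfer, hcGe]
  -- minimum over all G' paths
  set F : Finset ℚ := Finset.univ.image (fun p : G'.Path z t => edgesWeight w p.1.edges)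
    with hFdef
  have hFne : F.Nonempty :=
    ⟨_, Finset.mem_image_of_mem _ (Finset.mem_univ (⟨cG'.bypass, cG'.bypass_isPath⟩ : G'.Path z t))⟩
  set m := F.min' hFne with hmdef
  have Hmin : ∀ (p : G'.Walk z t), p.IsPath → m ≤ edgesWeight w p.edges := fun p hp =>
    F.min'_le _ (Finset.mem_image_of_mem _ (Finset.mem_univ (⟨p, hp⟩ : G'.Path z t)))
  obtain ⟨P₀, hP₀, hP₀w⟩ : ∃ p : G'.Walk z t, p.IsPath ∧ edgesWeight w p.edges = m := by
    obtain ⟨p, -, hp⟩ := Finset.mem_image.mp (F.min'_mem hFne)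
    exact ⟨p.1, p.2, hp⟩
  have hm_le_c : m ≤ edgesWeight w β.edges + edgesWeight w α.edges := by
    refine (Hmin cG'.bypass cG'.bypass_isPath).trans ?_
    rw [← hc_w, ← hcG'e]
    exact ew_bypass hw' cG'
  -- the key inequality
  have Hkey : ∀ q : G.Walk z t, q.IsPath → m ≤ edgesWeight w q.edges := by
    intro q hq
    by_cases heq : s(u, v) ∈ q.edges
    · have hvq : v ∈ q.support := q.snd_mem_support_of_mem_edges heq
      set A := q.takeUntil v hvq with hAdef
      set B := q.dropUntil v hvq with hBdef
      have hA0 : 0 ≤ edgesWeight w A.edges := ew_walk_nonneg hw A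
      have hB0 : 0 ≤ edgesWeight w B.edges := ew_walk_nonneg hw B
      have hqw : edgesWeight w q.edges = edgesWeight w A.edges + edgesWeight w B.edges := by
        conv_lhs => rw [← q.take_spec hvq]
        rw [SimpleGraph.Walk.edges_append, ew_append]
      have heq' := heq
      rw [← q.take_spec hvq, SimpleGraph.Walk.edges_append] at heq'
      rcases List.mem_append.mp heq' with h1 | h1
      · -- edge in A : z → v ; A = A₁ ++ (u → v segment)
        have huA : u ∈ A.support := A.fst_mem_support_of_mem_edges h1
        set A₁ := A.takeUntil u huA with hA₁def
        set A₂ := A.dropUntil u huA with hA₂def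
        have hA₂0 : 0 ≤ edgesWeight w A₂.edges := ew_walk_nonneg hw A₂
        have hAw : edgesWeight w A.edges
            = edgesWeight w A₁.edges + edgesWeight w A₂.edges := by
          conv_lhs => rw [← A.take_spec huA]
          rw [SimpleGraph.Walk.edges_append, ew_append]
        -- pt vs pv ++ B :  wα ≤ wB
        have i1 := SPT t pt hpt ((pv.transfer G (hTsub pv)).append B)
        rw [SimpleGraph.Walk.edges_append, ew_append, SimpleGraph.Walk.edges_transfer, F1]
          at i1
        -- pz vs pu ++ A₁.reverse : wpu + we + wβ ≤ wpu + wA₁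
        have i2 := SPT z pz hpz ((pu.transfer G (hTsub pu)).append A₁.reverse)
        rw [SimpleGraph.Walk.edges_append, ew_append, SimpleGraph.Walk.edges_transfer,
          SimpleGraph.Walk.edges_reverse, ew_reverse, F3, F2] at i2
        linarith [hm_le_c]
      · -- edge in B : v → t
        have huB : u ∈ B.support := B.fst_mem_support_of_mem_edges h1
        set B₁ := B.takeUntil u huB with hB₁def
        set B₂ := B.dropUntil u huB with hB₂def
        have hB₁0 : 0 ≤ edgesWeight w B₁.edges := ew_walk_nonneg hw B₁
        have hBw : edgesWeight w B.edges
            = edgesWeight w B₁.edges + edgesWeight w B₂.edges := by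
          conv_lhs => rw [← B.take_spec huB]
          rw [SimpleGraph.Walk.edges_append, ew_append]
        -- pz vs pv ++ A.reverse : wβ ≤ wA
        have i1 := SPT z pz hpz ((pv.transfer G (hTsub pv)).append A.reverse)
        rw [SimpleGraph.Walk.edges_append, ew_append, SimpleGraph.Walk.edges_transfer,
          SimpleGraph.Walk.edges_reverse, ew_reverse, F3] at i1
        -- pt vs pu ++ B₂ : we + wα ≤ wB₂
        have i2 := SPT t pt hpt ((pu.transfer G (hTsub pu)).append B₂)
        rw [SimpleGraph.Walk.edges_append, ew_append, SimpleGraph.Walk.edges_transfer,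
          F1, F2] at i2
        linarith [hm_le_c]
    · have hq' : ∀ e ∈ q.edges, e ∉ ({s(u, v)} : Set (Sym2 V)) := by
        intro e he hin
        rw [Set.mem_singleton_iff] at hin
        subst hin
        exact heq he
      have := Hmin (q.toDeleteEdges {s(u, v)} hq') (hq.transfer _)
      rwa [SimpleGraph.Walk.edges_transfer] at this
  -- conclude
  constructor
  · rintro ⟨⟨p, hp, hpδ⟩, hlow⟩
    have hδm : δ = m := le_antisymm (hP₀w ▸ hlow P₀ hP₀) (hpδ ▸ Hmin p hp)
    refine ⟨⟨P₀.transfer G (hG'sub P₀), hP₀.transfer _, ?_⟩, ?_⟩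
    · rw [SimpleGraph.Walk.edges_transfer, hP₀w, hδm]
    · intro q hq
      rw [hδm]
      exact Hkey q hq
  · rintro ⟨⟨p, hp, hpδ⟩, hlow⟩
    have h1 : δ ≤ m := by
      have := hlow (P₀.transfer G (hG'sub P₀)) (hP₀.transfer _)
      rwa [SimpleGraph.Walk.edges_transfer, hP₀w] at this
    have h2 : m ≤ δ := hpδ ▸ Hkey p hp
    have hδm : δ = m := le_antisymm h1 h2
    refine ⟨⟨P₀, hP₀, by rw [hP₀w, hδm]⟩, ?_⟩
    intro p' hp'
    have := hlow (p'.transfer G (hG'sub p')) (hp'.transfer _)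
    rwa [SimpleGraph.Walk.edges_transfer] at this
end

section
/- Let G be a directed graph with a distinguished vertex s, and let G'_s be the graph on vertices V ∪ V̄ (each v paired with a twin v̄) with arcs: (u,v) and (v̄,ū) for each arc (u,v) of G with v ≠ s, arcs (v,v̄) for each v ≠ s, and the arc (s̄,s). Then every cycle of G'_s containing s is bipolar, i.e., contains vertices of both V and V̄, and contains exactly one arc from V̄ to V (namely (s̄,s)) and exactly one arc from V to V̄. -/
/-- The doubled graph `G'_s` of a directed graph `A` with distinguished vertex `s`:
vertices `V ⊕ V` (`Sum.inl v` is `v`, `Sum.inr v` is its twin `v̄`), with arcs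
`(u,v)` and `(v̄,ū)` for each arc `(u,v)` of `A` with `v ≠ s`, arcs `(v,v̄)` for each
`v ≠ s`, and the arc `(s̄,s)`. -/
def doubledAdj {V : Type} (A : V → V → Prop) (s : V) : (V ⊕ V) → (V ⊕ V) → Prop
  | Sum.inl u, Sum.inl v => A u v ∧ v ≠ s
  | Sum.inr v, Sum.inr u => A u v ∧ v ≠ s
  | Sum.inl u, Sum.inr v => u = v ∧ u ≠ s
  | Sum.inr u, Sum.inl v => u = v ∧ u = s

/-- A (simple directed) cycle, given by the list of its distinct vertices in order,
with consecutive arcs and a closing arc from the last vertex back to the first. -/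
def IsCycleList {V : Type} (A : V → V → Prop) (l : List V) : Prop :=
  2 ≤ l.length ∧ l.Chain' A ∧
    (∀ a b, l.head? = some a → l.getLast? = some b → A b a) ∧ l.Nodup

/-- Every pair in `l.zip (l.rotate 1)` is an arc of the cycle. -/
lemma zip_rotate_adj {α : Type} {A : α → α → Prop} {l : List α}
    (hne : l ≠ []) (hchain : l.Chain' A)
    (hclose : ∀ a b, l.head? = some a → l.getLast? = some b → A b a) :
    ∀ p ∈ l.zip (l.rotate 1), A p.1 p.2 := by
  intro p hp
  rw [List.mem_iff_getElem] at hp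
  obtain ⟨i, hi, hpi⟩ := hp
  have hlpos : 0 < l.length := List.length_pos_iff.2 hne
  have hzlen : (l.zip (l.rotate 1)).length = l.length := by simp
  rw [hzlen] at hi
  have h1 : (l.zip (l.rotate 1))[i]'(by omega) =
      (l[i]'hi, (l.rotate 1)[i]'(by simpa using hi)) := List.getElem_zip
  have h2 : (l.rotate 1)[i]'(by simpa using hi) =
      l[(i + 1) % l.length]'(Nat.mod_lt _ hlpos) := List.getElem_rotate l 1 i _
  rw [h1, h2] at hpi
  subst hpi
  dsimp only
  rcases Nat.lt_or_ge (i + 1) l.length with hlt | hge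
  · have hmod : (i + 1) % l.length = i + 1 := Nat.mod_eq_of_lt hlt
    have := List.isChain_iff_getElem.1 hchain i (by omega)
    simpa [hmod] using this
  · have hi1 : i = l.length - 1 := by omega
    have hmod : (i + 1) % l.length = 0 := by
      have : i + 1 = l.length := by omega
      simp [this]
    have hh : l.head? = some (l[0]'hlpos) := by
      rw [List.head?_eq_getElem?, List.getElem?_eq_getElem hlpos]
    have hg : l.getLast? = some (l[i]'hi) := by
      rw [List.getLast?_eq_getElem?, ← hi1, List.getElem?_eq_getElem hi]
    have := hclose _ _ hh hg
    simpa [hmod] using this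

/-- A nonempty nodup list all of whose elements are equal has length 1. -/
lemma length_eq_one_aux {α : Type} {m : List α} {c : α}
    (hn : m.Nodup) (hall : ∀ x ∈ m, x = c) (hc : c ∈ m) : m.length = 1 := by
  match m with
  | [] => exact absurd hc List.not_mem_nil
  | [a] => rfl
  | a :: b :: t =>
    exfalso
    have ha : a = c := hall a (by simp)
    have hb : b = c := hall b (by simp)
    rw [List.nodup_cons] at hn
    exact hn.1 (by simp [ha, hb])

lemma sum_map_sub' {α : Type} (f g : α → ℤ) (m : List α) :
    (m.map (fun x => f x - g x)).sum = (m.map f).sum - (m.map g).sum := by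
  induction m with
  | nil => simp
  | cons a t ih => simp only [List.map_cons, List.sum_cons, ih]; ring

private def gInd {α β : Type} (x : α ⊕ β) : ℤ := if x.isRight then 1 else 0

/-- Telescoping count: the sum of differences equals (#L→R) − (#R→L). -/
lemma sum_diff_eq {α β : Type} (m : List ((α ⊕ β) × (α ⊕ β))) :
    (m.map (fun p => gInd p.2 - gInd p.1)).sum =
      ((m.filter fun p => p.1.isLeft && p.2.isRight).length : ℤ) -
        ((m.filter fun p => p.1.isRight && p.2.isLeft).length : ℤ) := by
  induction m with
  | nil => simp
  | cons p t ih =>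
    rcases p with ⟨x, y⟩
    simp only [gInd] at ih
    cases x <;> cases y <;>
      simp [gInd, List.filter_cons, ih] <;> ring

/-- Every cycle of `G'_s` containing `s` is bipolar (contains vertices
of both `V` and `V̄`), contains exactly one arc from `V̄` to `V` — namely `(s̄, s)` —
and exactly one arc from `V` to `V̄`. -/
theorem stmt11 {V : Type} [Fintype V] [DecidableEq V]
    (A : V → V → Prop) (s : V) (l : List (V ⊕ V))
    (hl : IsCycleList (doubledAdj A s) l) (hs : Sum.inl s ∈ l) :
    ((∃ v : V, Sum.inl v ∈ l) ∧ (∃ v : V, Sum.inr v ∈ l)) ∧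
    ((l.zip (l.rotate 1)).filter (fun p => p.1.isRight && p.2.isLeft)).length = 1 ∧
    (∀ p ∈ l.zip (l.rotate 1), p.1.isRight → p.2.isLeft →
      p = (Sum.inr s, Sum.inl s)) ∧
    ((l.zip (l.rotate 1)).filter (fun p => p.1.isLeft && p.2.isRight)).length = 1 := by
  obtain ⟨hlen, hchain, hclose, hnodup⟩ := hl
  have hne : l ≠ [] := by intro h; simp [h] at hlen
  set z := l.zip (l.rotate 1) with hz
  have hadj : ∀ p ∈ z, doubledAdj A s p.1 p.2 := zip_rotate_adj hne hchain hclose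
  have hrotlen : (l.rotate 1).length = l.length := l.length_rotate 1
  have hsnd : z.map Prod.snd = l.rotate 1 := List.map_snd_zip hrotlen.le
  have hfst : z.map Prod.fst = l := List.map_fst_zip hrotlen.ge
  -- the pair (inr s, inl s) is in z
  have hmem : (Sum.inr s, Sum.inl s) ∈ z := by
    have h1 : Sum.inl s ∈ l.rotate 1 := List.mem_rotate.2 hs
    rw [← hsnd, List.mem_map] at h1
    obtain ⟨p, hp, hp2⟩ := h1
    have hA := hadj p hp
    rcases p with ⟨x, y⟩
    simp only at hp2
    subst hp2
    rcases x with u | u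
    · exact absurd rfl (hA.2)
    · exact hA.1 ▸ hp
  -- third conjunct first
  have h3 : ∀ p ∈ z, p.1.isRight → p.2.isLeft → p = (Sum.inr s, Sum.inl s) := by
    intro p hp hr hlft
    rcases p with ⟨x, y⟩
    rcases x with u | u
    · simp at hr
    rcases y with v | v
    · have hA := hadj _ hp
      obtain ⟨h1, h2⟩ := hA
      subst h1; subst h2; rfl
    · simp at hlft
  -- z is nodup
  have hznd : z.Nodup := by
    have : (z.map Prod.fst).Nodup := hfst ▸ hnodup
    exact this.of_map _
  -- RL count = 1
  have hRL : (z.filter (fun p => p.1.isRight && p.2.isLeft)).length = 1 := by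
    refine length_eq_one_aux (c := (Sum.inr s, Sum.inl s)) ((hznd.filter _)) ?_ ?_
    · intro x hx
      rw [List.mem_filter] at hx
      obtain ⟨hx1, hx2⟩ := hx
      simp only [Bool.and_eq_true] at hx2
      exact h3 x hx1 hx2.1 hx2.2
    · rw [List.mem_filter]
      exact ⟨hmem, by simp⟩
  -- LR count = 1 via telescoping sum
  have hLR : (z.filter (fun p => p.1.isLeft && p.2.isRight)).length = 1 := by
    have hsum : (z.map (fun p => gInd p.2 - gInd p.1)).sum = 0 := by
      have h1 : (z.map (fun p => gInd p.2 - gInd p.1)).sum =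
          (z.map (fun p => gInd p.2)).sum - (z.map (fun p => gInd p.1)).sum :=
        sum_map_sub' _ _ _
      have h2 : z.map (fun p => gInd p.2) = (l.rotate 1).map gInd := by
        rw [← hsnd, List.map_map]; rfl
      have h3 : z.map (fun p => gInd p.1) = l.map gInd := by
        rw [← hfst, List.map_map]; rfl
      rw [h1, h2, h3, ((l.rotate_perm 1).map gInd).sum_eq, sub_self]
    rw [sum_diff_eq, hRL] at hsum
    omega
  exact ⟨⟨⟨s, hs⟩, ⟨s, by simpa using (List.of_mem_zip hmem).1⟩⟩, hRL, h3, hLR⟩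
end

section
/- Deciding, given a directed graph G with positive weights and a bound M together with vertices s and t, whether there exists a vertex t'' and three pairwise internally vertex-disjoint paths from s to t'' with lengths at most M, M, and 0 respectively, is NP-hard; this follows by reduction from the min-max two-disjoint-paths problem: adding a zero-weight arc (s,t) to G yields an instance such that a (s,*,{M,M,0})-3-bubble exists iff G has two vertex-disjoint st-paths each of length ≤ M. -/
/-- A directed multigraph with rational arc weights. -/
structure MDigraph (V : Type) where
  E : Type
  src : E → V
  tgt : E → V
  w : E → ℚ

namespace MDigraph

variable {V : Type}

/-- A walk from `u` to `v` given by its list of arcs. -/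
def IsArcWalk (D : MDigraph V) : V → V → List D.E → Prop
  | u, v, [] => u = v
  | u, v, e :: l => D.src e = u ∧ IsArcWalk D (D.tgt e) v l

/-- The list of vertices visited by a walk starting at `u`. -/
def walkVerts (D : MDigraph V) (u : V) (l : List D.E) : List V :=
  u :: l.map D.tgt

/-- The weight (length) of a walk. -/
def walkWeight (D : MDigraph V) (l : List D.E) : ℚ :=
  (l.map D.w).sum

/-- A simple path from `u` to `v`. -/
def IsArcPath (D : MDigraph V) (u v : V) (l : List D.E) : Prop :=
  D.IsArcWalk u v l ∧ (D.walkVerts u l).Nodup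

/-- Two paths from `u` to `v` are internally vertex-disjoint:
they share no vertex other than `u` and `v`. -/
def IntDisjoint (D : MDigraph V) (u v : V) (l₁ l₂ : List D.E) : Prop :=
  ∀ x ∈ D.walkVerts u l₁, x ∈ D.walkVerts u l₂ → x = u ∨ x = v

/-- `G' = G` plus one extra arc from `s` to `t` of weight `0`. -/
def extend (D : MDigraph V) (s t : V) : MDigraph V where
  E := D.E ⊕ Unit
  src := Sum.elim D.src fun _ => s
  tgt := Sum.elim D.tgt fun _ => t
  w := Sum.elim D.w fun _ => 0

end MDigraph

attribute [reducible] MDigraph.extend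

namespace MDigraph

variable {V : Type}

lemma aux_isArcWalk_map_inl (D : MDigraph V) (s t : V) (v : V) (q : List D.E) :
    ∀ u, (D.extend s t).IsArcWalk u v (q.map Sum.inl) ↔ D.IsArcWalk u v q := by
  induction q with
  | nil => intro u; rfl
  | cons e l ih =>
      intro u
      exact ⟨fun ⟨h1, h2⟩ => ⟨h1, (ih _).mp h2⟩, fun ⟨h1, h2⟩ => ⟨h1, (ih _).mpr h2⟩⟩

lemma aux_walkVerts_map_inl (D : MDigraph V) (s t : V) (u : V) (q : List D.E) :
    (D.extend s t).walkVerts u (q.map Sum.inl) = D.walkVerts u q := by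
  simp [walkVerts, extend, List.map_map, Function.comp]

lemma aux_walkWeight_map_inl (D : MDigraph V) (s t : V) (q : List D.E) :
    (D.extend s t).walkWeight (q.map Sum.inl) = D.walkWeight q := by
  simp [walkWeight, extend, List.map_map, Function.comp]

lemma aux_mem_tgt_of_walk (D : MDigraph V) {v : V} {e : D.E} {l : List D.E} :
    ∀ u, D.IsArcWalk u v (e :: l) → v ∈ (e :: l).map D.tgt := by
  induction l generalizing e with
  | nil => intro u h; simp [IsArcWalk] at h; simp [h.2.symm]
  | cons f l ih =>
      intro u h
      have := ih (D.tgt e) h.2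
      simp at this ⊢
      tauto

lemma aux_nil_of_walk_self (D : MDigraph V) {u : V} {l : List D.E}
    (h : D.IsArcWalk u u l) (hnd : (D.walkVerts u l).Nodup) : l = [] := by
  cases l with
  | nil => rfl
  | cons e l' =>
      exfalso
      have hm := aux_mem_tgt_of_walk D u h
      have := (List.nodup_cons.mp hnd).1
      exact this hm

lemma aux_inr_cases (D : MDigraph V) (s t : V) {p : List (D.extend s t).E} :
    ∀ u, (D.extend s t).IsArcWalk u t p →
    ((D.extend s t).walkVerts u p).Nodup →
    s ∉ p.map (D.extend s t).tgt →
    Sum.inr () ∈ p → u = s ∧ p = [Sum.inr ()] := by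
  induction p with
  | nil => intro u _ _ _ hm; simp at hm
  | cons e l ih =>
      intro u hwalk hnd hs hm
      match e with
      | Sum.inl a =>
          exfalso
          have hm' : Sum.inr () ∈ l := by
            rcases List.mem_cons.mp hm with h | h
            · exact absurd h (by simp)
            · exact h
          have hnd' : ((D.extend s t).walkVerts ((D.extend s t).tgt (Sum.inl a)) l).Nodup := by
            have : (D.extend s t).walkVerts u (Sum.inl a :: l)
                = u :: (D.extend s t).walkVerts ((D.extend s t).tgt (Sum.inl a)) l := by
              simp [walkVerts]
            rw [this] at hnd
            exact (List.nodup_cons.mp hnd).2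
          have hs' : s ∉ l.map (D.extend s t).tgt := fun h => hs (by simp [h])
          obtain ⟨h1, _⟩ := ih _ hwalk.2 hnd' hs' hm'
          apply hs
          simp only [List.map_cons, List.mem_cons]
          left
          exact h1.symm ▸ rfl
      | Sum.inr () =>
          have hu : u = s := hwalk.1.symm
          refine ⟨hu, ?_⟩
          cases l with
          | nil => rfl
          | cons f l' =>
              exfalso
              have hwalk2 : (D.extend s t).IsArcWalk t t (f :: l') := hwalk.2
              have hm2 := aux_mem_tgt_of_walk (D.extend s t) t hwalk2
              have : (D.extend s t).walkVerts u (Sum.inr () :: f :: l')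
                  = u :: t :: (f :: l').map (D.extend s t).tgt := by
                simp [walkVerts, extend]
              rw [this] at hnd
              have := (List.nodup_cons.mp (List.nodup_cons.mp hnd).2).1
              exact this hm2

lemma aux_exists_map_inl {α β : Type} {p : List (α ⊕ β)}
    (h : ∀ e ∈ p, ∃ a, e = Sum.inl a) : ∃ q : List α, p = q.map Sum.inl := by
  induction p with
  | nil => exact ⟨[], rfl⟩
  | cons e l ih =>
      obtain ⟨a, ha⟩ := h e (by simp)
      obtain ⟨q, hq⟩ := ih (fun e he => h e (by simp [he]))
      exact ⟨a :: q, by simp [ha, hq]⟩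

end MDigraph

/-- correctness of the NP-hardness reduction: let `G` be a directed
graph with strictly positive weights, `s, t` vertices, `M` a bound, and `G'` the graph
obtained by adding a zero-weight arc `(s,t)`. Then `G'` contains an
`(s, t'', {M, M, 0})`-3-bubble for some `t''` (three pairwise internally
vertex-disjoint `s → t''` paths of weights `≤ M`, `≤ M`, `≤ 0`) if and only if `G`
contains two internally vertex-disjoint `st`-paths, each of weight `≤ M`. -/
theorem stmt13 {V : Type} [Fintype V] [DecidableEq V] (D : MDigraph V)
    (hw : ∀ e : D.E, 0 < D.w e) (s t : V) (M : ℚ) :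
    (∃ (t'' : V) (p₁ p₂ p₃ : List (D.extend s t).E),
        (D.extend s t).IsArcPath s t'' p₁ ∧ (D.extend s t).walkWeight p₁ ≤ M ∧
        (D.extend s t).IsArcPath s t'' p₂ ∧ (D.extend s t).walkWeight p₂ ≤ M ∧
        (D.extend s t).IsArcPath s t'' p₃ ∧ (D.extend s t).walkWeight p₃ ≤ 0 ∧
        p₁ ≠ p₂ ∧ p₁ ≠ p₃ ∧ p₂ ≠ p₃ ∧
        (D.extend s t).IntDisjoint s t'' p₁ p₂ ∧
        (D.extend s t).IntDisjoint s t'' p₁ p₃ ∧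
        (D.extend s t).IntDisjoint s t'' p₂ p₃)
    ↔
    (∃ q₁ q₂ : List D.E,
        D.IsArcPath s t q₁ ∧ D.walkWeight q₁ ≤ M ∧
        D.IsArcPath s t q₂ ∧ D.walkWeight q₂ ≤ M ∧
        q₁ ≠ q₂ ∧ D.IntDisjoint s t q₁ q₂) := by
  constructor
  · rintro ⟨t'', p₁, p₂, p₃, hp₁, hw₁, hp₂, hw₂, hp₃, hw₃, h12, h13, h23, d12, d13, d23⟩
    -- all arc weights in the extension are nonnegative
    have hnn : ∀ e : (D.extend s t).E, 0 ≤ (D.extend s t).w e := by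
      rintro (a | u)
      · exact le_of_lt (hw a)
      · exact le_refl 0
    -- every arc of p₃ is the special arc
    have hall3 : ∀ e ∈ p₃, e = Sum.inr () := by
      intro e he
      match e with
      | Sum.inr () => rfl
      | Sum.inl a =>
          exfalso
          have hmem : D.w a ∈ p₃.map (D.extend s t).w :=
            List.mem_map.mpr ⟨Sum.inl a, he, rfl⟩
          have hle := List.single_le_sum (l := p₃.map (D.extend s t).w)
            (by intro x hx; obtain ⟨e', _, rfl⟩ := List.mem_map.mp hx; exact hnn e')
            _ hmem
          have h0 : 0 < (D.extend s t).walkWeight p₃ := lt_of_lt_of_le (hw a) hle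
          exact absurd hw₃ (not_le.mpr h0)
    -- p₃ is nonempty
    have h3ne : p₃ ≠ [] := by
      intro h3nil
      have hst'' : s = t'' := by rw [h3nil] at hp₃; exact hp₃.1
      have h1nil : p₁ = [] :=
        MDigraph.aux_nil_of_walk_self (D.extend s t) (hst'' ▸ hp₁.1) hp₁.2
      have h2nil : p₂ = [] :=
        MDigraph.aux_nil_of_walk_self (D.extend s t) (hst'' ▸ hp₂.1) hp₂.2
      exact h12 (h1nil.trans h2nil.symm)
    -- p₃ = [inr ()]
    have h3eq : p₃ = [Sum.inr ()] := by
      match p₃, h3ne with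
      | e :: l, _ =>
        have he : e = Sum.inr () := hall3 e (by simp)
        subst he
        match l with
        | [] => rfl
        | f :: l' =>
          exfalso
          have hf : f = Sum.inr () := hall3 f (by simp)
          subst hf
          have hsrc : (D.extend s t).src (Sum.inr ()) = (D.extend s t).tgt (Sum.inr ()) :=
            hp₃.1.2.1
          have hst : s = t := hsrc
          have hnd := hp₃.2
          have hv : (D.extend s t).walkVerts s (Sum.inr () :: Sum.inr () :: l')
              = s :: t :: t :: l'.map (D.extend s t).tgt := by
            simp [MDigraph.walkVerts]
          rw [hv] at hnd
          rw [← hst] at hnd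
          exact (List.nodup_cons.mp hnd).1 (by simp)
    have ht'' : t'' = t := by
      rw [h3eq] at hp₃
      exact hp₃.1.2.symm
    subst t''
    -- s ≠ t
    have hst : s ≠ t := by
      rw [h3eq] at hp₃
      have hnd := hp₃.2
      have hv : (D.extend s t).walkVerts s [Sum.inr ()] = [s, t] := rfl
      rw [hv] at hnd
      intro h
      exact (List.nodup_cons.mp hnd).1 (by simp [h])
    -- p₁ and p₂ use no special arc
    have key : ∀ p : List (D.extend s t).E, (D.extend s t).IsArcPath s t p →
        p ≠ [Sum.inr ()] → ∃ q : List D.E, p = q.map Sum.inl := by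
      intro p hp hne
      apply MDigraph.aux_exists_map_inl
      intro e he
      match e with
      | Sum.inl a => exact ⟨a, rfl⟩
      | Sum.inr () =>
          exfalso
          have hsnot : s ∉ p.map (D.extend s t).tgt := by
            have hnd := hp.2
            exact (List.nodup_cons.mp hnd).1
          obtain ⟨_, hpeq⟩ :=
            MDigraph.aux_inr_cases D s t s hp.1 hp.2 hsnot he
          exact hne hpeq
    obtain ⟨q₁, hq₁⟩ := key p₁ hp₁ (h3eq ▸ h13)
    obtain ⟨q₂, hq₂⟩ := key p₂ hp₂ (h3eq ▸ h23)
    subst hq₁; subst hq₂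
    refine ⟨q₁, q₂, ?_, ?_, ?_, ?_, ?_, ?_⟩
    · exact ⟨(MDigraph.aux_isArcWalk_map_inl D s t t q₁ s).mp hp₁.1,
        by rw [← MDigraph.aux_walkVerts_map_inl D s t s q₁]; exact hp₁.2⟩
    · rw [← MDigraph.aux_walkWeight_map_inl D s t q₁]; exact hw₁
    · exact ⟨(MDigraph.aux_isArcWalk_map_inl D s t t q₂ s).mp hp₂.1,
        by rw [← MDigraph.aux_walkVerts_map_inl D s t s q₂]; exact hp₂.2⟩
    · rw [← MDigraph.aux_walkWeight_map_inl D s t q₂]; exact hw₂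
    · intro h; exact h12 (by rw [h])
    · intro x hx1 hx2
      exact d12 x (by rw [MDigraph.aux_walkVerts_map_inl]; exact hx1)
        (by rw [MDigraph.aux_walkVerts_map_inl]; exact hx2)
  · rintro ⟨q₁, q₂, hq₁, hw₁, hq₂, hw₂, hne, hdisj⟩
    -- s ≠ t
    have hst : s ≠ t := by
      intro h
      subst h
      have h1 : q₁ = [] := MDigraph.aux_nil_of_walk_self D hq₁.1 hq₁.2
      have h2 : q₂ = [] := MDigraph.aux_nil_of_walk_self D hq₂.1 hq₂.2
      exact hne (h1.trans h2.symm)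
    have hq₁ne : q₁ ≠ [] := by
      intro h; rw [h] at hq₁; exact hst hq₁.1
    have hq₂ne : q₂ ≠ [] := by
      intro h; rw [h] at hq₂; exact hst hq₂.1
    have hp3verts : (D.extend s t).walkVerts s [Sum.inr ()] = [s, t] := rfl
    have hp3path : (D.extend s t).IsArcPath s t [Sum.inr ()] := by
      refine ⟨⟨rfl, rfl⟩, ?_⟩
      rw [hp3verts]
      simp [hst]
    refine ⟨t, q₁.map Sum.inl, q₂.map Sum.inl, [Sum.inr ()],
      ⟨(MDigraph.aux_isArcWalk_map_inl D s t t q₁ s).mpr hq₁.1,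
        by rw [MDigraph.aux_walkVerts_map_inl]; exact hq₁.2⟩,
      by rw [MDigraph.aux_walkWeight_map_inl]; exact hw₁,
      ⟨(MDigraph.aux_isArcWalk_map_inl D s t t q₂ s).mpr hq₂.1,
        by rw [MDigraph.aux_walkVerts_map_inl]; exact hq₂.2⟩,
      by rw [MDigraph.aux_walkWeight_map_inl]; exact hw₂,
      hp3path, by simp [MDigraph.walkWeight, MDigraph.extend], ?_, ?_, ?_, ?_, ?_, ?_⟩
    · intro h
      exact hne (List.map_injective_iff.mpr Sum.inl_injective h)
    · match q₁, hq₁ne with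
      | a :: l, _ => simp
    · match q₂, hq₂ne with
      | a :: l, _ => simp
    · intro x hx1 hx2
      rw [MDigraph.aux_walkVerts_map_inl] at hx1 hx2
      exact hdisj x hx1 hx2
    · intro x hx1 hx2
      rw [hp3verts] at hx2
      simpa using hx2
    · intro x hx1 hx2
      rw [hp3verts] at hx2
      simpa using hx2
end

section
/- Let T be the recursion tree of the binary-partition path-listing algorithm on graph G and vertices s,t: leaves of T are in one-to-one correspondence with st-paths of G, and for each leaf corresponding to path π, the number of left branches on the root-to-leaf trace equals |π|, the number of edges of π. -/
/-- The shape of a recursion tree of the binary-partition `st`-path listing algorithm: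
a leaf (output), a unary node (left branch only, labelled by the chosen neighbor `v`),
or a binary node (left and right branches, labelled by the chosen neighbor `v`). -/
inductive RT (V : Type) : Type where
  | leaf : RT V
  | node1 : V → RT V → RT V
  | node2 : V → RT V → RT V → RT V

/-- Deleting a vertex `u`: remove all edges incident to `u`. -/
def delVert {V : Type} (G : SimpleGraph V) (u : V) : SimpleGraph V :=
  G.deleteEdges (G.incidenceSet u)

/-- Well-formedness of a recursion tree of the binary partition algorithm at state
`(G, u, t)`: a leaf when `u = t`; at `u ≠ t` an edge `e = (u,v)` is chosen, the left
child handles the paths using `e` (state `(G - u, v, t)`), the right child the paths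
avoiding `e` (state `(G - e, u, t)`), and a right branch is performed exactly when
there remains some `ut`-path avoiding `e`. -/
def RT.Valid {V : Type} : RT V → SimpleGraph V → V → V → Prop
  | .leaf, _, u, t => u = t
  | .node1 v L, G, u, t => u ≠ t ∧ G.Adj u v ∧ L.Valid (delVert G u) v t ∧
      ¬∃ p : (G.deleteEdges {s(u, v)}).Walk u t, p.IsPath
  | .node2 v L R, G, u, t => u ≠ t ∧ G.Adj u v ∧ L.Valid (delVert G u) v t ∧
      R.Valid (G.deleteEdges {s(u, v)}) u t

/-- The leaves of the recursion tree, each recorded as the sequence of vertices added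
by the left branches on its root-to-leaf trace, paired with the number of left
branches on that trace. -/
def RT.outs {V : Type} : RT V → List (List V × ℕ)
  | .leaf => [([], 0)]
  | .node1 v L => L.outs.map fun q => (v :: q.1, q.2 + 1)
  | .node2 v L R => (L.outs.map fun q => (v :: q.1, q.2 + 1)) ++ R.outs

namespace Stmt19Aux

open SimpleGraph

variable {V : Type}

lemma delVert_not_adj (G : SimpleGraph V) (u w : V) : ¬ (delVert G u).Adj u w := by
  simp only [delVert, deleteEdges_adj, not_and, not_not]
  intro h
  exact ⟨G.mem_edgeSet.2 h, Sym2.mem_mk_left u w⟩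

lemma not_mem_support_isolated {H : SimpleGraph V} {u : V}
    (hu : ∀ w, ¬ H.Adj u w) : ∀ {a b : V} (p : H.Walk a b), a ≠ u → u ∉ p.support := by
  intro a b p
  induction p with
  | nil => intro h; simp [Ne.symm h]
  | @cons a c b h' q ih =>
    intro ha
    simp only [Walk.support_cons, List.mem_cons, not_or]
    refine ⟨fun e => ha e.symm, ih fun e => hu _ (e ▸ h'.symm)⟩

lemma edges_delVert {G : SimpleGraph V} {u v t : V} {q : G.Walk v t} (hu : u ∉ q.support) :
    ∀ e ∈ q.edges, e ∈ (delVert G u).edgeSet := by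
  intro e he
  rw [delVert, edgeSet_deleteEdges]
  refine ⟨q.edges_subset_edgeSet he, fun hinc => ?_⟩
  have hue : u ∈ e := hinc.2
  induction e with
  | h x y =>
    rcases Sym2.mem_iff.1 hue with rfl | rfl
    · exact hu (q.fst_mem_support_of_mem_edges he)
    · exact hu (q.snd_mem_support_of_mem_edges he)

lemma edges_delEdge {G : SimpleGraph V} {a b : V} {p : G.Walk a b} {u v : V}
    (h : s(u,v) ∉ p.edges) : ∀ e ∈ p.edges, e ∈ (G.deleteEdges {s(u,v)}).edgeSet := by
  intro e he
  rw [edgeSet_deleteEdges]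
  exact ⟨p.edges_subset_edgeSet he, fun hs => h ((Set.mem_singleton_iff.1 hs) ▸ he)⟩

lemma edges_sub {H G : SimpleGraph V} (hle : H ≤ G) {a b : V} (p : H.Walk a b) :
    ∀ e ∈ p.edges, e ∈ G.edgeSet :=
  fun _ he => SimpleGraph.edgeSet_mono hle (p.edges_subset_edgeSet he)

lemma delVert_le (G : SimpleGraph V) (u : V) : delVert G u ≤ G :=
  SimpleGraph.deleteEdges_le _

lemma delEdge_le (G : SimpleGraph V) (u v : V) : G.deleteEdges {s(u,v)} ≤ G :=
  SimpleGraph.deleteEdges_le _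

lemma decompose {G : SimpleGraph V} {u t : V} (hne : u ≠ t) (p : G.Walk u t) (hp : p.IsPath) :
    ∃ (w : V) (h : G.Adj u w) (q : G.Walk w t), p = Walk.cons h q ∧ q.IsPath ∧ u ∉ q.support := by
  cases p with
  | nil => exact absurd rfl hne
  | cons h q =>
    rw [Walk.cons_isPath_iff] at hp
    exact ⟨_, h, q, rfl, hp.1, hp.2⟩

lemma edge_not_mem {G : SimpleGraph V} {u w t v : V} (h : G.Adj u w) (q : G.Walk w t)
    (hu : u ∉ q.support) (hwv : w ≠ v) : s(u,v) ∉ (Walk.cons h q).edges := by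
  simp only [Walk.edges_cons, List.mem_cons, not_or]
  constructor
  · intro he
    rcases Sym2.eq_iff.1 he with ⟨-, hv⟩ | ⟨hu', -⟩
    · exact hwv hv.symm
    · exact h.ne hu'
  · exact fun he => hu (q.fst_mem_support_of_mem_edges he)

/-- Forward: a path in `delVert G u` from `v` yields a path in `G` from `u` through `v`. -/
lemma left_fwd {G : SimpleGraph V} {u v t : V} (hadj : G.Adj u v)
    {l : List V} (p' : (delVert G u).Walk v t) (hp' : p'.IsPath) (hs' : p'.support = v :: l) :
    ∃ p : G.Walk u t, p.IsPath ∧ p.support = u :: v :: l := by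
  have hsub := edges_sub (delVert_le G u) p'
  refine ⟨Walk.cons hadj (p'.transfer G hsub), ?_, ?_⟩
  · rw [Walk.cons_isPath_iff]
    refine ⟨hp'.transfer hsub, ?_⟩
    rw [Walk.support_transfer]
    exact not_mem_support_isolated (delVert_not_adj G u) p' hadj.ne'
  · rw [Walk.support_cons, Walk.support_transfer, hs']

/-- Backward: a path in `G` from `u` whose second vertex is `v` yields a path in
`delVert G u` from `v`, one edge shorter. -/
lemma left_bwd {G : SimpleGraph V} {u v t : V} {l : List V}
    (hne : u ≠ t) (p : G.Walk u t) (hp : p.IsPath) (hs : p.support = u :: v :: l) :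
    ∃ p' : (delVert G u).Walk v t, p'.IsPath ∧ p'.support = v :: l ∧
      p.length = p'.length + 1 := by
  obtain ⟨w, h, q, rfl, hq, hu⟩ := decompose hne p hp
  rw [Walk.support_cons, q.support_eq_cons] at hs
  have hs' : w :: q.support.tail = v :: l := by injection hs
  have hw : w = v := by injection hs'
  have ht : q.support.tail = l := by injection hs'
  subst hw
  have hsub := edges_delVert (u := u) hu
  refine ⟨q.transfer _ hsub, hq.transfer hsub, ?_, ?_⟩
  · rw [Walk.support_transfer, q.support_eq_cons, ht]
  · rw [Walk.length_cons, Walk.length_transfer]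

lemma main [DecidableEq V] :
    ∀ (T : RT V) (G : SimpleGraph V) (s t : V), T.Valid G s t →
    (T.outs.map Prod.fst).Nodup ∧
    (∀ l : List V, l ∈ T.outs.map Prod.fst ↔
      ∃ p : G.Walk s t, p.IsPath ∧ p.support = s :: l) ∧
    (∀ q ∈ T.outs, ∀ p : G.Walk s t, p.IsPath → p.support = s :: q.1 →
      q.2 = p.length)
  | .leaf, G, s, t, hT => by
    subst hT
    refine ⟨by simp [RT.outs], ?_, ?_⟩
    · intro l
      simp only [RT.outs, List.map_cons, List.map_nil, List.mem_singleton]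
      constructor
      · rintro rfl
        exact ⟨Walk.nil, Walk.IsPath.nil, rfl⟩
      · rintro ⟨p, hp, hs⟩
        rw [Walk.isPath_iff_eq_nil.1 hp] at hs
        simpa using hs.symm
    · rintro q hq p hp hs
      simp only [RT.outs, List.mem_singleton] at hq
      subst hq
      rw [Walk.isPath_iff_eq_nil.1 hp]
      simp
  | .node1 v L, G, u, t, hT => by
    obtain ⟨hne, hadj, hL, hno⟩ := hT
    obtain ⟨ihnd, ihiff, ihlen⟩ := main L (delVert G u) v t hL
    have hmap : ((RT.node1 v L).outs.map Prod.fst) =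
        (L.outs.map Prod.fst).map (v :: ·) := by
      simp [RT.outs, List.map_map, Function.comp]
    have second_v : ∀ (p : G.Walk u t), p.IsPath → ∀ w (h : G.Adj u w) (q : G.Walk w t),
        p = Walk.cons h q → w = v := by
      rintro p hp w h q rfl
      by_contra hwv
      have hnm : s(u,v) ∉ (Walk.cons h q).edges :=
        edge_not_mem h q ((Walk.cons_isPath_iff h q).1 hp).2 hwv
      exact hno ⟨(Walk.cons h q).transfer _ (edges_delEdge hnm), hp.transfer _⟩
    refine ⟨?_, ?_, ?_⟩
    · rw [hmap]
      exact ihnd.map (fun a b h => by injection h)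
    · intro l
      rw [hmap, List.mem_map]
      constructor
      · rintro ⟨l', hl', rfl⟩
        obtain ⟨p', hp', hs'⟩ := (ihiff l').1 hl'
        exact left_fwd hadj p' hp' hs'
      · rintro ⟨p, hp, hs⟩
        obtain ⟨w, h, q, rfl, hq, hu⟩ := decompose hne p hp
        have hw := second_v _ hp w h q rfl
        subst hw
        rw [Walk.support_cons, q.support_eq_cons] at hs
        injection hs with _ hs2
        obtain ⟨p', hp', hs', -⟩ := left_bwd hne (Walk.cons h q) hp
          (by rw [Walk.support_cons, q.support_eq_cons])
        refine ⟨q.support.tail, (ihiff _).2 ⟨p', hp', hs'⟩, hs2⟩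
    · rintro q hq p hp hs
      simp only [RT.outs, List.mem_map] at hq
      obtain ⟨⟨l', n⟩, hmem, rfl⟩ := hq
      obtain ⟨p', hp', hs', hlen⟩ := left_bwd hne p hp hs
      rw [hlen]
      exact congrArg (· + 1) (ihlen (l', n) hmem p' hp' hs')
  | .node2 v L R, G, u, t, hT => by
    obtain ⟨hne, hadj, hL, hR⟩ := hT
    obtain ⟨ihndL, ihiffL, ihlenL⟩ := main L (delVert G u) v t hL
    obtain ⟨ihndR, ihiffR, ihlenR⟩ := main R (G.deleteEdges {s(u,v)}) u t hR
    have hmap : ((RT.node2 v L R).outs.map Prod.fst) =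
        ((L.outs.map Prod.fst).map (v :: ·)) ++ (R.outs.map Prod.fst) := by
      simp [RT.outs, List.map_map, Function.comp]
    -- any list in the right part does not start with v
    have hright : ∀ l ∈ R.outs.map Prod.fst, ∀ l', l ≠ v :: l' := by
      rintro l hl l' rfl
      obtain ⟨p', hp', hs'⟩ := (ihiffR _).1 hl
      obtain ⟨w, h, q, rfl, -, -⟩ := decompose hne p' hp'
      rw [Walk.support_cons, q.support_eq_cons] at hs'
      have hw : w = v := by injection (by injection hs')
      subst hw
      exact (deleteEdges_adj.1 h).2 rfl
    refine ⟨?_, ?_, ?_⟩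
    · rw [hmap]
      refine List.Nodup.append (ihndL.map (fun a b h => by injection h)) ihndR ?_
      intro l hl hr
      rw [List.mem_map] at hl
      obtain ⟨l', -, rfl⟩ := hl
      exact hright _ hr l' rfl
    · intro l
      rw [hmap, List.mem_append, List.mem_map]
      constructor
      · rintro (⟨l', hl', rfl⟩ | hl)
        · obtain ⟨p', hp', hs'⟩ := (ihiffL l').1 hl'
          exact left_fwd hadj p' hp' hs'
        · obtain ⟨p', hp', hs'⟩ := (ihiffR l).1 hl
          have hsub := edges_sub (delEdge_le G u v) p'
          exact ⟨p'.transfer G hsub, hp'.transfer hsub,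
            by rw [Walk.support_transfer, hs']⟩
      · rintro ⟨p, hp, hs⟩
        obtain ⟨w, h, q, rfl, hq, hu⟩ := decompose hne p hp
        rw [Walk.support_cons, q.support_eq_cons] at hs
        injection hs with _ hs2
        by_cases hwv : w = v
        · subst hwv
          left
          obtain ⟨p', hp', hs', -⟩ := left_bwd hne (Walk.cons h q) hp
            (by rw [Walk.support_cons, q.support_eq_cons])
          exact ⟨q.support.tail, (ihiffL _).2 ⟨p', hp', hs'⟩, hs2⟩
        · right
          have hnm : s(u,v) ∉ (Walk.cons h q).edges :=
            edge_not_mem h q ((Walk.cons_isPath_iff h q).1 hp).2 hwv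
          refine (ihiffR l).2 ⟨(Walk.cons h q).transfer _ (edges_delEdge hnm),
            hp.transfer _, ?_⟩
          rw [Walk.support_transfer, Walk.support_cons, q.support_eq_cons, hs2]
    · rintro q hq p hp hs
      simp only [RT.outs, List.mem_append, List.mem_map] at hq
      rcases hq with ⟨⟨l', n⟩, hmem, rfl⟩ | hq
      · obtain ⟨p', hp', hs', hlen⟩ := left_bwd hne p hp hs
        rw [hlen]
        exact congrArg (· + 1) (ihlenL (l', n) hmem p' hp' hs')
      · -- q ∈ R.outs : show the second vertex of p is not v, then transfer
        obtain ⟨w, h, q₀, rfl, hq₀, hu⟩ := decompose hne p hp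
        rw [Walk.support_cons, q₀.support_eq_cons] at hs
        injection hs with _ hs2
        have hq1 : q.1 ∈ R.outs.map Prod.fst := List.mem_map_of_mem hq
        have hwv : w ≠ v := by
          rintro rfl
          exact hright q.1 hq1 q₀.support.tail hs2.symm
        have hnm : s(u,v) ∉ (Walk.cons h q₀).edges := edge_not_mem h q₀ hu hwv
        refine ihlenR q hq ((Walk.cons h q₀).transfer _ (edges_delEdge hnm))
          (hp.transfer _) ?_ |>.trans (Walk.length_transfer _ _)
        rw [Walk.support_transfer, Walk.support_cons, q₀.support_eq_cons, hs2]

end Stmt19Aux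

/-- for a valid recursion tree of the binary-partition algorithm rooted
at `(G, s, t)`, the leaves are in one-to-one correspondence with the `st`-paths of
`G`, and for each leaf corresponding to a path `π`, the number of left branches on its
root-to-leaf trace equals `|π|`, the number of edges of `π`. -/
theorem stmt19 {V : Type} [Fintype V] [DecidableEq V]
    (G : SimpleGraph V) (s t : V) (T : RT V) (hT : T.Valid G s t) :
    (T.outs.map Prod.fst).Nodup ∧
    (∀ l : List V, l ∈ T.outs.map Prod.fst ↔
      ∃ p : G.Walk s t, p.IsPath ∧ p.support = s :: l) ∧
    (∀ q ∈ T.outs, ∀ p : G.Walk s t, p.IsPath → p.support = s :: q.1 →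
      q.2 = p.length) := by
  exact Stmt19Aux.main T G s t hT
end
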